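/- arXiv:2302.05835 — 5 statements merged into one kernel-verified Lean document; each statement's English description precedes it below -/
import Mathlib

section
/- Fix an integer k ≥ 1, a real c > 1, and γ ∈ (0,1). Let N = c·2^k·n and p_ℓ = c^{-1/k}(1-γ)^{1/k}. Then as n → ∞, the probability that the random graph G(N, p_ℓ/2) contains a copy of the complete bipartite graph K_{k,n} tends to 0. -/
open MeasureTheory Filter

/-- The Erdős–Rényi random graph measure: each potential edge (element of `Sym2 (Fin N)`)
appears independently with probability `p`. -/
noncomputable def erMeasure (N : ℕ) (p : ℝ) : Measure (Sym2 (Fin N) → Bool) :=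
  Measure.pi fun _ => (PMF.bernoulli (min (Real.toNNReal p) 1) (min_le_right _ _)).toMeasure

/-- The graph determined by an edge-indicator function. -/
def graphOf {N : ℕ} (ω : Sym2 (Fin N) → Bool) : SimpleGraph (Fin N) :=
  SimpleGraph.fromEdgeSet {e | ω e = true}

set_option linter.unusedSectionVars false
set_option linter.unusedVariables false
set_option maxHeartbeats 2000000

open Finset
open scoped ENNReal

section helpers
variable {ι : Type*} [Fintype ι] [DecidableEq ι] (ν : Measure Bool) [IsProbabilityMeasure ν]

lemma measure_coe_finset_eq_sum {α : Type*} [MeasurableSpace α] [MeasurableSingletonClass α]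
    (μ : Measure α) (s : Finset α) : μ ↑s = ∑ x ∈ s, μ {x} := by
  rw [show (↑s : Set α) = id ⁻¹' ↑s from rfl,
    ← sum_measure_preimage_singleton s (fun y _ => by simp)]
  rfl

lemma pi_singleton (x : ι → Bool) :
    Measure.pi (fun _ : ι => ν) {x} = ∏ i, ν {x i} := by
  rw [show ({x} : Set (ι → Bool)) = Set.pi Set.univ (fun i => {x i}) by
    ext y; simp [funext_iff, Set.mem_pi, eq_comm]]
  exact Measure.pi_pi _ _

lemma sum_prod_singleton_eq_one :
    ∑ x : ι → Bool, ∏ i, ν {x i} = 1 := by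
  have h : ∀ x : ι → Bool, ∏ i, ν {x i} = Measure.pi (fun _ : ι => ν) {x} :=
    fun x => (pi_singleton ν x).symm
  simp_rw [h]
  rw [← measure_coe_finset_eq_sum, coe_univ, measure_univ]

lemma pi_apply_eq_sum (A : Set (ι → Bool)) [DecidablePred (· ∈ A)] :
    Measure.pi (fun _ : ι => ν) A = ∑ x : ι → Bool, if x ∈ A then ∏ i, ν {x i} else 0 := by
  have h1 : A = ↑(Finset.univ.filter (· ∈ A)) := by ext x; simp
  conv_lhs => rw [h1]
  rw [measure_coe_finset_eq_sum, Finset.sum_filter]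
  refine Finset.sum_congr rfl fun x _ => ?_
  by_cases hx : x ∈ A <;> simp [hx, pi_singleton ν x]

lemma pi_apply_eq_double_sum (S : Finset ι) (A : Set (ι → Bool)) [DecidablePred (· ∈ A)] :
    Measure.pi (fun _ : ι => ν) A
      = ∑ x : {i // i ∈ S} → Bool, ∑ y : {i // ¬ i ∈ S} → Bool,
          (if (Equiv.piEquivPiSubtypeProd (· ∈ S) (fun _ : ι => Bool)).symm (x, y) ∈ A then 1 else 0)
            * ((∏ i : {i // i ∈ S}, ν {x i}) * ∏ i : {i // ¬ i ∈ S}, ν {y i}) := by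
  classical
  set E := Equiv.piEquivPiSubtypeProd (· ∈ S) (fun _ : ι => Bool) with hE
  rw [pi_apply_eq_sum, ← Equiv.sum_comp E.symm
    (fun ω => if ω ∈ A then ∏ i, ν {ω i} else 0), Fintype.sum_prod_type]
  refine Finset.sum_congr rfl fun x _ => Finset.sum_congr rfl fun y _ => ?_
  have hprod : ∏ i, ν {E.symm (x, y) i}
      = (∏ i : {i // i ∈ S}, ν {x i}) * ∏ i : {i // ¬ i ∈ S}, ν {y i} := by
    rw [← Fintype.prod_subtype_mul_prod_subtype (· ∈ S) (fun i => ν {E.symm (x, y) i})]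
    congr 1
    · refine Finset.prod_congr (by congr!) fun i _ => ?_
      simp [hE, Equiv.piEquivPiSubtypeProd_symm_apply, i.2]
    · refine Finset.prod_congr (by congr!) fun i _ => ?_
      simp [hE, Equiv.piEquivPiSubtypeProd_symm_apply, i.2]
  by_cases h : E.symm (x, y) ∈ A <;> simp [h, hprod]

lemma indep_two (S : Finset ι) (φ ψ : Set (ι → Bool))
    (hφ : ∀ ω ω' : ι → Bool, (∀ e ∈ S, ω e = ω' e) → (ω ∈ φ ↔ ω' ∈ φ))
    (hψ : ∀ ω ω' : ι → Bool, (∀ e ∉ S, ω e = ω' e) → (ω ∈ ψ ↔ ω' ∈ ψ)) :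
    Measure.pi (fun _ : ι => ν) (φ ∩ ψ)
      = Measure.pi (fun _ : ι => ν) φ * Measure.pi (fun _ : ι => ν) ψ := by
  classical
  set E := Equiv.piEquivPiSubtypeProd (· ∈ S) (fun _ : ι => Bool) with hE
  set d : ι → Bool := fun _ => false with hd
  set Iφ : ({i // i ∈ S} → Bool) → ℝ≥0∞ :=
    fun x => if E.symm (x, fun i => d i) ∈ φ then 1 else 0 with hIφ
  set Iψ : ({i // ¬ i ∈ S} → Bool) → ℝ≥0∞ :=
    fun y => if E.symm (fun i => d i, y) ∈ ψ then 1 else 0 with hIψ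
  set WS : ({i // i ∈ S} → Bool) → ℝ≥0∞ := fun x => ∏ i, ν {x i} with hWS
  set WT : ({i // ¬ i ∈ S} → Bool) → ℝ≥0∞ := fun y => ∏ i, ν {y i} with hWT
  have hmemφ : ∀ x y, (E.symm (x, y) ∈ φ) ↔ (E.symm (x, fun i => d i) ∈ φ) := by
    intro x y
    refine hφ _ _ fun e he => ?_
    simp [hE, Equiv.piEquivPiSubtypeProd_symm_apply, he]
  have hmemψ : ∀ x y, (E.symm (x, y) ∈ ψ) ↔ (E.symm (fun i => d i, y) ∈ ψ) := by
    intro x y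
    refine hψ _ _ fun e he => ?_
    simp [hE, Equiv.piEquivPiSubtypeProd_symm_apply, he]
  have hA : Measure.pi (fun _ : ι => ν) (φ ∩ ψ)
      = (∑ x, Iφ x * WS x) * (∑ y, Iψ y * WT y) := by
    rw [pi_apply_eq_double_sum ν S (φ ∩ ψ), Finset.sum_mul_sum]
    refine Finset.sum_congr rfl fun x _ => Finset.sum_congr rfl fun y _ => ?_
    have h1 := hmemφ x y
    have h2 := hmemψ x y
    by_cases hx : E.symm (x, fun i => d i) ∈ φ <;>
      by_cases hy : E.symm (fun i => d i, y) ∈ ψ <;>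
        simp [← hE, hIφ, hIψ, hWS, hWT, Set.mem_inter_iff, h1, h2, hx, hy, mul_comm, mul_left_comm]
  have hB : Measure.pi (fun _ : ι => ν) φ = (∑ x, Iφ x * WS x) := by
    rw [pi_apply_eq_double_sum ν S φ]
    have : ∀ x, ∑ y, (if E.symm (x, y) ∈ φ then (1:ℝ≥0∞) else 0) * (WS x * WT y)
        = Iφ x * WS x := by
      intro x
      have : ∀ y : {i // ¬ i ∈ S} → Bool,
          (if E.symm (x, y) ∈ φ then (1:ℝ≥0∞) else 0) * (WS x * WT y)
            = (Iφ x * WS x) * WT y := by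
        intro y
        by_cases hx : E.symm (x, fun i => d i) ∈ φ <;>
          simp [hIφ, hmemφ x y, hx, mul_comm, mul_left_comm]
      rw [Finset.sum_congr rfl fun y _ => this y, ← Finset.mul_sum,
        sum_prod_singleton_eq_one ν, mul_one]
    exact Finset.sum_congr rfl fun x _ => this x
  have hC : Measure.pi (fun _ : ι => ν) ψ = (∑ y, Iψ y * WT y) := by
    rw [pi_apply_eq_double_sum ν S ψ]
    rw [Finset.sum_comm]
    have : ∀ y, ∑ x, (if E.symm (x, y) ∈ ψ then (1:ℝ≥0∞) else 0) * (WS x * WT y)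
        = Iψ y * WT y := by
      intro y
      have : ∀ x : {i // i ∈ S} → Bool,
          (if E.symm (x, y) ∈ ψ then (1:ℝ≥0∞) else 0) * (WS x * WT y)
            = (Iψ y * WT y) * WS x := by
        intro x
        by_cases hy : E.symm (fun i => d i, y) ∈ ψ <;>
          simp [hIψ, hmemψ x y, hy, mul_comm, mul_left_comm]
      rw [Finset.sum_congr rfl fun x _ => this x, ← Finset.mul_sum,
        sum_prod_singleton_eq_one ν, mul_one]
    exact Finset.sum_congr rfl fun y _ => this y
  rw [hA, hB, hC]

lemma pi_iInter_blocks {κ : Type*} [DecidableEq κ] (s : Finset κ) (B : κ → Finset ι)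
    (hdisj : ∀ w ∈ s, ∀ w' ∈ s, w ≠ w' → Disjoint (B w) (B w'))
    (φ : κ → Set (ι → Bool))
    (hloc : ∀ w ∈ s, ∀ ω ω' : ι → Bool, (∀ e ∈ B w, ω e = ω' e) → (ω ∈ φ w ↔ ω' ∈ φ w)) :
    Measure.pi (fun _ : ι => ν) (⋂ w ∈ s, φ w)
      = ∏ w ∈ s, Measure.pi (fun _ : ι => ν) (φ w) := by
  classical
  induction s using Finset.cons_induction with
  | empty => simp
  | cons a s ha ih =>
    rw [Finset.cons_eq_insert, Finset.set_biInter_insert, Finset.prod_insert ha]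
    have hrest : ∀ ω ω' : ι → Bool, (∀ e ∉ B a, ω e = ω' e) →
        (ω ∈ ⋂ w ∈ s, φ w ↔ ω' ∈ ⋂ w ∈ s, φ w) := by
      intro ω ω' hagree
      simp only [Set.mem_iInter]
      constructor <;> intro h w hw
      · exact (hloc w (Finset.mem_cons_of_mem hw) ω ω' fun e he =>
          hagree e (Finset.disjoint_left.1
            (hdisj w (Finset.mem_cons_of_mem hw) a (Finset.mem_cons_self _ _)
              (fun h' => ha (h' ▸ hw))) he)).1 (h w hw)
      · exact (hloc w (Finset.mem_cons_of_mem hw) ω ω' fun e he =>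
          hagree e (Finset.disjoint_left.1
            (hdisj w (Finset.mem_cons_of_mem hw) a (Finset.mem_cons_self _ _)
              (fun h' => ha (h' ▸ hw))) he)).2 (h w hw)
    rw [indep_two ν (B a) (φ a) _ (hloc a (Finset.mem_cons_self _ _)) hrest,
      ih (fun w hw w' hw' => hdisj w (Finset.mem_cons_of_mem hw) w' (Finset.mem_cons_of_mem hw'))
        (fun w hw => hloc w (Finset.mem_cons_of_mem hw))]

lemma pi_cylinder_true (Bf : Finset ι) :
    Measure.pi (fun _ : ι => ν) {ω : ι → Bool | ∀ e ∈ Bf, ω e = true}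
      = ν {true} ^ Bf.card := by
  classical
  have h : {ω : ι → Bool | ∀ e ∈ Bf, ω e = true}
      = Set.pi Set.univ (fun e => if e ∈ Bf then ({true} : Set Bool) else Set.univ) := by
    ext ω
    simp only [Set.mem_setOf_eq, Set.mem_pi, Set.mem_univ, forall_true_left]
    constructor
    · intro hω e
      by_cases he : e ∈ Bf <;> simp [he, hω e]
    · intro hω e he
      have := hω e
      simpa [he] using this
  rw [h, Measure.pi_pi]
  simp only [apply_ite ν, measure_univ]
  rw [Finset.prod_ite_mem Finset.univ Bf (fun _ => ν {true}), Finset.univ_inter,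
    Finset.prod_const]
end helpers

/-- the event that `T` is exactly the set of common neighbors of `U` inside `Uᶜ`. -/
def exCN {N : ℕ} (U T : Finset (Fin N)) : Set (Sym2 (Fin N) → Bool) :=
  {ω | ∀ w ∈ Uᶜ, ((∀ u ∈ U, ω (s(u, w)) = true) ↔ w ∈ T)}

section events
variable (ν : Measure Bool) [IsProbabilityMeasure ν] {N : ℕ}

lemma measure_exCN (U T : Finset (Fin N)) (hT : T ⊆ Uᶜ) :
    Measure.pi (fun _ : Sym2 (Fin N) => ν) (exCN U T)
      = (ν {true} ^ U.card) ^ T.card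
        * (1 - ν {true} ^ U.card) ^ (Uᶜ.card - T.card) := by
  classical
  set B : Fin N → Finset (Sym2 (Fin N)) := fun w => U.image fun u => s(u, w) with hB
  set φ : Fin N → Set (Sym2 (Fin N) → Bool) :=
    fun w => {ω | (∀ u ∈ U, ω (s(u, w)) = true) ↔ w ∈ T} with hφ
  have hex : exCN U T = ⋂ w ∈ Uᶜ, φ w := by
    ext ω; simp [exCN, hφ]
  have hdisj : ∀ w ∈ Uᶜ, ∀ w' ∈ Uᶜ, w ≠ w' → Disjoint (B w) (B w') := by
    intro w hw w' hw' hne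
    rw [Finset.disjoint_left]
    rintro e he he'
    simp only [hB, Finset.mem_image] at he he'
    obtain ⟨u, hu, rfl⟩ := he
    obtain ⟨u', hu', heq⟩ := he'
    rw [Sym2.eq_iff] at heq
    rcases heq with ⟨h1, h2⟩ | ⟨h1, h2⟩
    · exact hne (h2.symm)
    · rw [h2] at hw'
      exact (Finset.mem_compl.1 hw') hu
  have hloc : ∀ w ∈ Uᶜ, ∀ ω ω' : Sym2 (Fin N) → Bool,
      (∀ e ∈ B w, ω e = ω' e) → (ω ∈ φ w ↔ ω' ∈ φ w) := by
    intro w hw ω ω' hagree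
    have h : ∀ u ∈ U, ω (s(u, w)) = ω' (s(u, w)) := fun u hu =>
      hagree _ (Finset.mem_image_of_mem _ hu)
    have hiff : (∀ u ∈ U, ω (s(u, w)) = true)
        ↔ (∀ u ∈ U, ω' (s(u, w)) = true) := by
      constructor <;> intro hh u hu
      · rw [← h u hu]; exact hh u hu
      · rw [h u hu]; exact hh u hu
    simp only [hφ, Set.mem_setOf_eq]
    rw [hiff]
  have hcard : ∀ w ∈ Uᶜ, (B w).card = U.card := by
    intro w hw
    refine Finset.card_image_of_injOn fun u hu u' hu' heq => ?_
    rw [Sym2.eq_iff] at heq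
    rcases heq with ⟨h1, _⟩ | ⟨h1, h2⟩
    · exact h1
    · exact absurd (h1 ▸ hu) (Finset.mem_compl.1 hw)
  have hCw : ∀ w ∈ Uᶜ, Measure.pi (fun _ : Sym2 (Fin N) => ν)
      {ω : Sym2 (Fin N) → Bool | ∀ u ∈ U, ω (s(u, w)) = true}
        = ν {true} ^ U.card := by
    intro w hw
    have h : {ω : Sym2 (Fin N) → Bool | ∀ u ∈ U, ω (s(u, w)) = true}
        = {ω : Sym2 (Fin N) → Bool | ∀ e ∈ B w, ω e = true} := by
      ext ω
      simp only [Set.mem_setOf_eq, hB, Finset.mem_image]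
      constructor
      · rintro hh e ⟨u, hu, rfl⟩
        exact hh u hu
      · intro hh u hu
        exact hh _ ⟨u, hu, rfl⟩
    rw [h, pi_cylinder_true, hcard w hw]
  have hφval : ∀ w ∈ Uᶜ, Measure.pi (fun _ : Sym2 (Fin N) => ν) (φ w)
      = if w ∈ T then ν {true} ^ U.card else 1 - ν {true} ^ U.card := by
    intro w hw
    by_cases hwT : w ∈ T
    · have : φ w = {ω : Sym2 (Fin N) → Bool | ∀ u ∈ U, ω (s(u, w)) = true} := by
        ext ω; simp [hφ, hwT]
      rw [this, hCw w hw, if_pos hwT]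
    · have : φ w = {ω : Sym2 (Fin N) → Bool | ∀ u ∈ U, ω (s(u, w)) = true}ᶜ := by
        ext ω; simp [hφ, hwT]
      rw [this, prob_compl_eq_one_sub ((Set.toFinite _).measurableSet), hCw w hw, if_neg hwT]
  rw [hex, pi_iInter_blocks ν Uᶜ B hdisj φ hloc,
    Finset.prod_congr rfl hφval, Finset.prod_ite, Finset.prod_const, Finset.prod_const]
  congr 2
  · rw [Finset.filter_mem_eq_inter, Finset.inter_eq_right.mpr hT]
  · rw [Finset.filter_not, Finset.filter_mem_eq_inter, Finset.inter_eq_right.mpr hT,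
      Finset.card_sdiff_of_subset hT]

lemma measure_event_le (k n : ℕ) :
    Measure.pi (fun _ : Sym2 (Fin N) => ν)
      {ω | ∃ (U W : Finset (Fin N)), U.card = k ∧ W.card = n ∧ Disjoint U W ∧
            ∀ u ∈ U, ∀ w ∈ W, (graphOf ω).Adj u w}
      ≤ (N.choose k : ℝ≥0∞) * ∑ m ∈ Finset.Icc n (N - k),
          ((N - k).choose m : ℝ≥0∞) * (ν {true} ^ k) ^ m
            * (1 - ν {true} ^ k) ^ (N - k - m) := by
  classical
  set μ := Measure.pi (fun _ : Sym2 (Fin N) => ν) with hμ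
  -- the inclusion
  have hsub : {ω : Sym2 (Fin N) → Bool | ∃ (U W : Finset (Fin N)),
      U.card = k ∧ W.card = n ∧ Disjoint U W ∧ ∀ u ∈ U, ∀ w ∈ W, (graphOf ω).Adj u w}
      ⊆ ⋃ U ∈ Finset.univ.powersetCard k, ⋃ m ∈ Finset.Icc n (N - k),
          ⋃ T ∈ Uᶜ.powersetCard m, exCN U T := by
    rintro ω ⟨U, W, hU, hW, hdisj, hadj⟩
    set T : Finset (Fin N) := Uᶜ.filter (fun w => ∀ u ∈ U, ω (s(u, w)) = true) with hTdef
    have hTsub : T ⊆ Uᶜ := Finset.filter_subset _ _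
    have hWT : W ⊆ T := by
      intro w hw
      rw [hTdef, Finset.mem_filter]
      refine ⟨Finset.mem_compl.2 (Finset.disjoint_right.1 hdisj hw), fun u hu => ?_⟩
      have := hadj u hu w hw
      rw [graphOf, SimpleGraph.fromEdgeSet_adj] at this
      exact this.1
    have hcardUc : Uᶜ.card = N - k := by
      rw [Finset.card_compl, hU, Fintype.card_fin]
    refine Set.mem_iUnion₂.2 ⟨U, ?_, Set.mem_iUnion₂.2 ⟨T.card, ?_, Set.mem_iUnion₂.2 ⟨T, ?_, ?_⟩⟩⟩
    · simp [Finset.mem_powersetCard_univ, hU]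
    · rw [Finset.mem_Icc]
      exact ⟨hW ▸ Finset.card_le_card hWT, hcardUc ▸ Finset.card_le_card hTsub⟩
    · exact Finset.mem_powersetCard.2 ⟨hTsub, rfl⟩
    · intro w hw
      rw [hTdef, Finset.mem_filter]
      constructor
      · intro h; exact ⟨hw, h⟩
      · intro h; exact h.2
  refine le_trans (measure_mono hsub) ?_
  refine le_trans (measure_biUnion_finset_le _ _) ?_
  have hcard' : ((Finset.univ : Finset (Fin N)).powersetCard k).card = N.choose k := by
    rw [Finset.card_powersetCard, Finset.card_univ, Fintype.card_fin]
  refine le_trans (Finset.sum_le_card_nsmul _ _ (∑ m ∈ Finset.Icc n (N - k),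
      ((N - k).choose m : ℝ≥0∞) * (ν {true} ^ k) ^ m
        * (1 - ν {true} ^ k) ^ (N - k - m)) fun U hU => ?_) ?_
  swap
  · rw [hcard', nsmul_eq_mul]
  have hUk : U.card = k := (Finset.mem_powersetCard_univ.1 hU)
  have hcardUc : Uᶜ.card = N - k := by rw [Finset.card_compl, hUk, Fintype.card_fin]
  refine le_trans (measure_biUnion_finset_le _ _) ?_
  refine Finset.sum_le_sum fun m hm => ?_
  refine le_trans (measure_biUnion_finset_le _ _) ?_
  have : ∀ T ∈ Uᶜ.powersetCard m, μ (exCN U T)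
      = (ν {true} ^ k) ^ m * (1 - ν {true} ^ k) ^ (N - k - m) := by
    intro T hT
    rw [Finset.mem_powersetCard] at hT
    rw [hμ, measure_exCN ν U T hT.1, hUk, hT.2, hcardUc]
  rw [Finset.sum_congr rfl this, Finset.sum_const, Finset.card_powersetCard, hcardUc,
    nsmul_eq_mul, mul_assoc]
end events

/-- entropy bound: one binomial term is at most 1. -/
lemma binom_term_le_one {α : ℝ} (hα0 : 0 ≤ α) (hα1 : α ≤ 1) {M n : ℕ} (hn : n ≤ M) :
    (M.choose n : ℝ) * α ^ n * (1 - α) ^ (M - n) ≤ 1 := by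
  have h := add_pow α (1 - α) M
  rw [add_sub_cancel, one_pow] at h
  have hterm : ∀ m ∈ Finset.range (M + 1),
      0 ≤ α ^ m * (1 - α) ^ (M - m) * (M.choose m : ℝ) :=
    fun m _ => mul_nonneg (mul_nonneg (pow_nonneg hα0 _) (pow_nonneg (by linarith) _)) (Nat.cast_nonneg _)
  have := Finset.single_le_sum hterm (Finset.mem_range.2 (Nat.lt_succ_of_le hn))
  rw [← h] at this
  linarith [this]

lemma single_bound_aux {ρ γ α : ℝ} (hρ0 : 0 < ρ) (hρ1 : ρ < 1) (hγ0 : 0 < γ) (hγ1 : γ < 1)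
    (hα0 : 0 < α) (hα1 : α < 1) {n M : ℕ} (hnM : n ≤ M) (hMα : (M : ℝ) * α = n)
    (hρα : ρ ≤ (1 - γ) * α) :
    (M.choose n : ℝ) * ρ ^ n * (1 - ρ) ^ (M - n)
      ≤ (1 - γ) ^ n * Real.exp ((n : ℝ) - ρ * M) := by
  have hαne : α ≠ 0 := hα0.ne'
  have h1α : (1 : ℝ) - α ≠ 0 := by linarith
  have hMn : (M : ℝ) - n = M * (1 - α) := by rw [← hMα]; ring
  have hdec : (M.choose n : ℝ) * ρ ^ n * (1 - ρ) ^ (M - n)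
      = ((M.choose n : ℝ) * α ^ n * (1 - α) ^ (M - n))
        * ((ρ / α) ^ n * ((1 - ρ) / (1 - α)) ^ (M - n)) := by
    rw [div_pow, div_pow]
    field_simp
  rw [hdec]
  have h1 : (M.choose n : ℝ) * α ^ n * (1 - α) ^ (M - n) ≤ 1 :=
    binom_term_le_one hα0.le hα1.le hnM
  have h2 : (ρ / α) ^ n ≤ (1 - γ) ^ n := by
    refine pow_le_pow_left₀ (div_nonneg hρ0.le hα0.le) ?_ n
    rw [div_le_iff₀ hα0]
    exact hρα
  have h3 : ((1 - ρ) / (1 - α)) ^ (M - n) ≤ Real.exp ((n : ℝ) - ρ * M) := by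
    have hb : (1 - ρ) / (1 - α) ≤ Real.exp ((α - ρ) / (1 - α)) := by
      have heq : (1 - ρ) / (1 - α) = 1 + (α - ρ) / (1 - α) := by
        field_simp
        ring
      rw [heq, add_comm]
      exact Real.add_one_le_exp _
    have hbnn : 0 ≤ (1 - ρ) / (1 - α) := div_nonneg (by linarith) (by linarith)
    calc ((1 - ρ) / (1 - α)) ^ (M - n) ≤ Real.exp ((α - ρ) / (1 - α)) ^ (M - n) :=
          pow_le_pow_left₀ hbnn hb _
      _ = Real.exp (((M - n : ℕ) : ℝ) * ((α - ρ) / (1 - α))) := by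
          rw [Real.exp_nat_mul]
      _ = Real.exp ((n : ℝ) - ρ * M) := by
          congr 1
          rw [Nat.cast_sub hnM, hMn, mul_assoc, mul_div_cancel₀ _ h1α, mul_sub, hMα]
          ring
  calc ((M.choose n : ℝ) * α ^ n * (1 - α) ^ (M - n))
        * ((ρ / α) ^ n * ((1 - ρ) / (1 - α)) ^ (M - n))
      ≤ 1 * ((ρ / α) ^ n * ((1 - ρ) / (1 - α)) ^ (M - n)) := by
        refine mul_le_mul_of_nonneg_right h1 (mul_nonneg (pow_nonneg ?_ _) (pow_nonneg ?_ _))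
        · exact div_nonneg hρ0.le hα0.le
        · exact div_nonneg (by linarith) (by linarith)
    _ = (ρ / α) ^ n * ((1 - ρ) / (1 - α)) ^ (M - n) := one_mul _
    _ ≤ (1 - γ) ^ n * Real.exp ((n : ℝ) - ρ * M) := by
        refine mul_le_mul h2 h3 (pow_nonneg (div_nonneg (by linarith) (by linarith)) _)
          (pow_nonneg (by linarith) _)

lemma single_bound {ρ γ : ℝ} (hρ0 : 0 < ρ) (hρ1 : ρ < 1) (hγ0 : 0 < γ) (hγ1 : γ < 1)
    {n M : ℕ} (hn : 0 < n) (hnM : n < M) (hmean : (M : ℝ) * ρ ≤ (1 - γ) * n) :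
    (M.choose n : ℝ) * ρ ^ n * (1 - ρ) ^ (M - n)
      ≤ (1 - γ) ^ n * Real.exp ((n : ℝ) - ρ * M) := by
  have hM0 : (0 : ℝ) < M := by exact_mod_cast Nat.zero_lt_of_lt hnM
  have hn0 : (0 : ℝ) < n := by exact_mod_cast hn
  refine single_bound_aux hρ0 hρ1 hγ0 hγ1 (α := (n : ℝ) / M) (by positivity)
    ((div_lt_one hM0).2 (by exact_mod_cast hnM)) hnM.le (by field_simp) ?_
  rw [mul_div_assoc']
  rw [le_div_iff₀ hM0]
  linarith [hmean]

lemma tail_bound {ρ γ : ℝ} (hρ0 : 0 < ρ) (hρ1 : ρ < 1) (hγ0 : 0 < γ) (hγ1 : γ < 1)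
    {n M : ℕ} (hn : 0 < n) (hmean : (M : ℝ) * ρ ≤ (1 - γ) * n) :
    ∑ m ∈ Finset.Icc n M, (M.choose m : ℝ) * ρ ^ m * (1 - ρ) ^ (M - m)
      ≤ (1 / γ) * ((M.choose n : ℝ) * ρ ^ n * (1 - ρ) ^ (M - n)) := by
  set f : ℕ → ℝ := fun m => (M.choose m : ℝ) * ρ ^ m * (1 - ρ) ^ (M - m) with hf
  have hfnn : ∀ m, 0 ≤ f m := fun m =>
    mul_nonneg (mul_nonneg (Nat.cast_nonneg _) (pow_nonneg hρ0.le _))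
      (pow_nonneg (by linarith) _)
  have hstep : ∀ m, n ≤ m → f (m + 1) ≤ (1 - γ) * f m := by
    intro m hm
    by_cases hmM : M ≤ m
    · have : M.choose (m + 1) = 0 := Nat.choose_eq_zero_of_lt (Nat.lt_succ_of_le hmM)
      simp only [hf, this, Nat.cast_zero, zero_mul]
      exact mul_nonneg (by linarith) (hfnn m)
    · push_neg at hmM
      have hmM' : m ≤ M := hmM.le
      have hid : (M.choose (m + 1) : ℝ) * (m + 1) = (M.choose m : ℝ) * ((M : ℝ) - m) := by
        have := Nat.choose_succ_right_eq M m
        have h2 : ((M.choose (m + 1) * (m + 1) : ℕ) : ℝ) = ((M.choose m * (M - m) : ℕ) : ℝ) := by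
          exact_mod_cast congrArg (Nat.cast (R := ℝ)) this
        push_cast [Nat.cast_sub hmM'] at h2
        exact_mod_cast h2
      have hkey : ((M : ℝ) - m) * ρ ≤ (1 - γ) * (1 - ρ) * (m + 1) := by
        have hnm : (n : ℝ) ≤ m := by exact_mod_cast hm
        have hmn0 : (0 : ℝ) ≤ m := by positivity
        nlinarith [mul_le_mul_of_nonneg_right hnm (by linarith : (0:ℝ) ≤ 1 - γ),
          mul_nonneg (mul_nonneg hγ0.le hρ0.le) hmn0,
          mul_nonneg (mul_nonneg hγ0.le hρ0.le) (by linarith : (0:ℝ) ≤ 1)]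
      have hpow : (1 - ρ) ^ (M - m) = (1 - ρ) ^ (M - (m + 1)) * (1 - ρ) := by
        rw [← pow_succ]
        congr 1
        omega
      have hchoose : (M.choose (m + 1) : ℝ) = (M.choose m : ℝ) * ((M : ℝ) - m) / (m + 1) := by
        rw [eq_div_iff (by positivity : ((m : ℝ) + 1) ≠ 0)]
        exact_mod_cast hid
      rw [hf]
      simp only
      rw [hchoose, hpow]
      rw [div_mul_eq_mul_div, div_mul_eq_mul_div, div_le_iff₀ (by positivity : (0:ℝ) < (m:ℝ) + 1)]
      have expand : (1 - γ) * ((M.choose m : ℝ) * ρ ^ m * ((1 - ρ) ^ (M - (m + 1)) * (1 - ρ)))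
          * ((m : ℝ) + 1)
          = ((M.choose m : ℝ) * ρ ^ m * (1 - ρ) ^ (M - (m + 1)))
              * ((1 - γ) * (1 - ρ) * ((m : ℝ) + 1)) := by ring
      have expand2 : (M.choose m : ℝ) * ((M : ℝ) - m) * ρ ^ (m + 1) * (1 - ρ) ^ (M - (m + 1))
          = ((M.choose m : ℝ) * ρ ^ m * (1 - ρ) ^ (M - (m + 1))) * (((M : ℝ) - m) * ρ) := by
        rw [pow_succ]; ring
      rw [expand, expand2]
      refine mul_le_mul_of_nonneg_left hkey ?_
      exact mul_nonneg (mul_nonneg (Nat.cast_nonneg _) (pow_nonneg hρ0.le _))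
        (pow_nonneg (by linarith) _)
  have hiter : ∀ j, f (n + j) ≤ (1 - γ) ^ j * f n := by
    intro j
    induction j with
    | zero => simp
    | succ j ih =>
      calc f (n + (j + 1)) = f ((n + j) + 1) := by ring_nf
        _ ≤ (1 - γ) * f (n + j) := hstep _ (Nat.le_add_right _ _)
        _ ≤ (1 - γ) * ((1 - γ) ^ j * f n) :=
            mul_le_mul_of_nonneg_left ih (by linarith)
        _ = (1 - γ) ^ (j + 1) * f n := by ring
  rw [← Finset.Ico_add_one_right_eq_Icc, Finset.sum_Ico_eq_sum_range]
  calc ∑ j ∈ Finset.range (M + 1 - n), f (n + j)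
      ≤ ∑ j ∈ Finset.range (M + 1 - n), (1 - γ) ^ j * f n :=
        Finset.sum_le_sum fun j _ => hiter j
    _ = (∑ j ∈ Finset.range (M + 1 - n), (1 - γ) ^ j) * f n := by
        rw [Finset.sum_mul]
    _ ≤ (1 / γ) * f n := by
        refine mul_le_mul_of_nonneg_right ?_ (hfnn n)
        rw [geom_sum_eq (by linarith : (1:ℝ) - γ ≠ 1),
          show (1 : ℝ) - γ - 1 = -γ by ring, div_neg, ← neg_div, neg_sub]
        have hx : (0:ℝ) ≤ (1 - γ) ^ (M + 1 - n) := pow_nonneg (by linarith) _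
        gcongr
        linarith

lemma ofReal_bound (a : ℝ) (h0 : 0 ≤ a) (h1 : a ≤ 1) (A M n : ℕ) :
    (A : ℝ≥0∞) * ∑ m ∈ Finset.Icc n M, (M.choose m : ℝ≥0∞) * (ENNReal.ofReal a) ^ m
        * (1 - ENNReal.ofReal a) ^ (M - m)
      = ENNReal.ofReal ((A : ℝ) * ∑ m ∈ Finset.Icc n M,
          (M.choose m : ℝ) * a ^ m * (1 - a) ^ (M - m)) := by
  rw [ENNReal.ofReal_mul (Nat.cast_nonneg A), ENNReal.ofReal_natCast,
    ENNReal.ofReal_sum_of_nonneg (fun m _ => mul_nonneg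
      (mul_nonneg (Nat.cast_nonneg _) (pow_nonneg h0 _)) (pow_nonneg (by linarith) _))]
  congr 1
  refine Finset.sum_congr rfl fun m _ => ?_
  rw [ENNReal.ofReal_mul (mul_nonneg (Nat.cast_nonneg _) (pow_nonneg h0 _)),
    ENNReal.ofReal_mul (Nat.cast_nonneg _), ENNReal.ofReal_natCast,
    ENNReal.ofReal_pow h0, ENNReal.ofReal_pow (by linarith : (0:ℝ) ≤ 1 - a),
    ENNReal.ofReal_sub _ h0, ENNReal.ofReal_one]

/-- With `N = ⌊c·2^k·n⌋` and `p_ℓ = c^{-1/k}(1-γ)^{1/k}`, the probability that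
`G(N, p_ℓ/2)` contains a copy of `K_{k,n}` tends to `0` as `n → ∞`. -/
theorem aas_no_Kkn_at_half_plower (k : ℕ) (hk : 1 ≤ k) (c γ : ℝ) (hc : 1 < c)
    (hγ : γ ∈ Set.Ioo (0 : ℝ) 1) :
    Tendsto
      (fun n : ℕ =>
        erMeasure (⌊c * 2 ^ k * n⌋₊)
          ((c ^ (-(1 : ℝ) / (k : ℝ)) * (1 - γ) ^ ((1 : ℝ) / (k : ℝ))) / 2)
          {ω | ∃ (U W : Finset (Fin ⌊c * 2 ^ k * n⌋₊)),
            U.card = k ∧ W.card = n ∧ Disjoint U W ∧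
            ∀ u ∈ U, ∀ w ∈ W, (graphOf ω).Adj u w})
      atTop (nhds 0) := by
  classical
  obtain ⟨hγ0, hγ1⟩ := hγ
  have hc0 : (0:ℝ) < c := by linarith
  have hk0 : (0:ℝ) < (k:ℝ) := by exact_mod_cast hk
  set p : ℝ := (c ^ (-(1 : ℝ) / (k : ℝ)) * (1 - γ) ^ ((1 : ℝ) / (k : ℝ))) / 2 with hpdef
  have hq0 : 0 < c ^ (-(1 : ℝ) / (k : ℝ)) * (1 - γ) ^ ((1 : ℝ) / (k : ℝ)) :=
    mul_pos (Real.rpow_pos_of_pos hc0 _) (Real.rpow_pos_of_pos (by linarith) _)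
  have hq1 : c ^ (-(1 : ℝ) / (k : ℝ)) * (1 - γ) ^ ((1 : ℝ) / (k : ℝ)) ≤ 1 := by
    have h1 : c ^ (-(1 : ℝ) / (k : ℝ)) ≤ 1 :=
      Real.rpow_le_one_of_one_le_of_nonpos hc.le
        (div_nonpos_of_nonpos_of_nonneg (by norm_num) (Nat.cast_nonneg k))
    have h2 : (1 - γ) ^ ((1 : ℝ) / (k : ℝ)) ≤ 1 :=
      Real.rpow_le_one (by linarith) (by linarith) (by positivity)
    calc c ^ (-(1 : ℝ) / (k : ℝ)) * (1 - γ) ^ ((1 : ℝ) / (k : ℝ)) ≤ 1 * 1 :=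
        mul_le_mul h1 h2 (Real.rpow_nonneg (by linarith) _) (by norm_num)
      _ = 1 := by norm_num
  have hp0 : 0 < p := by rw [hpdef]; positivity
  have hp1 : p ≤ 1 := by rw [hpdef]; linarith
  set ρ : ℝ := p ^ k with hρdef
  have hkne : (k:ℝ) ≠ 0 := hk0.ne'
  have hqk : (c ^ (-(1 : ℝ) / (k : ℝ)) * (1 - γ) ^ ((1 : ℝ) / (k : ℝ))) ^ k = (1 - γ) / c := by
    rw [mul_pow, ← Real.rpow_natCast (c ^ (-(1 : ℝ) / (k : ℝ))) k,
      ← Real.rpow_natCast ((1 - γ) ^ ((1 : ℝ) / (k : ℝ))) k,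
      ← Real.rpow_mul hc0.le, ← Real.rpow_mul (by linarith : (0:ℝ) ≤ 1 - γ),
      show (-(1 : ℝ) / (k : ℝ)) * (k:ℝ) = -1 by field_simp,
      show ((1 : ℝ) / (k : ℝ)) * (k:ℝ) = 1 by field_simp,
      Real.rpow_neg_one, Real.rpow_one]
    ring
  have h2kpos : (0:ℝ) < 2 ^ k := by positivity
  have hρval : ρ * (c * 2 ^ k) = 1 - γ := by
    rw [hρdef, hpdef, div_pow, hqk]
    field_simp
  have h2k : (2:ℝ) ≤ 2 ^ k := by
    calc (2:ℝ) = 2 ^ 1 := (pow_one 2).symm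
      _ ≤ 2 ^ k := pow_le_pow_right₀ (by norm_num) hk
  have hck2 : (2:ℝ) < c * 2 ^ k := by nlinarith
  have hρ0 : 0 < ρ := by rw [hρdef]; positivity
  have hρ1 : ρ < 1 := by nlinarith [hρval]
  have hθ0 : (0:ℝ) ≤ (1 - γ) * Real.exp γ := mul_nonneg (by linarith) (Real.exp_pos γ).le
  have hθ1 : (1 - γ) * Real.exp γ < 1 := by
    have h := Real.add_one_lt_exp (by linarith : -γ ≠ 0)
    calc (1 - γ) * Real.exp γ < Real.exp (-γ) * Real.exp γ :=
        mul_lt_mul_of_pos_right (by linarith) (Real.exp_pos γ)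
      _ = 1 := by rw [← Real.exp_add]; simp
  set θ : ℝ := (1 - γ) * Real.exp γ with hθdef
  set K : ℝ := (c * 2 ^ k) ^ k * ((1 / γ) * Real.exp ((k:ℝ) + 1)) with hKdef
  have hbig : ∀ᶠ n : ℕ in atTop,
      erMeasure (⌊c * 2 ^ k * n⌋₊) p
        {ω | ∃ (U W : Finset (Fin ⌊c * 2 ^ k * n⌋₊)),
          U.card = k ∧ W.card = n ∧ Disjoint U W ∧
          ∀ u ∈ U, ∀ w ∈ W, (graphOf ω).Adj u w}
        ≤ ENNReal.ofReal (K * ((n:ℝ) ^ k * θ ^ n)) := by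
    have hev : ∀ᶠ n : ℕ in atTop, 1 ≤ n ∧ ((k:ℝ) + 1) ≤ (c * 2 ^ k - 2) * n := by
      filter_upwards [eventually_ge_atTop (max 1 (⌈((k:ℝ)+1)/(c * 2 ^ k - 2)⌉₊ + 1))] with n hn
      have hn1 : 1 ≤ n := le_trans (le_max_left _ _) hn
      have hn2 : (⌈((k:ℝ)+1)/(c * 2 ^ k - 2)⌉₊ : ℝ) ≤ n := by
        exact_mod_cast le_trans (Nat.le_succ _) (le_trans (le_max_right _ _) hn)
      refine ⟨hn1, ?_⟩
      have hle := le_trans (Nat.le_ceil (((k:ℝ)+1)/(c * 2 ^ k - 2))) hn2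
      rw [div_le_iff₀ (by linarith : (0:ℝ) < c * 2 ^ k - 2)] at hle
      linarith
    filter_upwards [hev] with n hn
    obtain ⟨hn1, hn2⟩ := hn
    set N : ℕ := ⌊c * 2 ^ k * n⌋₊ with hNdef
    have hcn0 : (0:ℝ) ≤ c * 2 ^ k * n := by positivity
    have hNle : (N:ℝ) ≤ c * 2 ^ k * n := Nat.floor_le hcn0
    have hNge : c * 2 ^ k * n - 1 ≤ (N:ℝ) := (Nat.sub_one_lt_floor _).le
    have hNbig : 2 * n + k ≤ N := by
      have h' : ((2 * n + k : ℕ) : ℝ) ≤ (N:ℝ) := by push_cast; nlinarith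
      exact_mod_cast h'
    have hkN : k ≤ N := by omega
    set M : ℕ := N - k with hMdef
    have hMcast : (M:ℝ) = (N:ℝ) - k := by rw [hMdef, Nat.cast_sub hkN]
    have hnM : n < M := by omega
    have hmean : (M:ℝ) * ρ ≤ (1 - γ) * n := by
      have hMle : (M:ℝ) ≤ c * 2 ^ k * n := by rw [hMcast]; linarith [(by positivity : (0:ℝ) ≤ (k:ℝ))]
      calc (M:ℝ) * ρ ≤ (c * 2 ^ k * n) * ρ := mul_le_mul_of_nonneg_right hMle hρ0.le
        _ = (ρ * (c * 2 ^ k)) * n := by ring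
        _ = (1 - γ) * n := by rw [hρval]
    set ν : Measure Bool :=
      (PMF.bernoulli (min (Real.toNNReal p) 1) (min_le_right _ _)).toMeasure with hνdef
    have hP : ν {true} = ENNReal.ofReal p := by
      rw [hνdef, PMF.toMeasure_apply_singleton _ _ (measurableSet_singleton _)]
      simp [PMF.bernoulli_apply, min_eq_left (by simpa using hp1 : p.toNNReal ≤ 1), ENNReal.ofReal]
    have h1 := measure_event_le ν (N := N) k n
    rw [hP, show (ENNReal.ofReal p) ^ k = ENNReal.ofReal ρ by
        rw [← ENNReal.ofReal_pow hp0.le]] at h1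
    rw [← hMdef] at h1
    rw [ofReal_bound ρ hρ0.le hρ1.le (N.choose k) M n] at h1
    have herm : erMeasure N p = Measure.pi (fun _ : Sym2 (Fin N) => ν) := rfl
    rw [herm]
    refine le_trans h1 (ENNReal.ofReal_le_ofReal ?_)
    have htail := tail_bound hρ0 hρ1 hγ0 hγ1 (n := n) (M := M) (by omega) hmean
    have hsingle := single_bound hρ0 hρ1 hγ0 hγ1 (by omega) hnM hmean
    have hchoose : (N.choose k : ℝ) ≤ (c * 2 ^ k) ^ k * (n:ℝ) ^ k := by
      calc (N.choose k : ℝ) ≤ (N:ℝ) ^ k := by exact_mod_cast Nat.choose_le_pow N k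
        _ ≤ (c * 2 ^ k * n) ^ k := pow_le_pow_left₀ (Nat.cast_nonneg N) hNle k
        _ = (c * 2 ^ k) ^ k * (n:ℝ) ^ k := by rw [mul_pow]
    have hexp : (n:ℝ) - ρ * M ≤ γ * n + ((k:ℝ) + 1) := by
      have he1 : ρ * (M:ℝ) = ρ * (N:ℝ) - ρ * k := by rw [hMcast]; ring
      have he2 : ρ * (c * 2 ^ k * n) - ρ ≤ ρ * (N:ℝ) := by nlinarith
      have he3 : ρ * (c * 2 ^ k * n) = (1 - γ) * n := by
        rw [show ρ * (c * 2 ^ k * (n:ℝ)) = (ρ * (c * 2 ^ k)) * n by ring, hρval]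
      nlinarith [(by positivity : (0:ℝ) ≤ (k:ℝ))]
    have hsum : ∑ m ∈ Finset.Icc n M, (M.choose m : ℝ) * ρ ^ m * (1 - ρ) ^ (M - m)
        ≤ (1 / γ) * ((1 - γ) ^ n * Real.exp ((n:ℝ) - ρ * M)) :=
      le_trans htail (mul_le_mul_of_nonneg_left hsingle (by positivity))
    calc (N.choose k : ℝ) * ∑ m ∈ Finset.Icc n M,
          (M.choose m : ℝ) * ρ ^ m * (1 - ρ) ^ (M - m)
        ≤ ((c * 2 ^ k) ^ k * (n:ℝ) ^ k)
            * ((1 / γ) * ((1 - γ) ^ n * Real.exp ((n:ℝ) - ρ * M))) := by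
          refine mul_le_mul hchoose hsum ?_ (by positivity)
          refine Finset.sum_nonneg fun m _ => ?_
          exact mul_nonneg (mul_nonneg (Nat.cast_nonneg _) (pow_nonneg hρ0.le _))
            (pow_nonneg (by linarith) _)
      _ ≤ ((c * 2 ^ k) ^ k * (n:ℝ) ^ k)
            * ((1 / γ) * ((1 - γ) ^ n * Real.exp (γ * n + ((k:ℝ) + 1)))) := by
          refine mul_le_mul_of_nonneg_left (mul_le_mul_of_nonneg_left
            (mul_le_mul_of_nonneg_left (Real.exp_le_exp.2 hexp)
              (pow_nonneg (by linarith) _)) (by positivity)) (by positivity)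
      _ = K * ((n:ℝ) ^ k * θ ^ n) := by
          rw [hKdef, hθdef]
          have hee : Real.exp (γ * n + ((k:ℝ) + 1))
              = (Real.exp γ) ^ n * Real.exp ((k:ℝ) + 1) := by
            rw [Real.exp_add, mul_comm γ (n:ℝ), Real.exp_nat_mul]
          rw [hee, mul_pow (1 - γ) (Real.exp γ) n]
          ring
  have hlim : Tendsto (fun n : ℕ => ENNReal.ofReal (K * ((n:ℝ) ^ k * θ ^ n))) atTop (nhds 0) := by
    have h0 : Tendsto (fun n : ℕ => K * ((n:ℝ) ^ k * θ ^ n)) atTop (nhds (K * 0)) :=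
      (tendsto_pow_const_mul_const_pow_of_lt_one k hθ0 hθ1).const_mul K
    rw [mul_zero] at h0
    have h1 := ENNReal.tendsto_ofReal h0
    simpa using h1
  refine tendsto_of_tendsto_of_tendsto_of_le_of_le' tendsto_const_nhds hlim
    (Filter.Eventually.of_forall fun n => zero_le) hbig
end

section
/- Fix an integer k ≥ 1 and a real c > 1. Let N = c·2^k·n. If p ∈ [0, c^{-1/k}), then asymptotically almost surely every red/blue coloring of the edges of G(N,p) contains no monochromatic copy of K_{k,n}; that is, a.a.s. G(N,p) ↛ K_{k,n}. -/
open MeasureTheory Filter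
open scoped ENNReal NNReal

instance erProb (N : ℕ) (p : ℝ) : IsProbabilityMeasure (erMeasure N p) := by
  unfold erMeasure; infer_instance

lemma erMeasure_cylinder (N : ℕ) (p : ℝ) (F : Finset (Sym2 (Fin N))) (b : Bool) :
    erMeasure N p {ω | ∀ e ∈ F, ω e = b}
      = (cond b ((min (Real.toNNReal p) 1 : ℝ≥0) : ℝ≥0∞) (1 - ((min (Real.toNNReal p) 1 : ℝ≥0) : ℝ≥0∞))) ^ F.card := by
  classical
  have hs : {ω : Sym2 (Fin N) → Bool | ∀ e ∈ F, ω e = b}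
      = Set.pi Set.univ (fun e => if e ∈ F then ({b} : Set Bool) else Set.univ) := by
    ext ω
    simp only [Set.mem_setOf_eq, Set.mem_pi, Set.mem_univ, forall_true_left]
    constructor
    · intro h e
      split_ifs with he
      · simp [h e he]
      · trivial
    · intro h e he
      have := h e
      rw [if_pos he] at this
      simpa using this
  rw [hs]
  unfold erMeasure
  rw [MeasureTheory.Measure.pi_pi]
  have hone : ∀ e : Sym2 (Fin N),
      (PMF.bernoulli (min (Real.toNNReal p) 1) (min_le_right _ _)).toMeasure
        (if e ∈ F then ({b} : Set Bool) else Set.univ)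
      = if e ∈ F
          then (cond b ((min (Real.toNNReal p) 1 : ℝ≥0) : ℝ≥0∞) (1 - ((min (Real.toNNReal p) 1 : ℝ≥0) : ℝ≥0∞))) else 1 := by
    intro e
    split_ifs with he
    · rw [PMF.toMeasure_apply_singleton _ _ (measurableSet_singleton b)]
      rw [PMF.bernoulli_apply]
      cases b <;> simp
    · exact measure_univ
  simp only [hone]
  rw [Finset.prod_ite_mem, Finset.univ_inter, Finset.prod_const]

lemma half_val (b : Bool) :
    (cond b ((min (Real.toNNReal (1/2 : ℝ)) 1 : ℝ≥0) : ℝ≥0∞) (1 - ((min (Real.toNNReal (1/2 : ℝ)) 1 : ℝ≥0) : ℝ≥0∞)))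
      = 2⁻¹ := by
  have h : ((min (Real.toNNReal (1/2 : ℝ)) 1 : ℝ≥0) : ℝ≥0∞) = 2⁻¹ := by
    rw [min_eq_left (Real.toNNReal_le_one.mpr (by norm_num))]
    show ENNReal.ofReal (1/2 : ℝ) = 2⁻¹
    rw [ENNReal.ofReal_div_of_pos (by norm_num)]
    norm_num
  rw [h]
  cases b
  · exact ENNReal.one_sub_inv_two
  · rfl

lemma markov_count {α ι : Type*} [MeasurableSpace α] (ν : Measure α)
    (s : Finset ι) (E : ι → Set α) (hE : ∀ i, MeasurableSet (E i))
    (B : Set α) (hB : MeasurableSet B) (C : ℕ)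
    (h : ∀ x ∈ B, ∃ T : Finset ι, T ⊆ s ∧ C ≤ T.card ∧ ∀ i ∈ T, x ∈ E i) :
    (C : ℝ≥0∞) * ν B ≤ ∑ i ∈ s, ν (E i) := by
  classical
  have h1 : ∀ x, B.indicator (fun _ => (C : ℝ≥0∞)) x
      ≤ ∑ i ∈ s, (E i).indicator (fun _ => (1 : ℝ≥0∞)) x := by
    intro x
    by_cases hx : x ∈ B
    · rw [Set.indicator_of_mem hx]
      obtain ⟨T, hTs, hTc, hTe⟩ := h x hx
      calc (C : ℝ≥0∞) ≤ (T.card : ℝ≥0∞) := by exact_mod_cast hTc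
        _ = ∑ i ∈ T, (E i).indicator (fun _ => (1 : ℝ≥0∞)) x := by
            rw [Finset.card_eq_sum_ones]
            push_cast
            refine Finset.sum_congr rfl fun i hi => ?_
            rw [Set.indicator_of_mem (hTe i hi)]
        _ ≤ ∑ i ∈ s, (E i).indicator (fun _ => (1 : ℝ≥0∞)) x :=
            Finset.sum_le_sum_of_subset hTs
    · simp [Set.indicator_of_notMem hx]
  calc (C : ℝ≥0∞) * ν B = ∫⁻ x, B.indicator (fun _ => (C : ℝ≥0∞)) x ∂ν := by
        rw [lintegral_indicator_const hB]
    _ ≤ ∫⁻ x, ∑ i ∈ s, (E i).indicator (fun _ => (1 : ℝ≥0∞)) x ∂ν := lintegral_mono h1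
    _ = ∑ i ∈ s, ∫⁻ x, (E i).indicator (fun _ => (1 : ℝ≥0∞)) x ∂ν :=
        lintegral_finset_sum _ fun i _ => measurable_const.indicator (hE i)
    _ = ∑ i ∈ s, ν (E i) := by
        refine Finset.sum_congr rfl fun i _ => ?_
        rw [lintegral_indicator_const (hE i), one_mul]

lemma prod_event_measure (N : ℕ) (p : ℝ) (hp0 : 0 ≤ p) (hp1 : p ≤ 1)
    (U W : Finset (Fin N)) (hd : Disjoint U W) (b : Bool) :
    ((erMeasure N p).prod (erMeasure N (1/2)))
      {x : (Sym2 (Fin N) → Bool) × (Sym2 (Fin N) → Bool) |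
        ∀ u ∈ U, ∀ w ∈ W, x.1 s(u, w) = true ∧ x.2 s(u, w) = b}
    = (ENNReal.ofReal p * 2⁻¹) ^ (U.card * W.card) := by
  classical
  set F : Finset (Sym2 (Fin N)) := (U ×ˢ W).image fun q => s(q.1, q.2) with hF
  have hinj : Set.InjOn (fun q : Fin N × Fin N => s(q.1, q.2)) ↑(U ×ˢ W) := by
    rintro ⟨u1, w1⟩ h1 ⟨u2, w2⟩ h2 heq
    simp only [Finset.coe_product, Set.mem_prod, Finset.mem_coe] at h1 h2
    simp only [Sym2.eq_iff] at heq
    rcases heq with ⟨rfl, rfl⟩ | ⟨rfl, rfl⟩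
    · rfl
    · exact absurd h2.2 (Finset.disjoint_left.mp hd h1.1)
  have hFcard : F.card = U.card * W.card := by
    rw [hF, Finset.card_image_of_injOn hinj, Finset.card_product]
  have hmem : ∀ (ω : Sym2 (Fin N) → Bool) (bb : Bool),
      (∀ e ∈ F, ω e = bb) ↔ ∀ u ∈ U, ∀ w ∈ W, ω s(u, w) = bb := by
    intro ω bb
    constructor
    · intro h u hu w hw
      exact h _ (Finset.mem_image_of_mem _ (Finset.mem_product.mpr ⟨hu, hw⟩))
    · intro h e he
      obtain ⟨⟨u, w⟩, hq, rfl⟩ := Finset.mem_image.mp he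
      obtain ⟨hu, hw⟩ := Finset.mem_product.mp hq
      exact h u hu w hw
  have hsplit : {x : (Sym2 (Fin N) → Bool) × (Sym2 (Fin N) → Bool) |
        ∀ u ∈ U, ∀ w ∈ W, x.1 s(u, w) = true ∧ x.2 s(u, w) = b}
      = {ω : Sym2 (Fin N) → Bool | ∀ e ∈ F, ω e = true} ×ˢ
        {χ : Sym2 (Fin N) → Bool | ∀ e ∈ F, χ e = b} := by
    ext x
    simp only [Set.mem_setOf_eq, Set.mem_prod, hmem]
    constructor
    · intro h
      exact ⟨fun u hu w hw => (h u hu w hw).1, fun u hu w hw => (h u hu w hw).2⟩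
    · rintro ⟨h1, h2⟩ u hu w hw
      exact ⟨h1 u hu w hw, h2 u hu w hw⟩
  rw [hsplit, Measure.prod_prod, erMeasure_cylinder, erMeasure_cylinder, half_val]
  have hmin : ((min (Real.toNNReal p) 1 : ℝ≥0) : ℝ≥0∞) = ENNReal.ofReal p := by
    rw [min_eq_left (Real.toNNReal_le_one.mpr hp1)]; rfl
  rw [hmin]
  simp only [Bool.cond_true]
  rw [← mul_pow, hFcard]

lemma color_bound (N k n m : ℕ) (p : ℝ) (hp0 : 0 ≤ p) (hp1 : p ≤ 1) (b : Bool) :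
    (n.choose m : ℝ≥0∞) * ((erMeasure N p).prod (erMeasure N (1/2)))
      {x : (Sym2 (Fin N) → Bool) × (Sym2 (Fin N) → Bool) |
        ∃ U W : Finset (Fin N), U.card = k ∧ W.card = n ∧ Disjoint U W ∧
          ∀ u ∈ U, ∀ w ∈ W, x.1 s(u, w) = true ∧ x.2 s(u, w) = b}
    ≤ (N.choose k : ℝ≥0∞) * (N.choose m : ℝ≥0∞) * (ENNReal.ofReal p * 2⁻¹) ^ (k * m) := by
  classical
  set E : Finset (Fin N) × Finset (Fin N) → Set ((Sym2 (Fin N) → Bool) × (Sym2 (Fin N) → Bool)) :=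
    fun t => {x | ∀ u ∈ t.1, ∀ w ∈ t.2, x.1 s(u, w) = true ∧ x.2 s(u, w) = b} with hE
  set s : Finset (Finset (Fin N) × Finset (Fin N)) :=
    (Finset.univ.powersetCard k ×ˢ Finset.univ.powersetCard m).filter
      (fun t => Disjoint t.1 t.2) with hs
  have hcount : ∀ x ∈ {x : (Sym2 (Fin N) → Bool) × (Sym2 (Fin N) → Bool) |
      ∃ U W : Finset (Fin N), U.card = k ∧ W.card = n ∧ Disjoint U W ∧
        ∀ u ∈ U, ∀ w ∈ W, x.1 s(u, w) = true ∧ x.2 s(u, w) = b},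
      ∃ T : Finset (Finset (Fin N) × Finset (Fin N)),
        T ⊆ s ∧ n.choose m ≤ T.card ∧ ∀ i ∈ T, x ∈ E i := by
    rintro x ⟨U, W, hU, hW, hd, hmono⟩
    refine ⟨(W.powersetCard m).image fun W' => (U, W'), ?_, ?_, ?_⟩
    · intro t ht
      obtain ⟨W', hW', rfl⟩ := Finset.mem_image.mp ht
      obtain ⟨hsub, hcard⟩ := Finset.mem_powersetCard.mp hW'
      refine Finset.mem_filter.mpr ⟨Finset.mem_product.mpr ⟨?_, ?_⟩, hd.mono_right hsub⟩
      · exact Finset.mem_powersetCard.mpr ⟨Finset.subset_univ _, hU⟩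
      · exact Finset.mem_powersetCard.mpr ⟨Finset.subset_univ _, hcard⟩
    · rw [Finset.card_image_of_injective _ (fun a b h => by simpa using h),
        Finset.card_powersetCard, hW]
    · intro t ht
      obtain ⟨W', hW', rfl⟩ := Finset.mem_image.mp ht
      obtain ⟨hsub, hcard⟩ := Finset.mem_powersetCard.mp hW'
      intro u hu w hw
      exact hmono u hu w (hsub hw)
  have hmk := markov_count ((erMeasure N p).prod (erMeasure N (1/2))) s E
    (fun i => .of_discrete) _ .of_discrete (n.choose m) hcount
  refine hmk.trans ?_
  have hterm : ∀ t ∈ s, ((erMeasure N p).prod (erMeasure N (1/2))) (E t)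
      = (ENNReal.ofReal p * 2⁻¹) ^ (k * m) := by
    intro t ht
    obtain ⟨hprod, hdisj⟩ := Finset.mem_filter.mp ht
    obtain ⟨h1, h2⟩ := Finset.mem_product.mp hprod
    have hc1 := (Finset.mem_powersetCard.mp h1).2
    have hc2 := (Finset.mem_powersetCard.mp h2).2
    rw [hE]
    rw [prod_event_measure N p hp0 hp1 t.1 t.2 hdisj b, hc1, hc2]
  rw [Finset.sum_congr rfl hterm, Finset.sum_const, nsmul_eq_mul]
  have hscard : (s.card : ℝ≥0∞) ≤ (N.choose k : ℝ≥0∞) * (N.choose m : ℝ≥0∞) := by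
    have h1 : s.card ≤ N.choose k * N.choose m := by
      calc s.card ≤ (Finset.univ.powersetCard k ×ˢ Finset.univ.powersetCard m).card :=
            Finset.card_le_card (Finset.filter_subset _ _)
        _ = N.choose k * N.choose m := by
            rw [Finset.card_product, Finset.card_powersetCard, Finset.card_powersetCard,
              Finset.card_univ, Fintype.card_fin]
    exact_mod_cast Nat.cast_le.mpr h1
  exact mul_le_mul_left hscard _

lemma choose_bound (n m N k : ℕ) (p θ₀ : ℝ) (hp0 : 0 ≤ p) (hθ₀ : 0 ≤ θ₀)
    (hmn : m ≤ n) (hkey : (N : ℝ) * (p / 2) ^ k ≤ θ₀ * ((n : ℝ) + 1 - m)) :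
    (N.choose m : ℝ) * (p / 2) ^ (k * m) ≤ θ₀ ^ m * (n.choose m : ℝ) := by
  have hx : (0 : ℝ) ≤ (p / 2) ^ k := pow_nonneg (by linarith) _
  have hcast : ((n + 1 - m : ℕ) : ℝ) = (n : ℝ) + 1 - m := by
    have : m ≤ n + 1 := by omega
    push_cast [this]
    ring
  have h1 : (N.descFactorial m : ℝ) * (p / 2) ^ (k * m)
      ≤ θ₀ ^ m * (n.descFactorial m : ℝ) := by
    calc (N.descFactorial m : ℝ) * (p / 2) ^ (k * m)
        ≤ (N : ℝ) ^ m * (p / 2) ^ (k * m) := by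
          apply mul_le_mul_of_nonneg_right _ (pow_nonneg (by linarith) _)
          exact_mod_cast Nat.cast_le.mpr (Nat.descFactorial_le_pow N m)
      _ = ((N : ℝ) * (p / 2) ^ k) ^ m := by
          rw [mul_pow, ← pow_mul]
      _ ≤ (θ₀ * ((n : ℝ) + 1 - m)) ^ m :=
          pow_le_pow_left₀ (mul_nonneg (Nat.cast_nonneg _) hx) hkey _
      _ = θ₀ ^ m * ((n : ℝ) + 1 - m) ^ m := mul_pow _ _ _
      _ ≤ θ₀ ^ m * (n.descFactorial m : ℝ) := by
          apply mul_le_mul_of_nonneg_left _ (pow_nonneg hθ₀ _)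
          rw [← hcast]
          exact_mod_cast Nat.cast_le.mpr (Nat.pow_sub_le_descFactorial n m)
  have hfact : (0 : ℝ) < (m.factorial : ℝ) := by exact_mod_cast m.factorial_pos
  apply le_of_mul_le_mul_left _ hfact
  calc (m.factorial : ℝ) * ((N.choose m : ℝ) * (p / 2) ^ (k * m))
      = (N.descFactorial m : ℝ) * (p / 2) ^ (k * m) := by
        rw [Nat.descFactorial_eq_factorial_mul_choose]
        push_cast
        ring
    _ ≤ θ₀ ^ m * (n.descFactorial m : ℝ) := h1
    _ = (m.factorial : ℝ) * (θ₀ ^ m * (n.choose m : ℝ)) := by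
        rw [Nat.descFactorial_eq_factorial_mul_choose]
        push_cast
        ring

set_option maxHeartbeats 1000000 in
/-- Lower Ramsey threshold for `K_{k,n}`: with `N = ⌊c·2^k·n⌋` and `p < c^{-1/k}`,
a.a.s. `G(N,p) ↛ K_{k,n}`, i.e. the probability that every red/blue edge-coloring
contains a monochromatic `K_{k,n}` tends to `0`. -/
theorem lower_threshold_Kkn (k : ℕ) (hk : 1 ≤ k) (c : ℝ) (hc : 1 < c) (p : ℝ)
    (hp0 : 0 ≤ p) (hp : p < c ^ (-(1 : ℝ) / (k : ℝ))) :
    Tendsto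
      (fun n : ℕ =>
        erMeasure (⌊c * 2 ^ k * n⌋₊) p
          {ω | ∀ χ : Sym2 (Fin ⌊c * 2 ^ k * n⌋₊) → Bool,
            ∃ (b : Bool) (U W : Finset (Fin ⌊c * 2 ^ k * n⌋₊)),
              U.card = k ∧ W.card = n ∧ Disjoint U W ∧
              ∀ u ∈ U, ∀ w ∈ W, (graphOf ω).Adj u w ∧ χ s(u, w) = b})
      atTop (nhds 0) := by
  have hc0 : (0 : ℝ) < c := lt_trans zero_lt_one hc
  have hk0 : (0 : ℝ) < (k : ℝ) := by exact_mod_cast hk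
  have hkne : k ≠ 0 := by omega
  -- p < 1
  have hρ1 : c ^ (-(1 : ℝ) / (k : ℝ)) < 1 :=
    Real.rpow_lt_one_of_one_lt_of_neg hc (div_neg_of_neg_of_pos (by norm_num) hk0)
  have hp1 : p < 1 := hp.trans hρ1
  -- γ = c * p^k < 1
  set γ : ℝ := c * p ^ k with hγdef
  have hγ0 : 0 ≤ γ := mul_nonneg hc0.le (pow_nonneg hp0 _)
  have hγ1 : γ < 1 := by
    have hpk : p ^ k < c⁻¹ := by
      have h1 : p ^ k < (c ^ (-(1 : ℝ) / (k : ℝ))) ^ k :=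
        pow_lt_pow_left₀ hp hp0 hkne
      have h2 : (c ^ (-(1 : ℝ) / (k : ℝ))) ^ k = c⁻¹ := by
        rw [← Real.rpow_natCast (c ^ (-(1 : ℝ) / (k : ℝ))) k, ← Real.rpow_mul hc0.le]
        rw [show (-(1 : ℝ) / (k : ℝ)) * (k : ℝ) = -1 by field_simp]
        exact Real.rpow_neg_one c
      linarith [h2 ▸ h1]
    calc γ = c * p ^ k := rfl
      _ < c * c⁻¹ := by exact mul_lt_mul_of_pos_left hpk hc0
      _ = 1 := mul_inv_cancel₀ hc0.ne'
  set ε : ℝ := (1 - γ) / 2 with hεdef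
  have hε0 : 0 < ε := by simp only [hεdef]; linarith
  have hε2 : ε ≤ 1 / 2 := by simp only [hεdef]; linarith
  have h1ε : 0 < 1 - ε := by linarith
  set θ : ℝ := γ / (1 - ε) with hθdef
  have hθ0 : 0 ≤ θ := div_nonneg hγ0 h1ε.le
  have hθ1 : θ < 1 := by
    rw [hθdef, div_lt_one h1ε]
    simp only [hεdef]
    linarith
  set θ₀ : ℝ := max θ (1 / 2) with hθ₀def
  have hθ₀pos : 0 < θ₀ := lt_of_lt_of_le (by norm_num) (le_max_right _ _)
  have hθ₀lt : θ₀ < 1 := max_lt hθ1 (by norm_num)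
  set θ₁ : ℝ := θ₀ ^ ε with hθ₁def
  have hθ₁pos : 0 < θ₁ := Real.rpow_pos_of_pos hθ₀pos _
  have hθ₁lt : θ₁ < 1 := Real.rpow_lt_one hθ₀pos.le hθ₀lt hε0
  set D : ℝ := 2 * (c * 2 ^ k) ^ k with hDdef
  have hD0 : 0 ≤ D := by positivity
  -- the dominating sequence
  have hg : Tendsto (fun n : ℕ => ENNReal.ofReal (D * n ^ k * θ₁ ^ n)) atTop (nhds 0) := by
    have h1 : Tendsto (fun n : ℕ => D * n ^ k * θ₁ ^ n) atTop (nhds 0) := by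
      have := (tendsto_pow_const_mul_const_pow_of_lt_one k hθ₁pos.le hθ₁lt).const_mul D
      simpa [mul_assoc, mul_zero] using this
    have := ENNReal.tendsto_ofReal (a := 0) h1
    simpa using this
  refine tendsto_of_tendsto_of_tendsto_of_le_of_le' tendsto_const_nhds hg
    (Filter.Eventually.of_forall fun n => zero_le) ?_
  filter_upwards [eventually_ge_atTop 1] with n hn1
  -- notation
  set N : ℕ := ⌊c * 2 ^ k * n⌋₊ with hNdef
  set m : ℕ := ⌊ε * n⌋₊ + 1 with hmdef
  have hn0 : (0 : ℝ) < n := by exact_mod_cast hn1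
  have hNle : (N : ℝ) ≤ c * 2 ^ k * n := Nat.floor_le (by positivity)
  have hmn : m ≤ n := by
    have h1 : (⌊ε * n⌋₊ : ℝ) ≤ ε * n := Nat.floor_le (by positivity)
    have h2 : ε * n < n := by nlinarith
    have : (⌊ε * n⌋₊ : ℝ) < n := lt_of_le_of_lt h1 h2
    have : ⌊ε * n⌋₊ < n := by exact_mod_cast this
    omega
  set μ' := (erMeasure N p).prod (erMeasure N (1/2)) with hμ'def
  set Bset : Bool → Set ((Sym2 (Fin N) → Bool) × (Sym2 (Fin N) → Bool)) := fun b =>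
    {x | ∃ U W : Finset (Fin N), U.card = k ∧ W.card = n ∧ Disjoint U W ∧
      ∀ u ∈ U, ∀ w ∈ W, x.1 s(u, w) = true ∧ x.2 s(u, w) = b} with hBdef
  -- step 1 : measure of the event is at most μ'(B true) + μ'(B false)
  have hstep1 : erMeasure N p
      {ω | ∀ χ : Sym2 (Fin N) → Bool,
        ∃ (b : Bool) (U W : Finset (Fin N)),
          U.card = k ∧ W.card = n ∧ Disjoint U W ∧
          ∀ u ∈ U, ∀ w ∈ W, (graphOf ω).Adj u w ∧ χ s(u, w) = b}
      ≤ μ' (Bset true) + μ' (Bset false) := by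
    have hA : erMeasure N p
        {ω | ∀ χ : Sym2 (Fin N) → Bool,
          ∃ (b : Bool) (U W : Finset (Fin N)),
            U.card = k ∧ W.card = n ∧ Disjoint U W ∧
            ∀ u ∈ U, ∀ w ∈ W, (graphOf ω).Adj u w ∧ χ s(u, w) = b}
        = μ' ({ω | ∀ χ : Sym2 (Fin N) → Bool,
          ∃ (b : Bool) (U W : Finset (Fin N)),
            U.card = k ∧ W.card = n ∧ Disjoint U W ∧
            ∀ u ∈ U, ∀ w ∈ W, (graphOf ω).Adj u w ∧ χ s(u, w) = b} ×ˢ Set.univ) := by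
      rw [hμ'def, Measure.prod_prod, measure_univ, mul_one]
    rw [hA]
    refine le_trans (measure_mono ?_) (measure_union_le _ _)
    rintro ⟨ω, χ⟩ ⟨hω, -⟩
    obtain ⟨b, U, W, hU, hW, hd, hmono⟩ := hω χ
    have hmono' : ∀ u ∈ U, ∀ w ∈ W, ω s(u, w) = true ∧ χ s(u, w) = b := by
      intro u hu w hw
      refine ⟨?_, (hmono u hu w hw).2⟩
      have := (hmono u hu w hw).1
      rw [graphOf, SimpleGraph.fromEdgeSet_adj] at this
      exact this.1
    cases b
    · exact Or.inr ⟨U, W, hU, hW, hd, hmono'⟩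
    · exact Or.inl ⟨U, W, hU, hW, hd, hmono'⟩
  -- step 2 : color bound for both colors
  have hcb : ∀ b : Bool, (n.choose m : ℝ≥0∞) * μ' (Bset b)
      ≤ (N.choose k : ℝ≥0∞) * (N.choose m : ℝ≥0∞) * (ENNReal.ofReal p * 2⁻¹) ^ (k * m) :=
    fun b => color_bound N k n m p hp0 hp1.le b
  -- step 3 : the ENNReal bound, and conversion to a real bound
  have hkey : (N : ℝ) * (p / 2) ^ k ≤ θ₀ * ((n : ℝ) + 1 - m) := by
    have hx : (0 : ℝ) ≤ (p / 2) ^ k := pow_nonneg (by linarith) _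
    have hm_le : (m : ℝ) ≤ ε * n + 1 := by
      have := Nat.floor_le (show (0:ℝ) ≤ ε * n by positivity)
      push_cast [hmdef]
      linarith
    have h2 : (1 - ε) * n ≤ (n : ℝ) + 1 - m := by linarith
    have h3 : (N : ℝ) * (p / 2) ^ k ≤ γ * n := by
      calc (N : ℝ) * (p / 2) ^ k ≤ (c * 2 ^ k * n) * (p / 2) ^ k :=
            mul_le_mul_of_nonneg_right hNle hx
        _ = γ * n := by
            rw [div_pow, hγdef]
            field_simp
    have h4 : γ * n ≤ θ₀ * ((1 - ε) * n) := by
      have hθε : θ * (1 - ε) = γ := div_mul_cancel₀ γ h1ε.ne'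
      have hθθ₀ : θ ≤ θ₀ := le_max_left _ _
      calc γ * n = θ * (1 - ε) * n := by rw [hθε]
        _ ≤ θ₀ * (1 - ε) * n := by
            apply mul_le_mul_of_nonneg_right _ hn0.le
            exact mul_le_mul_of_nonneg_right hθθ₀ h1ε.le
        _ = θ₀ * ((1 - ε) * n) := by ring
    calc (N : ℝ) * (p / 2) ^ k ≤ γ * n := h3
      _ ≤ θ₀ * ((1 - ε) * n) := h4
      _ ≤ θ₀ * ((n : ℝ) + 1 - m) := mul_le_mul_of_nonneg_left h2 hθ₀pos.le
  have hθpow : θ₀ ^ m ≤ θ₁ ^ n := by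
    have h1 : ε * n ≤ (m : ℝ) := by
      have := Nat.lt_floor_add_one (ε * n)
      push_cast [hmdef]
      linarith
    calc θ₀ ^ m = θ₀ ^ (m : ℝ) := (Real.rpow_natCast _ _).symm
      _ ≤ θ₀ ^ (ε * n) := Real.rpow_le_rpow_of_exponent_ge hθ₀pos hθ₀lt.le h1
      _ = (θ₀ ^ ε) ^ (n : ℝ) := by rw [← Real.rpow_mul hθ₀pos.le]
      _ = θ₁ ^ n := by rw [hθ₁def, Real.rpow_natCast]
  -- the real inequality
  have hreal : 2 * (N.choose k : ℝ) * (N.choose m : ℝ) * (p / 2) ^ (k * m)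
      ≤ (D * n ^ k * θ₁ ^ n) * (n.choose m : ℝ) := by
    have hNk : (N.choose k : ℝ) ≤ (c * 2 ^ k) ^ k * (n : ℝ) ^ k := by
      calc (N.choose k : ℝ) ≤ (N : ℝ) ^ k := by
            exact_mod_cast Nat.cast_le.mpr (Nat.choose_le_pow N k)
        _ ≤ (c * 2 ^ k * n) ^ k :=
            pow_le_pow_left₀ (Nat.cast_nonneg _) hNle _
        _ = (c * 2 ^ k) ^ k * (n : ℝ) ^ k := mul_pow _ _ _
    have hNm : (N.choose m : ℝ) * (p / 2) ^ (k * m) ≤ θ₁ ^ n * (n.choose m : ℝ) := by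
      refine le_trans (choose_bound n m N k p θ₀ hp0 hθ₀pos.le hmn hkey) ?_
      exact mul_le_mul_of_nonneg_right hθpow (Nat.cast_nonneg _)
    calc 2 * (N.choose k : ℝ) * (N.choose m : ℝ) * (p / 2) ^ (k * m)
        = 2 * ((N.choose k : ℝ) * ((N.choose m : ℝ) * (p / 2) ^ (k * m))) := by ring
      _ ≤ 2 * (((c * 2 ^ k) ^ k * (n : ℝ) ^ k) * (θ₁ ^ n * (n.choose m : ℝ))) := by
          apply mul_le_mul_of_nonneg_left _ (by norm_num : (0:ℝ) ≤ 2)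
          exact mul_le_mul hNk hNm
            (mul_nonneg (Nat.cast_nonneg _) (pow_nonneg (by linarith) _))
            (mul_nonneg (by positivity) (by positivity))
      _ = (D * n ^ k * θ₁ ^ n) * (n.choose m : ℝ) := by rw [hDdef]; ring
  -- put everything together in ℝ≥0∞
  have hofReal : (2 : ℝ≥0∞) * ((N.choose k : ℝ≥0∞) * (N.choose m : ℝ≥0∞)
        * (ENNReal.ofReal p * 2⁻¹) ^ (k * m))
      = ENNReal.ofReal (2 * (N.choose k : ℝ) * (N.choose m : ℝ) * (p / 2) ^ (k * m)) := by
    have h1 : ENNReal.ofReal p * 2⁻¹ = ENNReal.ofReal (p / 2) := by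
      rw [ENNReal.ofReal_div_of_pos (by norm_num)]
      norm_num
      rw [div_eq_mul_inv]
    rw [h1, ← ENNReal.ofReal_pow (by linarith), ← ENNReal.ofReal_natCast (N.choose k),
      ← ENNReal.ofReal_natCast (N.choose m), ← ENNReal.ofReal_ofNat 2,
      ← ENNReal.ofReal_mul (by norm_num), ← ENNReal.ofReal_mul (by positivity),
      ← ENNReal.ofReal_mul (by positivity)]
    congr 1
    ring
  have hch0 : (n.choose m : ℝ≥0∞) ≠ 0 := by
    exact_mod_cast (Nat.cast_pos.mpr (Nat.choose_pos hmn)).ne'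
  have hchtop : (n.choose m : ℝ≥0∞) ≠ ⊤ := ENNReal.natCast_ne_top _
  rw [← ENNReal.mul_le_mul_iff_right hch0 hchtop]
  calc (n.choose m : ℝ≥0∞) * erMeasure N p _
      ≤ (n.choose m : ℝ≥0∞) * (μ' (Bset true) + μ' (Bset false)) :=
        mul_le_mul_right hstep1 _
    _ = (n.choose m : ℝ≥0∞) * μ' (Bset true) + (n.choose m : ℝ≥0∞) * μ' (Bset false) := by
        rw [mul_add]
    _ ≤ (N.choose k : ℝ≥0∞) * (N.choose m : ℝ≥0∞) * (ENNReal.ofReal p * 2⁻¹) ^ (k * m)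
        + (N.choose k : ℝ≥0∞) * (N.choose m : ℝ≥0∞) * (ENNReal.ofReal p * 2⁻¹) ^ (k * m) :=
        add_le_add (hcb true) (hcb false)
    _ = 2 * ((N.choose k : ℝ≥0∞) * (N.choose m : ℝ≥0∞)
        * (ENNReal.ofReal p * 2⁻¹) ^ (k * m)) := by ring
    _ = ENNReal.ofReal (2 * (N.choose k : ℝ) * (N.choose m : ℝ) * (p / 2) ^ (k * m)) := hofReal
    _ ≤ ENNReal.ofReal ((D * n ^ k * θ₁ ^ n) * (n.choose m : ℝ)) :=
        ENNReal.ofReal_le_ofReal hreal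
    _ = (n.choose m : ℝ≥0∞) * ENNReal.ofReal (D * n ^ k * θ₁ ^ n) := by
        rw [ENNReal.ofReal_mul' (Nat.cast_nonneg _), ENNReal.ofReal_natCast, mul_comm]
end

section
/- Fix an integer k ≥ 2 and a real c > 1. Let N = c·2^k·n. If p ∈ [0, c^{-1/k}), then asymptotically almost surely every red/blue edge coloring of G(N,p) contains no monochromatic copy of the book graph B_n^{(k)}; that is, a.a.s. G(N,p) ↛ B_n^{(k)}. -/
open MeasureTheory Filter

section Aux

open Finset
open scoped ENNReal

private noncomputable def w1 (p : ℝ) : Bool → ℝ≥0∞ :=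
  fun s => bif s then min (ENNReal.ofReal p) 1 else 1 - min (ENNReal.ofReal p) 1

private noncomputable def w2 (p : ℝ) : Bool × Bool → ℝ≥0∞ := fun x => w1 p x.1 * 2⁻¹

private lemma w1_sum (p : ℝ) : ∑ s : Bool, w1 p s = 1 := by
  simp only [w1, Fintype.sum_bool, cond_true, cond_false]
  exact add_tsub_cancel_of_le (min_le_right _ _)

private lemma w2_sum (p : ℝ) : ∑ x : Bool × Bool, w2 p x = 1 := by
  rw [Fintype.sum_prod_type, ← w1_sum p]
  refine Finset.sum_congr rfl fun s _ => ?_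
  rw [Fintype.sum_bool]
  show w1 p s * 2⁻¹ + w1 p s * 2⁻¹ = w1 p s
  rw [← mul_add, ENNReal.inv_two_add_inv_two, mul_one]

private lemma erMeasure_apply {N : ℕ} (p : ℝ) (A : Set (Sym2 (Fin N) → Bool)) :
    erMeasure N p A = ∑ ω : Sym2 (Fin N) → Bool,
      A.indicator (fun ω => ∏ e : Sym2 (Fin N), w1 p (ω e)) ω := by
  classical
  have hsing : ∀ ω : Sym2 (Fin N) → Bool,
      erMeasure N p {ω} = ∏ e : Sym2 (Fin N), w1 p (ω e) := by
    intro ω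
    rw [erMeasure, ← Set.univ_pi_singleton ω, Measure.pi_pi]
    refine Finset.prod_congr rfl fun e _ => ?_
    rw [PMF.toMeasure_apply_singleton _ _ (measurableSet_singleton _), PMF.bernoulli_apply]
    cases ω e <;> simp [w1, ENNReal.ofReal]
  have hA : A = ⋃ ω ∈ Finset.univ.filter (· ∈ A), ({ω} : Set _) := by
    ext x; simp
  have h1 : erMeasure N p A = ∑ ω ∈ Finset.univ.filter (· ∈ A), erMeasure N p {ω} := by
    conv_lhs => rw [hA]
    refine measure_biUnion_finset ?_ fun _ _ => (Set.to_countable _).measurableSet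
    intro x hx y hy hxy
    simp [Set.disjoint_singleton_left, hxy]
  rw [h1, Finset.sum_congr rfl fun ω _ => hsing ω, Finset.sum_filter]
  refine Finset.sum_congr rfl fun ω _ => ?_
  by_cases h : ω ∈ A <;> simp [h]

private lemma key_bound {N k n : ℕ} (p : ℝ) (t : ℝ≥0∞) (ht0 : t ≠ 0) (ht1 : t ≤ 1) :
    erMeasure N p
      {ω | ∀ χ : Sym2 (Fin N) → Bool,
        ∃ (b : Bool) (S P : Finset (Fin N)),
          S.card = k ∧ P.card = n ∧ Disjoint S P ∧
          (∀ u ∈ S, ∀ v ∈ S, u ≠ v → (graphOf ω).Adj u v ∧ χ s(u, v) = b) ∧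
          (∀ u ∈ S, ∀ w ∈ P, (graphOf ω).Adj u w ∧ χ s(u, w) = b)}
      ≤ 2 * (N.choose k : ℝ≥0∞) * t ^ n *
        (1 + (t⁻¹ - 1) * (min (ENNReal.ofReal p) 1 * 2⁻¹) ^ k) ^ (N - k) := by
  classical
  set ι := Sym2 (Fin N)
  set q : ℝ≥0∞ := min (ENNReal.ofReal p) 1 * 2⁻¹ with hqdef
  set δ : ℝ≥0∞ := t⁻¹ - 1 with hδdef
  have htop : t ≠ ⊤ := (ht1.trans_lt ENNReal.one_lt_top).ne
  have hθ1 : (1:ℝ≥0∞) ≤ t⁻¹ := ENNReal.one_le_inv.2 ht1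
  set E : Set (ι → Bool) :=
      {ω | ∀ χ : ι → Bool,
        ∃ (b : Bool) (S P : Finset (Fin N)),
          S.card = k ∧ P.card = n ∧ Disjoint S P ∧
          (∀ u ∈ S, ∀ v ∈ S, u ≠ v → (graphOf ω).Adj u v ∧ χ s(u, v) = b) ∧
          (∀ u ∈ S, ∀ w ∈ P, (graphOf ω).Adj u w ∧ χ s(u, w) = b)} with hEdef
  set cnt : Bool → Finset (Fin N) → (ι → Bool × Bool) → ℕ :=
    fun b S τ => (((univ : Finset (Fin N)) \ S).filter
      (fun v => ∀ u ∈ S, τ s(u, v) = (true, b))).card with hcntdef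
  -- Step A+B : measure ≤ sum over τ of indicator * weight
  have stepAB : erMeasure N p E ≤
      ∑ τ : ι → Bool × Bool,
        (if (fun e => (τ e).1) ∈ E then 1 else 0) * ∏ e : ι, w2 p (τ e) := by
    rw [erMeasure_apply]
    have h2 : ∀ ω : ι → Bool, (E.indicator (fun ω => ∏ e : ι, w1 p (ω e)) ω)
        = ∑ χ : ι → Bool, (if ω ∈ E then (1:ℝ≥0∞) else 0) * ∏ e : ι, w2 p (ω e, χ e) := by
      intro ω
      by_cases h : ω ∈ E
      · rw [Set.indicator_of_mem h]
        simp only [h, if_true, one_mul]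
        rw [← Fintype.prod_sum (f := fun (e : ι) (j : Bool) => w2 p (ω e, j))]
        refine Finset.prod_congr rfl fun e _ => ?_
        rw [Fintype.sum_bool]
        show w1 p (ω e) = w1 p (ω e) * 2⁻¹ + w1 p (ω e) * 2⁻¹
        rw [← mul_add, ENNReal.inv_two_add_inv_two, mul_one]
      · simp [Set.indicator_of_notMem h, h]
    rw [Finset.sum_congr rfl fun ω _ => h2 ω, ← Fintype.sum_prod_type']
    apply le_of_eq
    exact (Fintype.sum_equiv (Equiv.arrowProdEquivProdArrow ι (fun _ => Bool) (fun _ => Bool)) _ _ fun τ => rfl).symm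
  -- Step C : union bound pointwise
  have stepC : ∀ τ : ι → Bool × Bool, ((if (fun e => (τ e).1) ∈ E then 1 else 0) : ℝ≥0∞) ≤
      ∑ b : Bool, ∑ S ∈ powersetCard k (univ : Finset (Fin N)),
        (if n ≤ cnt b S τ then 1 else 0) := by
    intro τ
    by_cases h : (fun e => (τ e).1) ∈ E
    · rw [if_pos h]
      obtain ⟨b, S, P, hSc, hPc, hdisj, _, hSP⟩ := h (fun e => (τ e).2)
      have hScnt : n ≤ cnt b S τ := by
        rw [← hPc, hcntdef]
        apply Finset.card_le_card
        intro v hv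
        rw [Finset.mem_filter]
        refine ⟨Finset.mem_sdiff.2 ⟨Finset.mem_univ v,
          fun hvS => Finset.disjoint_left.1 hdisj hvS hv⟩, ?_⟩
        intro u hu
        obtain ⟨hadj, hcol⟩ := hSP u hu v hv
        have h1 : (τ s(u,v)).1 = true :=
          ((SimpleGraph.fromEdgeSet_adj _).1 hadj).1
        exact Prod.ext h1 hcol
      calc (1:ℝ≥0∞) = if n ≤ cnt b S τ then 1 else 0 := by rw [if_pos hScnt]
        _ ≤ ∑ S' ∈ powersetCard k (univ : Finset (Fin N)), (if n ≤ cnt b S' τ then 1 else 0) :=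
            Finset.single_le_sum
              (f := fun S' => if n ≤ cnt b S' τ then (1:ℝ≥0∞) else 0)
              (fun _ _ => zero_le) (Finset.mem_powersetCard_univ.2 hSc)
        _ ≤ _ := Finset.single_le_sum
            (f := fun b => ∑ S' ∈ powersetCard k (univ : Finset (Fin N)),
              (if n ≤ cnt b S' τ then (1:ℝ≥0∞) else 0))
            (fun _ _ => zero_le) (Finset.mem_univ b)
    · rw [if_neg h]
      exact zero_le
  -- Step D : per (b, S) Chernoff bound
  have stepD : ∀ (b : Bool) (S : Finset (Fin N)), S ∈ powersetCard k (univ : Finset (Fin N)) →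
      ∑ τ : ι → Bool × Bool, (if n ≤ cnt b S τ then 1 else 0) * ∏ e : ι, w2 p (τ e)
        ≤ t ^ n * (1 + δ * q ^ k) ^ (N - k) := by
    intro b S hS
    have hSk : S.card = k := Finset.mem_powersetCard_univ.1 hS
    set R : Finset (Fin N) := (univ : Finset (Fin N)) \ S with hRdef
    have hRcard : R.card = N - k := by
      rw [hRdef, Finset.card_univ_diff, hSk, Fintype.card_fin]
    -- pointwise Chernoff
    have chern : ∀ τ : ι → Bool × Bool, (if n ≤ cnt b S τ then (1:ℝ≥0∞) else 0) ≤
        t ^ n * ∏ v ∈ R, (if (∀ u ∈ S, τ s(u,v) = (true,b)) then t⁻¹ else 1) := by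
      intro τ
      split_ifs with h
      · have hprod : ∏ v ∈ R, (if (∀ u ∈ S, τ s(u,v) = (true,b)) then t⁻¹ else (1:ℝ≥0∞))
            = (t⁻¹) ^ cnt b S τ := by
          rw [← Finset.prod_filter_mul_prod_filter_not R
            (fun v => ∀ u ∈ S, τ s(u,v) = (true,b))]
          rw [Finset.prod_congr rfl (fun v hv => if_pos (Finset.mem_filter.1 hv).2),
            Finset.prod_congr rfl (fun v hv => if_neg (Finset.mem_filter.1 hv).2),
            Finset.prod_const, Finset.prod_const, one_pow, mul_one, hcntdef]
        rw [hprod]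
        calc (1:ℝ≥0∞) = t^n * (t⁻¹)^n := by
              rw [← mul_pow, ENNReal.mul_inv_cancel ht0 htop, one_pow]
          _ ≤ t^n * (t⁻¹)^(cnt b S τ) := mul_le_mul_right (pow_le_pow_right₀ hθ1 h) _
      · exact zero_le
    -- expansion of the product
    have expand : ∀ τ : ι → Bool × Bool,
        ∏ v ∈ R, (if (∀ u ∈ S, τ s(u,v) = (true,b)) then t⁻¹ else (1:ℝ≥0∞))
        = ∑ T ∈ R.powerset, δ ^ T.card *
            (if (∀ v ∈ T, ∀ u ∈ S, τ s(u,v) = (true,b)) then 1 else 0) := by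
      intro τ
      have h1 : ∀ v ∈ R, (if (∀ u ∈ S, τ s(u,v) = (true,b)) then t⁻¹ else (1:ℝ≥0∞))
          = δ * (if (∀ u ∈ S, τ s(u,v) = (true,b)) then 1 else 0) + 1 := by
        intro v _
        split_ifs with h
        · rw [mul_one, hδdef, tsub_add_cancel_of_le hθ1]
        · rw [mul_zero, zero_add]
      rw [Finset.prod_congr rfl h1, Finset.prod_add]
      refine Finset.sum_congr rfl fun T hT => ?_
      rw [Finset.prod_const_one, mul_one, Finset.prod_mul_distrib, Finset.prod_const]
      congr 1
      split_ifs with hall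
      · exact Finset.prod_eq_one fun v hv => if_pos (hall v hv)
      · push_neg at hall
        obtain ⟨v, hv, u, hu, hne⟩ := hall
        exact Finset.prod_eq_zero hv (if_neg fun hall' => hne (hall' u hu))
    -- core product computation
    have core : ∀ T ∈ R.powerset,
        ∑ τ : ι → Bool × Bool,
          (if (∀ v ∈ T, ∀ u ∈ S, τ s(u,v) = (true,b)) then (1:ℝ≥0∞) else 0)
            * ∏ e : ι, w2 p (τ e)
        = (q ^ k) ^ T.card := by
      intro T hT
      have hTR : T ⊆ R := Finset.mem_powerset.1 hT
      set ET : Finset ι := (S ×ˢ T).image (fun uv : Fin N × Fin N => s(uv.1, uv.2)) with hETdef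
      have hmemET : ∀ u ∈ S, ∀ v ∈ T, s(u,v) ∈ ET := by
        intro u hu v hv
        exact Finset.mem_image.2 ⟨(u,v), Finset.mem_product.2 ⟨hu, hv⟩, rfl⟩
      have claimA : ∀ τ : ι → Bool × Bool,
          (if (∀ v ∈ T, ∀ u ∈ S, τ s(u,v) = (true,b)) then (1:ℝ≥0∞) else 0)
            * ∏ e : ι, w2 p (τ e)
          = ∏ e : ι, ((if e ∈ ET then (if τ e = (true,b) then 1 else 0) else 1) * w2 p (τ e)) := by
        intro τ
        rw [Finset.prod_mul_distrib]
        congr 1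
        by_cases hall : ∀ v ∈ T, ∀ u ∈ S, τ s(u,v) = (true,b)
        · rw [if_pos hall]
          symm
          refine Finset.prod_eq_one fun e _ => ?_
          split_ifs with he hτ
          · rfl
          · exfalso
            obtain ⟨⟨u,v⟩, huv, rfl⟩ := Finset.mem_image.1 he
            obtain ⟨hu, hv⟩ := Finset.mem_product.1 huv
            exact hτ (hall v hv u hu)
          · rfl
        · rw [if_neg hall]
          push_neg at hall
          obtain ⟨v, hv, u, hu, hne⟩ := hall
          symm
          refine Finset.prod_eq_zero (Finset.mem_univ s(u,v)) ?_
          rw [if_pos (hmemET u hu v hv), if_neg hne]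
      rw [Finset.sum_congr rfl fun τ _ => claimA τ,
        ← Fintype.prod_sum (f := fun (e : ι) (x : Bool × Bool) =>
          (if e ∈ ET then (if x = (true,b) then 1 else 0) else 1) * w2 p x)]
      have claimC : ∀ e : ι,
          (∑ x : Bool × Bool, (if e ∈ ET then (if x = (true,b) then (1:ℝ≥0∞) else 0) else 1)
            * w2 p x) = if e ∈ ET then q else 1 := by
        intro e
        split_ifs with he
        · have hsummand : ∀ x : Bool × Bool,
              (if x = (true,b) then (1:ℝ≥0∞) else 0) * w2 p x
              = if x = (true,b) then w2 p x else 0 := by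
            intro x; split_ifs <;> simp
          rw [Finset.sum_congr rfl fun x _ => hsummand x,
            Finset.sum_ite_eq' Finset.univ ((true,b) : Bool × Bool) (w2 p),
            if_pos (Finset.mem_univ _)]
          rfl
        · simp_rw [one_mul]
          exact w2_sum p
      rw [Finset.prod_congr rfl fun e _ => claimC e]
      have claimD : ∏ e : ι, (if e ∈ ET then q else 1) = q ^ ET.card := by
        rw [← Finset.prod_filter, Finset.filter_univ_mem, Finset.prod_const]
      have claimE : ET.card = k * T.card := by
        rw [hETdef, Finset.card_image_of_injOn, Finset.card_product, hSk]
        rintro ⟨u, v⟩ huv ⟨u', v'⟩ huv' heq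
        simp only [Finset.coe_product, Set.mem_prod, Finset.mem_coe] at huv huv'
        rw [Sym2.eq_iff] at heq
        rcases heq with ⟨rfl, rfl⟩ | ⟨rfl, rfl⟩
        · rfl
        · exfalso
          have := hTR huv.2
          rw [hRdef, Finset.mem_sdiff] at this
          exact this.2 huv'.1
      rw [claimD, claimE, pow_mul]
    -- powerset sum
    have powsum : ∑ T ∈ R.powerset, (δ * q ^ k) ^ T.card = (δ * q ^ k + 1) ^ R.card := by
      calc ∑ T ∈ R.powerset, (δ * q ^ k) ^ T.card
          = ∑ T ∈ R.powerset, (∏ _v ∈ T, (δ * q ^ k)) * ∏ _v ∈ R \ T, (1:ℝ≥0∞) := by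
            refine Finset.sum_congr rfl fun T hT => ?_
            rw [Finset.prod_const, Finset.prod_const_one, mul_one]
        _ = ∏ _v ∈ R, (δ * q ^ k + 1) := (Finset.prod_add _ _ _).symm
        _ = (δ * q ^ k + 1) ^ R.card := Finset.prod_const _
    -- assemble step D
    calc ∑ τ : ι → Bool × Bool, (if n ≤ cnt b S τ then (1:ℝ≥0∞) else 0) * ∏ e : ι, w2 p (τ e)
        ≤ ∑ τ : ι → Bool × Bool,
            (t ^ n * ∏ v ∈ R, (if (∀ u ∈ S, τ s(u,v) = (true,b)) then t⁻¹ else 1))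
              * ∏ e : ι, w2 p (τ e) :=
          Finset.sum_le_sum fun τ _ => mul_le_mul_left (chern τ) _
      _ = t ^ n * ∑ τ : ι → Bool × Bool,
            (∑ T ∈ R.powerset, δ ^ T.card *
              (if (∀ v ∈ T, ∀ u ∈ S, τ s(u,v) = (true,b)) then 1 else 0))
              * ∏ e : ι, w2 p (τ e) := by
          rw [Finset.mul_sum]
          exact Finset.sum_congr rfl fun τ _ => by rw [expand τ, mul_assoc]
      _ = t ^ n * ∑ T ∈ R.powerset, δ ^ T.card *
            ∑ τ : ι → Bool × Bool,
              (if (∀ v ∈ T, ∀ u ∈ S, τ s(u,v) = (true,b)) then 1 else 0)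
                * ∏ e : ι, w2 p (τ e) := by
          congr 1
          simp_rw [Finset.sum_mul, mul_assoc]
          rw [Finset.sum_comm]
          exact Finset.sum_congr rfl fun T _ => by rw [← Finset.mul_sum]
      _ = t ^ n * ∑ T ∈ R.powerset, (δ * q ^ k) ^ T.card := by
          congr 1
          refine Finset.sum_congr rfl fun T hT => ?_
          rw [core T hT, ← mul_pow]
      _ = t ^ n * (1 + δ * q ^ k) ^ (N - k) := by
          rw [powsum, hRcard, add_comm]
  -- final assembly
  calc erMeasure N p E
      ≤ ∑ τ : ι → Bool × Bool,
        (if (fun e => (τ e).1) ∈ E then 1 else 0) * ∏ e : ι, w2 p (τ e) := stepAB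
    _ ≤ ∑ τ : ι → Bool × Bool, (∑ b : Bool, ∑ S ∈ powersetCard k (univ : Finset (Fin N)),
          (if n ≤ cnt b S τ then 1 else 0)) * ∏ e : ι, w2 p (τ e) := by
        refine Finset.sum_le_sum fun τ _ => ?_
        exact mul_le_mul_left (stepC τ) _
    _ = ∑ b : Bool, ∑ S ∈ powersetCard k (univ : Finset (Fin N)),
          ∑ τ : ι → Bool × Bool, (if n ≤ cnt b S τ then 1 else 0) * ∏ e : ι, w2 p (τ e) := by
        simp_rw [Finset.sum_mul]
        rw [Finset.sum_comm]
        exact Finset.sum_congr rfl fun b _ => Finset.sum_comm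
    _ ≤ ∑ _b : Bool, ∑ _S ∈ powersetCard k (univ : Finset (Fin N)),
          t ^ n * (1 + δ * q ^ k) ^ (N - k) := by
        refine Finset.sum_le_sum fun b _ => Finset.sum_le_sum fun S hS => stepD b S hS
    _ = 2 * (N.choose k : ℝ≥0∞) * t ^ n * (1 + δ * q ^ k) ^ (N - k) := by
        simp only [Finset.sum_const, Finset.card_powersetCard, Finset.card_univ,
          Fintype.card_fin, Fintype.card_bool, nsmul_eq_mul, Nat.cast_ofNat]
        ring

end Aux

/-- Lower Ramsey threshold for the book `B_n^{(k)}`: with `N = ⌊c·2^k·n⌋` and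
`p < c^{-1/k}`, a.a.s. `G(N,p) ↛ B_n^{(k)}`: the probability that every red/blue
edge-coloring contains a monochromatic book (a `K_k` core `S` together with `n` page
vertices all joined to `S`, with all these edges of one color) tends to `0`. -/
theorem lower_threshold_book (k : ℕ) (hk : 2 ≤ k) (c : ℝ) (hc : 1 < c) (p : ℝ)
    (hp0 : 0 ≤ p) (hp : p < c ^ (-(1 : ℝ) / (k : ℝ))) :
    Tendsto
      (fun n : ℕ =>
        erMeasure (⌊c * 2 ^ k * n⌋₊) p
          {ω | ∀ χ : Sym2 (Fin ⌊c * 2 ^ k * n⌋₊) → Bool,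
            ∃ (b : Bool) (S P : Finset (Fin ⌊c * 2 ^ k * n⌋₊)),
              S.card = k ∧ P.card = n ∧ Disjoint S P ∧
              (∀ u ∈ S, ∀ v ∈ S, u ≠ v → (graphOf ω).Adj u v ∧ χ s(u, v) = b) ∧
              (∀ u ∈ S, ∀ w ∈ P, (graphOf ω).Adj u w ∧ χ s(u, w) = b)})
      atTop (nhds 0) := by
  have hc0 : (0:ℝ) < c := lt_trans one_pos hc
  have hkne : k ≠ 0 := by omega
  have hkR : (k:ℝ) ≠ 0 := Nat.cast_ne_zero.2 hkne
  have hpk : p ^ k < c⁻¹ := by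
    have h1 : p ^ k < (c ^ (-(1:ℝ)/(k:ℝ))) ^ k := pow_lt_pow_left₀ hp hp0 hkne
    have h2 : (c ^ (-(1:ℝ)/(k:ℝ))) ^ k = c⁻¹ := by
      rw [← Real.rpow_natCast (c ^ (-(1:ℝ)/(k:ℝ))) k, ← Real.rpow_mul hc0.le,
        div_mul_cancel₀ _ hkR, Real.rpow_neg_one]
    rwa [h2] at h1
  set a : ℝ := c * p ^ k with hadef
  have ha0 : 0 ≤ a := by positivity
  have ha1 : a < 1 := by
    have := mul_lt_mul_of_pos_left hpk hc0
    rwa [mul_inv_cancel₀ hc0.ne'] at this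
  set al : ℝ := max a 2⁻¹ with haldef
  have hal0 : (0:ℝ) < al := lt_of_lt_of_le (by norm_num) (le_max_right _ _)
  have hal1 : al < 1 := max_lt ha1 (by norm_num)
  have halle : a ≤ al := le_max_left _ _
  have halinv : (1:ℝ) ≤ al⁻¹ := (one_le_inv₀ hal0).2 hal1.le
  set x : ℝ := (al⁻¹ - 1) * (p * 2⁻¹) ^ k with hxdef
  have hx0 : 0 ≤ x := mul_nonneg (by linarith) (by positivity)
  set C : ℝ := 2 * (c * 2 ^ k) ^ k with hCdef
  set γ : ℝ := al * Real.exp (x * c * 2 ^ k) with hγdef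
  have hγ0 : 0 ≤ γ := by positivity
  have hγ1 : γ < 1 := by
    have h1 : x * c * 2 ^ k = (al⁻¹ - 1) * a := by
      rw [hxdef, hadef, mul_pow, inv_pow]
      field_simp
    have h2 : (al⁻¹ - 1) * a ≤ (al⁻¹ - 1) * al :=
      mul_le_mul_of_nonneg_left halle (by linarith)
    have h3 : (al⁻¹ - 1) * al = 1 - al := by field_simp
    have h4 : γ ≤ al * Real.exp (1 - al) := by
      rw [hγdef]
      apply mul_le_mul_of_nonneg_left _ hal0.le
      apply Real.exp_le_exp.2
      rw [h1]; linarith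
    have h5 : al * Real.exp (1 - al) < 1 := by
      have hlog : Real.log al < al - 1 := Real.log_lt_sub_one_of_pos hal0 hal1.ne
      have heq : al * Real.exp (1 - al) = Real.exp (Real.log al + (1 - al)) := by
        rw [Real.exp_add, Real.exp_log hal0]
      rw [heq]
      calc Real.exp (Real.log al + (1 - al)) < Real.exp 0 := Real.exp_lt_exp.2 (by linarith)
        _ = 1 := Real.exp_zero
    linarith
  set t : ENNReal := ENNReal.ofReal al with htdef
  have ht0 : t ≠ 0 := (ENNReal.ofReal_pos.2 hal0).ne'
  have ht1 : t ≤ 1 := by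
    rw [htdef, ← ENNReal.ofReal_one]
    exact ENNReal.ofReal_le_ofReal hal1.le
  -- the per-n bound
  have hbound : ∀ n : ℕ,
      erMeasure (⌊c * 2 ^ k * n⌋₊) p
        {ω | ∀ χ : Sym2 (Fin ⌊c * 2 ^ k * n⌋₊) → Bool,
          ∃ (b : Bool) (S P : Finset (Fin ⌊c * 2 ^ k * n⌋₊)),
            S.card = k ∧ P.card = n ∧ Disjoint S P ∧
            (∀ u ∈ S, ∀ v ∈ S, u ≠ v → (graphOf ω).Adj u v ∧ χ s(u, v) = b) ∧
            (∀ u ∈ S, ∀ w ∈ P, (graphOf ω).Adj u w ∧ χ s(u, w) = b)}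
      ≤ ENNReal.ofReal (C * ((n:ℝ) ^ k * γ ^ n)) := by
    intro n
    set N : ℕ := ⌊c * 2 ^ k * n⌋₊ with hNdef
    have hNle : (N:ℝ) ≤ c * 2 ^ k * n :=
      Nat.floor_le (mul_nonneg (mul_nonneg hc0.le (by positivity)) (Nat.cast_nonneg n))
    refine (key_bound p t ht0 ht1).trans ?_
    have hB : ((N.choose k : ℕ) : ENNReal) ≤ ENNReal.ofReal ((c * 2 ^ k * n) ^ k) := by
      rw [← ENNReal.ofReal_natCast]
      apply ENNReal.ofReal_le_ofReal
      calc ((N.choose k : ℕ) : ℝ) ≤ ((N ^ k : ℕ) : ℝ) := by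
            exact_mod_cast Nat.choose_le_pow N k
        _ = (N:ℝ) ^ k := by push_cast; ring
        _ ≤ (c * 2 ^ k * n) ^ k := pow_le_pow_left₀ (Nat.cast_nonneg _) hNle k
    have hC : t ^ n = ENNReal.ofReal (al ^ n) := by
      rw [htdef, ENNReal.ofReal_pow hal0.le]
    have hδ : (t⁻¹ - 1 : ENNReal) = ENNReal.ofReal (al⁻¹ - 1) := by
      rw [ENNReal.ofReal_sub _ zero_le_one, htdef, ENNReal.ofReal_inv_of_pos hal0,
        ENNReal.ofReal_one]
    have hq : (min (ENNReal.ofReal p) 1 * 2⁻¹ : ENNReal) ≤ ENNReal.ofReal (p * 2⁻¹) := by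
      rw [ENNReal.ofReal_mul hp0]
      refine mul_le_mul' (min_le_left _ _) ?_
      rw [ENNReal.ofReal_inv_of_pos (by norm_num : (0:ℝ) < 2)]
      norm_num
    have hD : (1 + (t⁻¹ - 1) * (min (ENNReal.ofReal p) 1 * 2⁻¹) ^ k : ENNReal)
        ≤ ENNReal.ofReal (1 + x) := by
      rw [ENNReal.ofReal_add zero_le_one hx0, ENNReal.ofReal_one]
      refine add_le_add_right ?_ 1
      rw [hxdef, ENNReal.ofReal_mul (by linarith), hδ]
      refine mul_le_mul_right ?_ _
      rw [ENNReal.ofReal_pow (by positivity)]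
      exact pow_le_pow_left' hq k
    have hE : ((1 + (t⁻¹ - 1) * (min (ENNReal.ofReal p) 1 * 2⁻¹) ^ k : ENNReal)) ^ (N - k)
        ≤ ENNReal.ofReal (Real.exp (x * (c * 2 ^ k * n))) := by
      refine (pow_le_pow_left' hD (N - k)).trans ?_
      rw [← ENNReal.ofReal_pow (by linarith)]
      apply ENNReal.ofReal_le_ofReal
      calc (1 + x) ^ (N - k) ≤ Real.exp x ^ (N - k) := by
            refine pow_le_pow_left₀ (by linarith) ?_ _
            have := Real.add_one_le_exp x
            linarith
        _ = Real.exp ((N - k : ℕ) * x) := (Real.exp_nat_mul x (N - k)).symm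
        _ ≤ Real.exp (x * (c * 2 ^ k * n)) := by
            apply Real.exp_le_exp.2
            have h1 : ((N - k : ℕ) : ℝ) ≤ (N : ℝ) := Nat.cast_le.2 (Nat.sub_le N k)
            nlinarith [hNle, hx0]
    calc 2 * (N.choose k : ENNReal) * t ^ n *
          (1 + (t⁻¹ - 1) * (min (ENNReal.ofReal p) 1 * 2⁻¹) ^ k) ^ (N - k)
        ≤ ENNReal.ofReal 2 * ENNReal.ofReal ((c * 2 ^ k * n) ^ k) * ENNReal.ofReal (al ^ n) *
          ENNReal.ofReal (Real.exp (x * (c * 2 ^ k * n))) := by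
          rw [hC]
          refine mul_le_mul' (mul_le_mul' (mul_le_mul' ?_ hB) le_rfl) hE
          rw [ENNReal.ofReal_ofNat]
      _ = ENNReal.ofReal (2 * (c * 2 ^ k * n) ^ k * al ^ n *
            Real.exp (x * (c * 2 ^ k * n))) := by
          have hcc : (0:ℝ) ≤ c * 2 ^ k * n :=
            mul_nonneg (mul_nonneg hc0.le (by positivity)) (Nat.cast_nonneg n)
          rw [ENNReal.ofReal_mul (mul_nonneg (mul_nonneg (by norm_num)
              (pow_nonneg hcc k)) (pow_nonneg hal0.le n)),
            ENNReal.ofReal_mul (mul_nonneg (by norm_num) (pow_nonneg hcc k)),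
            ENNReal.ofReal_mul (by norm_num : (0:ℝ) ≤ 2)]
      _ = ENNReal.ofReal (C * ((n:ℝ) ^ k * γ ^ n)) := by
          congr 1
          have hexparg : x * (c * 2 ^ k * (n:ℝ)) = (n:ℝ) * (x * c * 2 ^ k) := by ring
          rw [hexparg, Real.exp_nat_mul, hCdef, hγdef, mul_pow al, mul_pow c]
          ring
  -- the real bound tends to zero
  have hupper : Tendsto (fun n : ℕ => ENNReal.ofReal (C * ((n:ℝ) ^ k * γ ^ n)))
      atTop (nhds 0) := by
    have hnorm : ‖γ‖ < 1 := by rwa [Real.norm_eq_abs, abs_of_nonneg hγ0]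
    have hsum : Tendsto (fun n : ℕ => (n:ℝ) ^ k * γ ^ n) atTop (nhds 0) :=
      (summable_pow_mul_geometric_of_norm_lt_one k hnorm).tendsto_atTop_zero
    have hmul : Tendsto (fun n : ℕ => C * ((n:ℝ) ^ k * γ ^ n)) atTop (nhds 0) := by
      simpa using hsum.const_mul C
    simpa using ENNReal.tendsto_ofReal hmul
  exact tendsto_of_tendsto_of_tendsto_of_le_of_le tendsto_const_nhds hupper
    (fun n => zero_le) hbound
end

section
/- Suppose a graph G on N vertices (N large) has a red/blue edge-coloring with no monochromatic book B_n^{(2)}, and suppose: e(G) ~ pN²/2, every pair of distinct vertices has ~ p²N common neighbors, and e(N_R(v), N_B(v)) = p·deg_R(v)·deg_B(v) + o(N²) for every vertex v. Then p² ≤ (1 + o(1))·4n/N. -/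
open Filter Finset

attribute [local instance] Classical.propDecidable
set_option linter.unusedSectionVars false
set_option maxHeartbeats 1600000

namespace BookAux

variable {V : Type*} [Fintype V] [DecidableEq V]

noncomputable def tri (G : SimpleGraph V) : Finset (V × V × V) :=
  univ.filter fun t => G.Adj t.1 t.2.1 ∧ G.Adj t.2.1 t.2.2 ∧ G.Adj t.1 t.2.2
noncomputable def mix (G R B : SimpleGraph V) : Finset (V × V × V) :=
  univ.filter fun t => R.Adj t.1 t.2.1 ∧ B.Adj t.1 t.2.2 ∧ G.Adj t.2.1 t.2.2
noncomputable def codeg (G : SimpleGraph V) (u w : V) : ℕ :=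
  (G.neighborFinset u ∩ G.neighborFinset w).card
lemma inter_eq_filter (G : SimpleGraph V) (u w : V) :
    G.neighborFinset u ∩ G.neighborFinset w
      = univ.filter (fun v => G.Adj u v ∧ G.Adj v w) := by
  ext v
  simp [SimpleGraph.mem_neighborFinset, SimpleGraph.adj_comm]
lemma filter_adj_eq (G : SimpleGraph V) (u : V) :
    (univ.filter fun w => G.Adj u w) = G.neighborFinset u := by
  ext v; simp [SimpleGraph.mem_neighborFinset]
lemma tri_card (G : SimpleGraph V) :
    (tri G).card = ∑ u : V, ∑ w : V, if G.Adj u w then codeg G u w else 0 := by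
  rw [tri, card_filter, Fintype.sum_prod_type]
  refine Finset.sum_congr rfl fun u _ => ?_
  rw [Fintype.sum_prod_type, Finset.sum_comm]
  refine Finset.sum_congr rfl fun w _ => ?_
  by_cases h : G.Adj u w
  · simp only [h, if_true, codeg, inter_eq_filter, card_filter]
    refine Finset.sum_congr rfl fun v _ => ?_
    simp [h]
  · simp [h]
lemma mix_card (G R B : SimpleGraph V) :
    (mix G R B).card = ∑ c : V,
      (univ.filter fun q : V × V => R.Adj c q.1 ∧ B.Adj c q.2 ∧ G.Adj q.1 q.2).card := by
  rw [mix, card_filter, Fintype.sum_prod_type]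
  exact Finset.sum_congr rfl fun c _ => (card_filter _ _).symm
lemma sum_ite_adj_nat (G : SimpleGraph V) (c : ℕ) :
    ∑ u : V, ∑ w : V, (if G.Adj u w then c else 0) = (∑ v : V, G.degree v) * c := by
  rw [Finset.sum_mul]
  refine Finset.sum_congr rfl fun u _ => ?_
  rw [← Finset.sum_filter, Finset.sum_const, smul_eq_mul, filter_adj_eq]
  rfl
lemma sum_ite_adj_real (G : SimpleGraph V) (c : ℝ) :
    ∑ u : V, ∑ w : V, (if G.Adj u w then c else 0) = ((∑ v : V, G.degree v : ℕ) : ℝ) * c := by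
  push_cast
  rw [Finset.sum_mul]
  refine Finset.sum_congr rfl fun u _ => ?_
  rw [← Finset.sum_filter, Finset.sum_const, nsmul_eq_mul, filter_adj_eq]
  rfl
lemma deg_split (G R B : SimpleGraph V) (hRB : R ⊔ B = G)
    (hdisj : ∀ u v : V, R.Adj u v → ¬ B.Adj u v) (v : V) :
    G.degree v = R.degree v + B.degree v := by
  classical
  have h1 : G.neighborFinset v = R.neighborFinset v ∪ B.neighborFinset v := by
    ext w
    simp only [SimpleGraph.mem_neighborFinset, Finset.mem_union, ← hRB, SimpleGraph.sup_adj]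
  have h2 : Disjoint (R.neighborFinset v) (B.neighborFinset v) := by
    rw [Finset.disjoint_left]
    intro w hw hw'
    exact hdisj v w (by simpa [SimpleGraph.mem_neighborFinset] using hw)
      (by simpa [SimpleGraph.mem_neighborFinset] using hw')
  rw [SimpleGraph.degree, SimpleGraph.degree, SimpleGraph.degree, h1,
    Finset.card_union_of_disjoint h2]
lemma codeg_self (G : SimpleGraph V) (u : V) : codeg G u u = G.degree u := by
  rw [codeg, Finset.inter_self]; rfl
lemma sum_deg_sq (G : SimpleGraph V) :
    ∑ v : V, (G.degree v) ^ 2 = ∑ a : V, ∑ b : V, codeg G a b := by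
  have hdeg : ∀ v : V, G.degree v = ∑ x : V, (if G.Adj v x then 1 else 0) := by
    intro v
    rw [← Finset.sum_filter, Finset.sum_const, smul_eq_mul, mul_one, SimpleGraph.degree]
    congr 1
    ext w; simp [SimpleGraph.mem_neighborFinset]
  calc ∑ v : V, (G.degree v) ^ 2
      = ∑ v : V, ∑ a : V, ∑ b : V,
          ((if G.Adj v a then 1 else 0) * (if G.Adj v b then 1 else 0)) := by
        refine Finset.sum_congr rfl fun v _ => ?_
        rw [sq, hdeg v, Finset.sum_mul_sum]
    _ = ∑ a : V, ∑ b : V, ∑ v : V,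
          ((if G.Adj v a then 1 else 0) * (if G.Adj v b then 1 else 0)) := by
        rw [Finset.sum_comm]
        refine Finset.sum_congr rfl fun a _ => Finset.sum_comm
    _ = ∑ a : V, ∑ b : V, codeg G a b := by
        refine Finset.sum_congr rfl fun a _ => Finset.sum_congr rfl fun b _ => ?_
        rw [codeg, inter_eq_filter, card_filter]
        refine Finset.sum_congr rfl fun v _ => ?_
        by_cases h1 : G.Adj a v <;> by_cases h2 : G.Adj v b <;>
          simp [h1, h2, SimpleGraph.adj_comm]
lemma tri_split (G R B : SimpleGraph V) (hRB : R ⊔ B = G)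
    (hdisj : ∀ u v : V, R.Adj u v → ¬ B.Adj u v) :
    2 * (tri G).card = 2 * (tri R).card + 2 * (tri B).card + 6 * (mix G R B).card := by
  have hG : ∀ x y : V, G.Adj x y ↔ R.Adj x y ∨ B.Adj x y := by
    intro x y; rw [← hRB, SimpleGraph.sup_adj]
  have hRG : ∀ x y : V, R.Adj x y → G.Adj x y := fun x y h => (hG x y).mpr (Or.inl h)
  have hBG : ∀ x y : V, B.Adj x y → G.Adj x y := fun x y h => (hG x y).mpr (Or.inr h)
  -- per element weight function
  set F : V × V × V → ℕ := fun t =>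
    (if R.Adj t.1 t.2.1 ∧ R.Adj t.2.1 t.2.2 ∧ R.Adj t.1 t.2.2 then 2 else 0)
    + (if B.Adj t.1 t.2.1 ∧ B.Adj t.2.1 t.2.2 ∧ B.Adj t.1 t.2.2 then 2 else 0)
    + (if R.Adj t.1 t.2.1 ∧ B.Adj t.1 t.2.2 then 1 else 0)
    + (if B.Adj t.1 t.2.1 ∧ R.Adj t.1 t.2.2 then 1 else 0)
    + (if R.Adj t.1 t.2.1 ∧ B.Adj t.2.1 t.2.2 then 1 else 0)
    + (if B.Adj t.1 t.2.1 ∧ R.Adj t.2.1 t.2.2 then 1 else 0)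
    + (if R.Adj t.2.1 t.2.2 ∧ B.Adj t.1 t.2.2 then 1 else 0)
    + (if B.Adj t.2.1 t.2.2 ∧ R.Adj t.1 t.2.2 then 1 else 0) with hF
  have key : ∀ t ∈ tri G, F t = 2 := by
    rintro ⟨u, v, w⟩ ht
    simp only [tri, mem_filter, mem_univ, true_and] at ht
    obtain ⟨h1, h2, h3⟩ := ht
    have hnR : ∀ {x y : V}, B.Adj x y → ¬ R.Adj x y :=
      fun {x y} hb hr => hdisj x y hr hb
    rcases (hG u v).mp h1 with a | a <;> rcases (hG v w).mp h2 with b | b <;>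
      rcases (hG u w).mp h3 with c | c
    · simp [hF, a, b, c, hdisj _ _ a, hdisj _ _ b, hdisj _ _ c]
    · simp [hF, a, b, c, hdisj _ _ a, hdisj _ _ b, hnR c]
    · simp [hF, a, b, c, hdisj _ _ a, hnR b, hdisj _ _ c]
    · simp [hF, a, b, c, hdisj _ _ a, hnR b, hnR c]
    · simp [hF, a, b, c, hnR a, hdisj _ _ b, hdisj _ _ c]
    · simp [hF, a, b, c, hnR a, hdisj _ _ b, hnR c]
    · simp [hF, a, b, c, hnR a, hnR b, hdisj _ _ c]
    · simp [hF, a, b, c, hnR a, hnR b, hnR c]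
  have hsum : ∑ t ∈ tri G, F t = 2 * (tri G).card := by
    rw [Finset.sum_congr rfl key, Finset.sum_const, smul_eq_mul, mul_comm]
  have sum_ite_card : ∀ (P : V × V × V → Prop) (inst : DecidablePred P) (c : ℕ),
      (∑ t ∈ tri G, @ite _ (P t) (inst t) c 0) = c * ((tri G).filter P).card := by
    intro P inst c
    rw [← Finset.sum_filter, Finset.sum_const, smul_eq_mul, mul_comm]
  have hsum2 : ∑ t ∈ tri G, F t
      = 2 * ((tri G).filter (fun t => R.Adj t.1 t.2.1 ∧ R.Adj t.2.1 t.2.2 ∧ R.Adj t.1 t.2.2)).card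
      + 2 * ((tri G).filter (fun t => B.Adj t.1 t.2.1 ∧ B.Adj t.2.1 t.2.2 ∧ B.Adj t.1 t.2.2)).card
      + 1 * ((tri G).filter (fun t => R.Adj t.1 t.2.1 ∧ B.Adj t.1 t.2.2)).card
      + 1 * ((tri G).filter (fun t => B.Adj t.1 t.2.1 ∧ R.Adj t.1 t.2.2)).card
      + 1 * ((tri G).filter (fun t => R.Adj t.1 t.2.1 ∧ B.Adj t.2.1 t.2.2)).card
      + 1 * ((tri G).filter (fun t => B.Adj t.1 t.2.1 ∧ R.Adj t.2.1 t.2.2)).card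
      + 1 * ((tri G).filter (fun t => R.Adj t.2.1 t.2.2 ∧ B.Adj t.1 t.2.2)).card
      + 1 * ((tri G).filter (fun t => B.Adj t.2.1 t.2.2 ∧ R.Adj t.1 t.2.2)).card := by
    simp only [hF, Finset.sum_add_distrib]
    simp only [sum_ite_card]
  have c1 : ((tri G).filter (fun t => R.Adj t.1 t.2.1 ∧ R.Adj t.2.1 t.2.2 ∧ R.Adj t.1 t.2.2))
      = tri R := by
    ext t
    simp only [tri, mem_filter, mem_univ, true_and]
    exact ⟨fun h => h.2, fun h => ⟨⟨hRG _ _ h.1, hRG _ _ h.2.1, hRG _ _ h.2.2⟩, h⟩⟩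
  have c2 : ((tri G).filter (fun t => B.Adj t.1 t.2.1 ∧ B.Adj t.2.1 t.2.2 ∧ B.Adj t.1 t.2.2))
      = tri B := by
    ext t
    simp only [tri, mem_filter, mem_univ, true_and]
    exact ⟨fun h => h.2, fun h => ⟨⟨hBG _ _ h.1, hBG _ _ h.2.1, hBG _ _ h.2.2⟩, h⟩⟩
  have c3 : ((tri G).filter (fun t => R.Adj t.1 t.2.1 ∧ B.Adj t.1 t.2.2)) = mix G R B := by
    ext t
    simp only [tri, mix, mem_filter, mem_univ, true_and]
    constructor
    · rintro ⟨⟨g1, g2, g3⟩, hr, hb⟩; exact ⟨hr, hb, g2⟩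
    · rintro ⟨hr, hb, g⟩; exact ⟨⟨hRG _ _ hr, g, hBG _ _ hb⟩, hr, hb⟩
  have c4 : ((tri G).filter (fun t => B.Adj t.1 t.2.1 ∧ R.Adj t.1 t.2.2)).card
      = (mix G R B).card := by
    refine Finset.card_equiv ⟨fun t => (t.1, t.2.2, t.2.1), fun t => (t.1, t.2.2, t.2.1),
      fun ⟨a, b, c⟩ => rfl, fun ⟨a, b, c⟩ => rfl⟩ ?_
    rintro ⟨u, v, w⟩
    simp only [tri, mix, mem_filter, mem_univ, true_and, Equiv.coe_fn_mk]
    constructor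
    · rintro ⟨⟨g1, g2, g3⟩, hb, hr⟩; exact ⟨hr, hb, g2.symm⟩
    · rintro ⟨hr, hb, g⟩; exact ⟨⟨hBG _ _ hb, g.symm, hRG _ _ hr⟩, hb, hr⟩
  have c5 : ((tri G).filter (fun t => R.Adj t.1 t.2.1 ∧ B.Adj t.2.1 t.2.2)).card
      = (mix G R B).card := by
    refine Finset.card_equiv ⟨fun t => (t.2.1, t.1, t.2.2), fun t => (t.2.1, t.1, t.2.2),
      fun ⟨a, b, c⟩ => rfl, fun ⟨a, b, c⟩ => rfl⟩ ?_
    rintro ⟨u, v, w⟩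
    simp only [tri, mix, mem_filter, mem_univ, true_and, Equiv.coe_fn_mk]
    constructor
    · rintro ⟨⟨g1, g2, g3⟩, hr, hb⟩; exact ⟨hr.symm, hb, g3⟩
    · rintro ⟨hr, hb, g⟩; exact ⟨⟨(hRG _ _ hr).symm, hBG _ _ hb, g⟩, hr.symm, hb⟩
  have c6 : ((tri G).filter (fun t => B.Adj t.1 t.2.1 ∧ R.Adj t.2.1 t.2.2)).card
      = (mix G R B).card := by
    refine Finset.card_equiv ⟨fun t => (t.2.1, t.2.2, t.1), fun t => (t.2.2, t.1, t.2.1),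
      fun ⟨a, b, c⟩ => rfl, fun ⟨a, b, c⟩ => rfl⟩ ?_
    rintro ⟨u, v, w⟩
    simp only [tri, mix, mem_filter, mem_univ, true_and, Equiv.coe_fn_mk]
    constructor
    · rintro ⟨⟨g1, g2, g3⟩, hb, hr⟩; exact ⟨hr, hb.symm, g3.symm⟩
    · rintro ⟨hr, hb, g⟩; exact ⟨⟨(hBG _ _ hb).symm, hRG _ _ hr, g.symm⟩, hb.symm, hr⟩
  have c7 : ((tri G).filter (fun t => R.Adj t.2.1 t.2.2 ∧ B.Adj t.1 t.2.2)).card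
      = (mix G R B).card := by
    refine Finset.card_equiv ⟨fun t => (t.2.2, t.2.1, t.1), fun t => (t.2.2, t.2.1, t.1),
      fun ⟨a, b, c⟩ => rfl, fun ⟨a, b, c⟩ => rfl⟩ ?_
    rintro ⟨u, v, w⟩
    simp only [tri, mix, mem_filter, mem_univ, true_and, Equiv.coe_fn_mk]
    constructor
    · rintro ⟨⟨g1, g2, g3⟩, hr, hb⟩; exact ⟨hr.symm, hb.symm, g1.symm⟩
    · rintro ⟨hr, hb, g⟩; exact ⟨⟨g.symm, (hRG _ _ hr).symm, (hBG _ _ hb).symm⟩, hr.symm, hb.symm⟩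
  have c8 : ((tri G).filter (fun t => B.Adj t.2.1 t.2.2 ∧ R.Adj t.1 t.2.2)).card
      = (mix G R B).card := by
    refine Finset.card_equiv ⟨fun t => (t.2.2, t.1, t.2.1), fun t => (t.2.1, t.2.2, t.1),
      fun ⟨a, b, c⟩ => rfl, fun ⟨a, b, c⟩ => rfl⟩ ?_
    rintro ⟨u, v, w⟩
    simp only [tri, mix, mem_filter, mem_univ, true_and, Equiv.coe_fn_mk]
    constructor
    · rintro ⟨⟨g1, g2, g3⟩, hb, hr⟩; exact ⟨hr.symm, hb.symm, g1⟩
    · rintro ⟨hr, hb, g⟩; exact ⟨⟨g, (hBG _ _ hb).symm, (hRG _ _ hr).symm⟩, hb.symm, hr.symm⟩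
  rw [c1, c2, c3] at hsum2
  rw [c4, c5, c6, c7, c8] at hsum2
  omega
lemma codeg_le_of_no_book (R : SimpleGraph V) (n : ℕ)
    (hno : ¬ ∃ (u v : V) (S : Finset V),
      R.Adj u v ∧ u ∉ S ∧ v ∉ S ∧ S.card = n ∧ ∀ w ∈ S, R.Adj u w ∧ R.Adj v w)
    {u v : V} (huv : R.Adj u v) : codeg R u v ≤ n - 1 := by
  by_contra hlt
  push_neg at hlt
  have hn : n ≤ codeg R u v := by omega
  obtain ⟨S, hS, hcard⟩ := Finset.exists_subset_card_eq hn
  refine hno ⟨u, v, S, huv, ?_, ?_, hcard, ?_⟩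
  · intro hu
    have := hS hu
    simp only [Finset.mem_inter, SimpleGraph.mem_neighborFinset] at this
    exact R.irrefl this.1
  · intro hv
    have := hS hv
    simp only [Finset.mem_inter, SimpleGraph.mem_neighborFinset] at this
    exact R.irrefl this.2
  · intro w hw
    have := hS hw
    simp only [Finset.mem_inter, SimpleGraph.mem_neighborFinset] at this
    exact this
lemma ncard_common (G : SimpleGraph V) (u w : V) :
    (G.neighborSet u ∩ G.neighborSet w).ncard = codeg G u w := by
  rw [Set.ncard_eq_toFinset_card']
  rw [codeg]
  congr 1
  ext v
  simp [SimpleGraph.mem_neighborFinset, SimpleGraph.mem_neighborSet]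
lemma ncard_edge (G : SimpleGraph V) [DecidableRel G.Adj] :
    G.edgeSet.ncard = G.edgeFinset.card := by
  rw [Set.ncard_eq_toFinset_card']
  congr 1
lemma ncard_nbhd (G : SimpleGraph V) (v : V) :
    (G.neighborSet v).ncard = G.degree v := by
  rw [Set.ncard_eq_toFinset_card', SimpleGraph.degree]
  congr 1
lemma ncard_mix (G R B : SimpleGraph V) (v : V) :
    {q : V × V | q.1 ∈ R.neighborSet v ∧ q.2 ∈ B.neighborSet v ∧ G.Adj q.1 q.2}.ncard
      = (univ.filter fun q : V × V => R.Adj v q.1 ∧ B.Adj v q.2 ∧ G.Adj q.1 q.2).card := by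
  rw [Set.ncard_eq_toFinset_card']
  congr 1
  ext q
  simp [SimpleGraph.mem_neighborSet]

lemma endgame (p γ γ' C δ Nr kk e1 e2 T TR TB M D Q : ℝ)
    (hp : 0 < p) (hγ : 0 < γ)
    (hγ'def : γ' = min γ 1)
    (hCdef : C = 7 * p ^ 2 + 7 * p + 7)
    (hδdef : δ = min (p ^ 2 / 2) (min 1 (γ' * p ^ 3 / (8 * C))))
    (hNr2 : 2 ≤ Nr) (hNrδ : 1 ≤ δ * Nr) (hk1 : 1 ≤ kk)
    (hx0 : 0 ≤ e1) (hx : e1 ≤ δ * Nr) (hy0 : 0 ≤ e2) (hy : e2 ≤ δ * Nr ^ 2)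
    (hT : D * (p ^ 2 * Nr - e1) ≤ T)
    (hkey : 2 * T = 2 * TR + 2 * TB + 6 * M)
    (hMono : TR + TB ≤ D * (kk - 1))
    (hM : M ≤ p * (Q / 4) + Nr * e2)
    (hQ : Q ≤ Nr ^ 2 * (p ^ 2 * Nr + e1) + (p * Nr ^ 2 + 2 * e2))
    (hD1 : p * Nr ^ 2 - 2 * e2 ≤ D) (hD2 : D ≤ p * Nr ^ 2 + 2 * e2) :
    p ^ 2 ≤ (1 + γ) * (4 * kk / Nr) := by
  have hγ' : 0 < γ' := by rw [hγ'def]; exact lt_min hγ one_pos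
  have hγ'1 : γ' ≤ 1 := by rw [hγ'def]; exact min_le_right _ _
  have hγ'γ : γ' ≤ γ := by rw [hγ'def]; exact min_le_left _ _
  have hC : 0 < C := by rw [hCdef]; positivity
  have hδ : 0 < δ := by
    rw [hδdef]; exact lt_min (by positivity) (lt_min one_pos (by positivity))
  have hδ1 : δ ≤ p ^ 2 / 2 := by rw [hδdef]; exact min_le_left _ _
  have hδ3 : δ ≤ γ' * p ^ 3 / (8 * C) := by
    rw [hδdef]; exact le_trans (min_le_right _ _) (min_le_right _ _)
  have hNrpos : (0 : ℝ) < Nr := by linarith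
  have hfac : 0 ≤ p ^ 2 * Nr - e1 := by nlinarith [hx, hδ1, hNrpos.le]
  have master : 2 * ((p * Nr ^ 2 - 2 * e2) * (p ^ 2 * Nr - e1))
      ≤ 2 * ((p * Nr ^ 2 + 2 * e2) * (kk - 1))
        + (3 * p / 2) * (Nr ^ 2 * (p ^ 2 * Nr + e1) + (p * Nr ^ 2 + 2 * e2))
        + 6 * (Nr * e2) := by
    have l1 : (p * Nr ^ 2 - 2 * e2) * (p ^ 2 * Nr - e1) ≤ D * (p ^ 2 * Nr - e1) :=
      mul_le_mul_of_nonneg_right hD1 hfac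
    have l4 : D * (kk - 1) ≤ (p * Nr ^ 2 + 2 * e2) * (kk - 1) :=
      mul_le_mul_of_nonneg_right hD2 (by linarith)
    have l5 : p * Q ≤ p * (Nr ^ 2 * (p ^ 2 * Nr + e1) + (p * Nr ^ 2 + 2 * e2)) :=
      mul_le_mul_of_nonneg_left hQ hp.le
    linarith [hT, hkey, hMono, hM, l1, l4, l5]
  have hbig : (1 / 2) * (p ^ 3 * Nr ^ 3) ≤ 2 * kk * p * Nr ^ 2
      + (7 * p / 2) * Nr ^ 2 * e1
      + (4 * p ^ 2 * Nr + 4 * kk + 3 * p + 6 * Nr) * e2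
      + (3 / 2) * p ^ 2 * Nr ^ 2 := by
    have h1 : 0 ≤ e1 * e2 := mul_nonneg hx0 hy0
    have h2 : 0 ≤ p * Nr ^ 2 := by positivity
    nlinarith [master, h1, h2, hy0]
  by_cases hbr : p ^ 2 * Nr ≤ 4 * kk
  · have h4k : (0 : ℝ) ≤ 4 * kk / Nr := by positivity
    rw [show (1 + γ) * (4 * kk / Nr) = 4 * kk / Nr + γ * (4 * kk / Nr) by ring]
    have hle : p ^ 2 ≤ 4 * kk / Nr := by
      rw [le_div_iff₀ hNrpos]; linarith
    nlinarith [mul_nonneg hγ.le h4k]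
  · push_neg at hbr
    have herrbd : (7 * p / 2) * Nr ^ 2 * e1
        + (4 * p ^ 2 * Nr + 4 * kk + 3 * p + 6 * Nr) * e2
        + (3 / 2) * p ^ 2 * Nr ^ 2 ≤ (γ' / 8) * (p ^ 3 * Nr ^ 3) := by
      have b1 : (7 * p / 2) * Nr ^ 2 * e1 ≤ (7 * p / 2) * δ * Nr ^ 3 := by
        have := mul_le_mul_of_nonneg_left hx (show (0:ℝ) ≤ 7 * p / 2 * Nr ^ 2 by positivity)
        nlinarith [this]
      have b2 : (4 * p ^ 2 * Nr) * e2 ≤ 4 * p ^ 2 * δ * Nr ^ 3 := by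
        have := mul_le_mul_of_nonneg_left hy (show (0:ℝ) ≤ 4 * p ^ 2 * Nr by positivity)
        nlinarith [this]
      have b3 : (4 * kk) * e2 ≤ p ^ 2 * δ * Nr ^ 3 := by
        have i1 : (4 * kk) * e2 ≤ (p ^ 2 * Nr) * e2 := mul_le_mul_of_nonneg_right hbr.le hy0
        have i2 := mul_le_mul_of_nonneg_left hy (show (0:ℝ) ≤ p ^ 2 * Nr by positivity)
        nlinarith [i1, i2]
      have b4 : (3 * p) * e2 ≤ 3 * p * δ * Nr ^ 3 := by
        have i1 := mul_le_mul_of_nonneg_left hy (show (0:ℝ) ≤ 3 * p by positivity)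
        have i2 : Nr ^ 2 ≤ Nr ^ 3 := by nlinarith [hNrpos.le]
        have i3 := mul_le_mul_of_nonneg_left i2 (show (0:ℝ) ≤ 3 * p * δ by positivity)
        nlinarith [i1, i3]
      have b5 : (6 * Nr) * e2 ≤ 6 * δ * Nr ^ 3 := by
        have := mul_le_mul_of_nonneg_left hy (show (0:ℝ) ≤ 6 * Nr by positivity)
        nlinarith [this]
      have b6 : (3 / 2) * p ^ 2 * Nr ^ 2 ≤ (3 / 2) * p ^ 2 * δ * Nr ^ 3 := by
        have := mul_le_mul_of_nonneg_left hNrδ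
          (show (0:ℝ) ≤ (3 / 2) * p ^ 2 * Nr ^ 2 by positivity)
        nlinarith [this]
      have hCge : (7 * p / 2) + 4 * p ^ 2 + p ^ 2 + 3 * p + 6 + (3 / 2) * p ^ 2 ≤ C := by
        rw [hCdef]; nlinarith [hp.le]
      have btot : (7 * p / 2) * Nr ^ 2 * e1
          + (4 * p ^ 2 * Nr + 4 * kk + 3 * p + 6 * Nr) * e2
          + (3 / 2) * p ^ 2 * Nr ^ 2 ≤ δ * C * Nr ^ 3 := by
        have hd3 : 0 ≤ δ * Nr ^ 3 := by positivity
        nlinarith [b1, b2, b3, b4, b5, b6, mul_le_mul_of_nonneg_right hCge hd3]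
      have hδC : δ * C ≤ γ' * p ^ 3 / 8 := by
        have h8 : (0:ℝ) < 8 * C := by positivity
        rw [le_div_iff₀ h8] at hδ3
        rw [le_div_iff₀ (by norm_num : (0:ℝ) < 8)]
        linarith [hδ3]
      calc (7 * p / 2) * Nr ^ 2 * e1
          + (4 * p ^ 2 * Nr + 4 * kk + 3 * p + 6 * Nr) * e2
          + (3 / 2) * p ^ 2 * Nr ^ 2 ≤ δ * C * Nr ^ 3 := btot
        _ ≤ (γ' * p ^ 3 / 8) * Nr ^ 3 :=
            mul_le_mul_of_nonneg_right hδC (by positivity)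
        _ = (γ' / 8) * (p ^ 3 * Nr ^ 3) := by ring
    have step1 : (1 / 2 - γ' / 8) * (p ^ 3 * Nr ^ 3) ≤ 2 * kk * p * Nr ^ 2 := by
      linarith
    have hc2 : (0 : ℝ) < p * Nr ^ 2 / 2 := by positivity
    have step2 : p ^ 2 * Nr * (1 - γ' / 4) ≤ 4 * kk := by
      have e1' : (1 / 2 - γ' / 8) * (p ^ 3 * Nr ^ 3)
          = (p ^ 2 * Nr * (1 - γ' / 4)) * (p * Nr ^ 2 / 2) := by ring
      have e2' : 2 * kk * p * Nr ^ 2 = (4 * kk) * (p * Nr ^ 2 / 2) := by ring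
      rw [e1', e2'] at step1
      exact le_of_mul_le_mul_right step1 hc2
    have hk0 : (0 : ℝ) ≤ kk := by linarith
    have hp2N : (0 : ℝ) ≤ p ^ 2 * Nr := by positivity
    have step3 : p ^ 2 * Nr ≤ (16 / 3) * kk := by
      nlinarith [step2, mul_nonneg hp2N (by linarith : (0:ℝ) ≤ 1 - γ')]
    have s6 : γ' * (p ^ 2 * Nr) ≤ γ' * ((16 / 3) * kk) :=
      mul_le_mul_of_nonneg_left step3 hγ'.le
    have s7 : γ' * kk ≤ γ * kk := mul_le_mul_of_nonneg_right hγ'γ hk0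
    have step4 : p ^ 2 * Nr ≤ (1 + γ) * (4 * kk) := by nlinarith [step2, s6, s7]
    rw [show (1 + γ) * (4 * kk / Nr) = ((1 + γ) * (4 * kk)) / Nr by ring,
      le_div_iff₀ hNrpos]
    linarith [step4]


end BookAux

open BookAux in
/-- Core computation of Lemma 3.2. -/
theorem book_density_bound (p : ℝ) (N : ℕ → ℕ) (hN : Tendsto N atTop atTop)
    (G R B : ∀ n : ℕ, SimpleGraph (Fin (N n)))
    (hRB : ∀ n, R n ⊔ B n = G n)
    (hdisj : ∀ n, ∀ u v : Fin (N n), (R n).Adj u v → ¬ (B n).Adj u v)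
    (err1 err2 : ℕ → ℝ)
    (herr1 : Tendsto (fun n => err1 n / (N n : ℝ)) atTop (nhds 0))
    (herr2 : Tendsto (fun n => err2 n / ((N n : ℝ)) ^ 2) atTop (nhds 0))
    (hedge : ∀ n, |((G n).edgeSet.ncard : ℝ) - p * ((N n : ℝ)) ^ 2 / 2| ≤ err2 n)
    (hcommon : ∀ n, ∀ u v : Fin (N n), u ≠ v →
      |(((G n).neighborSet u ∩ (G n).neighborSet v).ncard : ℝ) - p ^ 2 * (N n : ℝ)| ≤ err1 n)
    (hmixed : ∀ n, ∀ v : Fin (N n),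
      |(({q : Fin (N n) × Fin (N n) | q.1 ∈ (R n).neighborSet v ∧ q.2 ∈ (B n).neighborSet v ∧
          (G n).Adj q.1 q.2}.ncard : ℝ)) -
        p * (((R n).neighborSet v).ncard : ℝ) * (((B n).neighborSet v).ncard : ℝ)| ≤ err2 n)
    (hnored : ∀ n, ¬ ∃ (u v : Fin (N n)) (S : Finset (Fin (N n))),
      (R n).Adj u v ∧ u ∉ S ∧ v ∉ S ∧ S.card = n ∧ ∀ w ∈ S, (R n).Adj u w ∧ (R n).Adj v w)
    (hnoblue : ∀ n, ¬ ∃ (u v : Fin (N n)) (S : Finset (Fin (N n))),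
      (B n).Adj u v ∧ u ∉ S ∧ v ∉ S ∧ S.card = n ∧ ∀ w ∈ S, (B n).Adj u w ∧ (B n).Adj v w) :
    ∀ γ > (0 : ℝ), ∀ᶠ n : ℕ in atTop, p ^ 2 ≤ (1 + γ) * (4 * (n : ℝ) / (N n : ℝ)) := by
  intro γ hγ
  rcases lt_trichotomy p 0 with hp | hp | hp
  · -- p < 0 : contradiction with nonnegativity of edge count
    exfalso
    have h1 : ∀ᶠ k in atTop, err2 k / (N k : ℝ) ^ 2 < -p / 4 :=
      herr2.eventually_lt_const (by linarith)
    have h2 : ∀ᶠ k in atTop, 1 ≤ N k := hN.eventually_ge_atTop 1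
    obtain ⟨k, hk1, hk2⟩ := (h1.and h2).exists
    have hNpos : (0 : ℝ) < (N k : ℝ) ^ 2 := by
      have : (1 : ℝ) ≤ (N k : ℝ) := by exact_mod_cast hk2
      positivity
    have hE := abs_le.mp (hedge k)
    have hE0 : (0 : ℝ) ≤ ((G k).edgeSet.ncard : ℝ) := Nat.cast_nonneg _
    have hk1' : err2 k < (-p / 4) * (N k : ℝ) ^ 2 := by
      rwa [div_lt_iff₀ hNpos] at hk1
    nlinarith [hE.2]
  · -- p = 0
    subst hp
    have h2 : ∀ᶠ k in atTop, 1 ≤ N k := hN.eventually_ge_atTop 1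
    filter_upwards [h2] with k hk
    have hNpos : (0 : ℝ) < (N k : ℝ) := by exact_mod_cast hk
    have : (0 : ℝ) ≤ (1 + γ) * (4 * (k : ℝ) / (N k : ℝ)) := by positivity
    simpa using this
  · -- main case p > 0
    set γ' : ℝ := min γ 1 with hγ'def
    have hγ' : 0 < γ' := lt_min hγ one_pos
    have hγ'1 : γ' ≤ 1 := min_le_right _ _
    have hγ'γ : γ' ≤ γ := min_le_left _ _
    set C : ℝ := 7 * p ^ 2 + 7 * p + 7 with hCdef
    have hC : 0 < C := by positivity
    set δ : ℝ := min (p ^ 2 / 2) (min 1 (γ' * p ^ 3 / (8 * C))) with hδdef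
    have hδ : 0 < δ := by
      refine lt_min (by positivity) (lt_min one_pos (by positivity))
    have hδ1 : δ ≤ p ^ 2 / 2 := min_le_left _ _
    have hδ3 : δ ≤ γ' * p ^ 3 / (8 * C) := le_trans (min_le_right _ _) (min_le_right _ _)
    have ev1 : ∀ᶠ k in atTop, |err1 k / (N k : ℝ)| < δ := by
      have h := herr1.abs
      rw [abs_zero] at h
      exact h.eventually_lt_const hδ
    have ev2 : ∀ᶠ k in atTop, |err2 k / (N k : ℝ) ^ 2| < δ := by
      have h := herr2.abs
      rw [abs_zero] at h
      exact h.eventually_lt_const hδ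
    have ev3 : ∀ᶠ k in atTop, 2 ≤ N k := hN.eventually_ge_atTop 2
    have ev4 : ∀ᶠ k in atTop, ⌈1 / δ⌉₊ ≤ N k := hN.eventually_ge_atTop _
    have ev5 : ∀ᶠ k in atTop, 1 ≤ k := eventually_ge_atTop 1
    filter_upwards [ev1, ev2, ev3, ev4, ev5] with k h1 h2 h3 h4 h5
    -- notation
    set Nr : ℝ := (N k : ℝ) with hNrdef
    have hNr2 : (2 : ℝ) ≤ Nr := by rw [hNrdef]; exact_mod_cast h3
    have hNrpos : (0 : ℝ) < Nr := by linarith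
    have hNrδ : 1 ≤ δ * Nr := by
      have hle : (1 / δ : ℝ) ≤ (⌈1 / δ⌉₊ : ℝ) := Nat.le_ceil _
      have h4' : ((⌈1 / δ⌉₊ : ℕ) : ℝ) ≤ Nr := by rw [hNrdef]; exact_mod_cast h4
      have : 1 / δ ≤ Nr := le_trans hle h4'
      rw [div_le_iff₀ hδ] at this
      linarith [this]
    have hx0 : 0 ≤ err1 k := by
      have hne : (⟨0, by omega⟩ : Fin (N k)) ≠ ⟨1, by omega⟩ := by
        simp [Fin.ext_iff]
      exact le_trans (abs_nonneg _) (hcommon k _ _ hne)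
    have hy0 : 0 ≤ err2 k := le_trans (abs_nonneg _) (hedge k)
    have hx : err1 k ≤ δ * Nr := by
      have := (abs_lt.mp h1).2
      rw [div_lt_iff₀ hNrpos] at this
      linarith
    have hy : err2 k ≤ δ * Nr ^ 2 := by
      have := (abs_lt.mp h2).2
      have hN2 : (0 : ℝ) < Nr ^ 2 := by positivity
      rw [div_lt_iff₀ hN2] at this
      linarith
    -- counting quantities
    set Gk := G k
    set Rk := R k
    set Bk := B k
    set D : ℕ := ∑ v, Gk.degree v with hDdef
    set DR : ℕ := ∑ v, Rk.degree v with hDRdef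
    set DB : ℕ := ∑ v, Bk.degree v with hDBdef
    set Qn : ℕ := ∑ v, (Gk.degree v) ^ 2 with hQdef
    set T : ℕ := (tri Gk).card with hTdef
    set TR : ℕ := (tri Rk).card with hTRdef
    set TB : ℕ := (tri Bk).card with hTBdef
    set M : ℕ := (mix Gk Rk Bk).card with hMdef
    -- lower bound for triangles
    have hT : (D : ℝ) * (p ^ 2 * Nr - err1 k) ≤ (T : ℝ) := by
      have hTsum : (T : ℝ) = ∑ u, ∑ w, if Gk.Adj u w then (codeg Gk u w : ℝ) else 0 := by
        rw [hTdef, tri_card]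
        push_cast
        rfl
      rw [hTsum, ← sum_ite_adj_real Gk (p ^ 2 * Nr - err1 k)]
      refine Finset.sum_le_sum fun u _ => Finset.sum_le_sum fun w _ => ?_
      by_cases h : Gk.Adj u w
      · simp only [h, if_true]
        have hcc := hcommon k u w h.ne
        rw [ncard_common] at hcc
        linarith [(abs_le.mp hcc).1]
      · simp [h]
    -- edge count bounds
    have hDedge : D = 2 * Gk.edgeFinset.card := SimpleGraph.sum_degrees_eq_twice_card_edges Gk
    have hEedge : |(Gk.edgeFinset.card : ℝ) - p * Nr ^ 2 / 2| ≤ err2 k := by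
      have := hedge k
      rwa [ncard_edge] at this
    have hD1 : p * Nr ^ 2 - 2 * err2 k ≤ (D : ℝ) := by
      have h := (abs_le.mp hEedge).1
      have : (D : ℝ) = 2 * (Gk.edgeFinset.card : ℝ) := by exact_mod_cast congrArg (Nat.cast (R := ℝ)) hDedge
      linarith
    have hD2 : (D : ℝ) ≤ p * Nr ^ 2 + 2 * err2 k := by
      have h := (abs_le.mp hEedge).2
      have : (D : ℝ) = 2 * (Gk.edgeFinset.card : ℝ) := by exact_mod_cast congrArg (Nat.cast (R := ℝ)) hDedge
      linarith
    -- monochromatic bound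
    have hTRn : TR ≤ DR * (k - 1) := by
      rw [hTRdef, tri_card, ← sum_ite_adj_nat Rk (k - 1)]
      refine Finset.sum_le_sum fun u _ => Finset.sum_le_sum fun w _ => ?_
      by_cases h : Rk.Adj u w
      · simp only [h, if_true]
        exact codeg_le_of_no_book Rk k (hnored k) h
      · simp [h]
    have hTBn : TB ≤ DB * (k - 1) := by
      rw [hTBdef, tri_card, ← sum_ite_adj_nat Bk (k - 1)]
      refine Finset.sum_le_sum fun u _ => Finset.sum_le_sum fun w _ => ?_
      by_cases h : Bk.Adj u w
      · simp only [h, if_true]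
        exact codeg_le_of_no_book Bk k (hnoblue k) h
      · simp [h]
    have hDsplit : D = DR + DB := by
      rw [hDdef, hDRdef, hDBdef, ← Finset.sum_add_distrib]
      exact Finset.sum_congr rfl fun v _ => deg_split Gk Rk Bk (hRB k) (hdisj k) v
    have hMono : (TR : ℝ) + (TB : ℝ) ≤ (D : ℝ) * ((k : ℝ) - 1) := by
      have hn : TR + TB ≤ D * (k - 1) := by
        rw [hDsplit, add_mul]
        exact Nat.add_le_add hTRn hTBn
      have := (Nat.cast_le (α := ℝ)).mpr hn
      push_cast [Nat.cast_sub h5] at this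
      push_cast
      linarith
    -- mixed bound
    have hQcast : (Qn : ℝ) = ∑ v, ((Gk.degree v : ℝ)) ^ 2 := by
      rw [hQdef]; push_cast; rfl
    have hM : (M : ℝ) ≤ p * ((Qn : ℝ) / 4) + Nr * err2 k := by
      have hMsum : (M : ℝ) = ∑ c, ((univ.filter fun q : Fin (N k) × Fin (N k) =>
          Rk.Adj c q.1 ∧ Bk.Adj c q.2 ∧ Gk.Adj q.1 q.2).card : ℝ) := by
        rw [hMdef, mix_card]; push_cast; rfl
      rw [hMsum]
      have step1 : ∀ c, ((univ.filter fun q : Fin (N k) × Fin (N k) =>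
          Rk.Adj c q.1 ∧ Bk.Adj c q.2 ∧ Gk.Adj q.1 q.2).card : ℝ)
          ≤ p * ((Gk.degree c : ℝ)) ^ 2 / 4 + err2 k := by
        intro c
        have hm := hmixed k c
        rw [ncard_mix Gk Rk Bk c, ncard_nbhd, ncard_nbhd] at hm
        have h2' := (abs_le.mp hm).2
        have hds := deg_split Gk Rk Bk (hRB k) (hdisj k) c
        have hds' : (Rk.degree c : ℝ) + (Bk.degree c : ℝ) = (Gk.degree c : ℝ) := by
          exact_mod_cast hds.symm
        have hsq : (Rk.degree c : ℝ) * (Bk.degree c : ℝ) ≤ ((Gk.degree c : ℝ)) ^ 2 / 4 := by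
          nlinarith [sq_nonneg ((Rk.degree c : ℝ) - (Bk.degree c : ℝ))]
        have hprod := mul_le_mul_of_nonneg_left hsq hp.le
        linarith
      calc ∑ c, ((univ.filter fun q : Fin (N k) × Fin (N k) =>
              Rk.Adj c q.1 ∧ Bk.Adj c q.2 ∧ Gk.Adj q.1 q.2).card : ℝ)
          ≤ ∑ c, (p * ((Gk.degree c : ℝ)) ^ 2 / 4 + err2 k) :=
            Finset.sum_le_sum fun c _ => step1 c
        _ = p * ((Qn : ℝ) / 4) + Nr * err2 k := by
            rw [Finset.sum_add_distrib, Finset.sum_const, card_univ, Fintype.card_fin,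
              hQcast, ← Finset.sum_div, ← Finset.mul_sum]
            push_cast
            ring
    -- sum of squared degrees bound
    have hQ : (Qn : ℝ) ≤ Nr ^ 2 * (p ^ 2 * Nr + err1 k) + (p * Nr ^ 2 + 2 * err2 k) := by
      have hQsum : (Qn : ℝ) = ∑ a, ∑ b, (codeg Gk a b : ℝ) := by
        rw [hQdef, sum_deg_sq]
        push_cast
        rfl
      have hcodegbd : ∀ a : Fin (N k),
          ∑ b ∈ univ.erase a, (codeg Gk a b : ℝ) ≤ (Nr - 1) * (p ^ 2 * Nr + err1 k) := by
        intro a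
        have hcard : ((univ.erase a).card : ℝ) = Nr - 1 := by
          rw [Finset.card_erase_of_mem (mem_univ a), Finset.card_univ, Fintype.card_fin]
          push_cast [Nat.cast_sub (by omega : 1 ≤ N k)]
          ring
        calc ∑ b ∈ univ.erase a, (codeg Gk a b : ℝ)
            ≤ ∑ b ∈ univ.erase a, (p ^ 2 * Nr + err1 k) := by
              refine Finset.sum_le_sum fun b hb => ?_
              have hba : a ≠ b := (Finset.ne_of_mem_erase hb).symm
              have hcc := hcommon k a b hba
              rw [ncard_common] at hcc
              linarith [(abs_le.mp hcc).2]
          _ = (Nr - 1) * (p ^ 2 * Nr + err1 k) := by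
              rw [Finset.sum_const, nsmul_eq_mul, hcard]
      have hsplit : (Qn : ℝ) = ∑ a, ((Gk.degree a : ℝ) + ∑ b ∈ univ.erase a, (codeg Gk a b : ℝ)) := by
        rw [hQsum]
        refine Finset.sum_congr rfl fun a _ => ?_
        rw [← Finset.add_sum_erase _ _ (mem_univ a), codeg_self]
      have hDcast : (∑ a, ((Gk.degree a : ℝ))) = (D : ℝ) := by
        rw [hDdef]; push_cast; rfl
      have hNrfac : 0 ≤ p ^ 2 * Nr + err1 k := by positivity
      calc (Qn : ℝ) = ∑ a, ((Gk.degree a : ℝ)) + ∑ a : Fin (N k), ∑ b ∈ univ.erase a, (codeg Gk a b : ℝ) := by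
              rw [hsplit, Finset.sum_add_distrib]
        _ ≤ (D : ℝ) + ∑ a : Fin (N k), (Nr - 1) * (p ^ 2 * Nr + err1 k) := by
              rw [hDcast]
              exact add_le_add le_rfl (Finset.sum_le_sum fun a _ => hcodegbd a)
        _ = (D : ℝ) + Nr * ((Nr - 1) * (p ^ 2 * Nr + err1 k)) := by
              rw [Finset.sum_const, card_univ, Fintype.card_fin, nsmul_eq_mul]
        _ ≤ Nr ^ 2 * (p ^ 2 * Nr + err1 k) + (p * Nr ^ 2 + 2 * err2 k) := by
              nlinarith [hD2, hNrfac, hNrpos]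
    -- the key combinatorial identity
    have hkey : 2 * T = 2 * TR + 2 * TB + 6 * M :=
      tri_split Gk Rk Bk (hRB k) (hdisj k)
    have hkeyR : 2 * (T : ℝ) = 2 * (TR : ℝ) + 2 * (TB : ℝ) + 6 * (M : ℝ) := by
      exact_mod_cast congrArg (Nat.cast (R := ℝ)) hkey
    have hk1R : (1 : ℝ) ≤ (k : ℝ) := by exact_mod_cast h5
    exact endgame p γ γ' C δ Nr (k : ℝ) (err1 k) (err2 k)
      (T : ℝ) (TR : ℝ) (TB : ℝ) (M : ℝ) (D : ℝ) (Qn : ℝ)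
      hp hγ hγ'def hCdef hδdef hNr2 hNrδ hk1R hx0 hx hy0 hy
      hT hkeyR hMono hM hQ hD1 hD2
end

section
/- Let c > 1, γ ∈ (0, √c − 1], and p = (1+γ)/√c. Let G be a graph of order N = ⌊4cn⌋ satisfying: for every vertex v and set U, deg(v,U) = p|U| + o(N); every two distinct vertices have p²N + o(N) common neighbors; e(U) = p·C(|U|,2) + o(N²) for all U; and e(U,W) = p|U||W| + o(N²) for all disjoint U, W. Then for all sufficiently large n, every red/blue edge-coloring of G contains a monochromatic copy of the book B_n^{(2)}. -/
set_option linter.unusedSectionVars false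
set_option maxHeartbeats 1000000

open Filter Finset

open Filter Finset

section helpers
variable {V : Type*} [Fintype V] [DecidableEq V]

private lemma pair_count_eq_two_mul (G : SimpleGraph V) [DecidableRel G.Adj] (U : Finset V) :
    (Finset.univ.filter fun q : V × V => q.1 ∈ U ∧ q.2 ∈ U ∧ G.Adj q.1 q.2).card
      = 2 * {e ∈ G.edgeSet | ∀ x ∈ e, x ∈ (U : Set V)}.ncard := by
  classical
  let H : SimpleGraph V :=
    { Adj := fun a b => a ∈ U ∧ b ∈ U ∧ G.Adj a b
      symm := ⟨fun a b h => ⟨h.2.1, h.1, h.2.2.symm⟩⟩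
      loopless := ⟨fun a h => G.irrefl h.2.2⟩ }
  letI : DecidableRel H.Adj := fun a b =>
    inferInstanceAs (Decidable (a ∈ U ∧ b ∈ U ∧ G.Adj a b))
  have hset : {e ∈ G.edgeSet | ∀ x ∈ e, x ∈ (U : Set V)} = H.edgeSet := by
    ext e
    refine Sym2.inductionOn e fun a b => ?_
    simp only [Set.mem_setOf_eq, SimpleGraph.mem_edgeSet, Sym2.mem_iff]
    constructor
    · rintro ⟨hadj, hmem⟩
      exact ⟨hmem a (Or.inl rfl), hmem b (Or.inr rfl), hadj⟩
    · rintro ⟨ha, hb, hadj⟩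
      refine ⟨hadj, ?_⟩
      rintro x (rfl | rfl) <;> assumption
  rw [hset]
  have h2 : H.edgeSet.ncard = H.edgeFinset.card := by
    rw [SimpleGraph.edgeFinset]
    exact Set.ncard_eq_toFinset_card' _
  have hfil : (Finset.univ.filter fun q : V × V => q.1 ∈ U ∧ q.2 ∈ U ∧ G.Adj q.1 q.2)
      = Finset.univ.filter (fun (x, y) => H.Adj x y) := by
    ext q
    cases q
    simp [Finset.mem_filter, H]
  refine Eq.trans (congrArg Finset.card hfil) ?_
  rw [h2, ← SimpleGraph.two_mul_card_edgeFinset]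

private def tcount (x y z : SimpleGraph V) [DecidableRel x.Adj] [DecidableRel y.Adj]
    [DecidableRel z.Adj] : ℕ :=
  (Finset.univ.filter fun t : V × V × V =>
    x.Adj t.2.1 t.2.2 ∧ y.Adj t.1 t.2.1 ∧ z.Adj t.1 t.2.2).card

variable (x y z R B G : SimpleGraph V) [DecidableRel x.Adj] [DecidableRel y.Adj]
    [DecidableRel z.Adj] [DecidableRel R.Adj] [DecidableRel B.Adj] [DecidableRel G.Adj]

private lemma tcount_swap1 : tcount x y z = tcount z y x := by
  refine Finset.card_nbij' (fun t => (t.2.1, t.1, t.2.2)) (fun t => (t.2.1, t.1, t.2.2)) ?_ ?_ ?_ ?_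
  · intro t ht
    simp only [mem_coe, mem_filter, mem_univ, true_and] at *
    exact ⟨ht.2.2, ht.2.1.symm, ht.1⟩
  · intro t ht
    simp only [mem_coe, mem_filter, mem_univ, true_and] at *
    exact ⟨ht.2.2, ht.2.1.symm, ht.1⟩
  · intro t _; rfl
  · intro t _; rfl

private lemma tcount_swap2 : tcount x y z = tcount x z y := by
  refine Finset.card_nbij' (fun t => (t.1, t.2.2, t.2.1)) (fun t => (t.1, t.2.2, t.2.1)) ?_ ?_ ?_ ?_
  · intro t ht
    simp only [mem_coe, mem_filter, mem_univ, true_and] at *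
    exact ⟨ht.1.symm, ht.2.2, ht.2.1⟩
  · intro t ht
    simp only [mem_coe, mem_filter, mem_univ, true_and] at *
    exact ⟨ht.1.symm, ht.2.2, ht.2.1⟩
  · intro t _; rfl
  · intro t _; rfl

private lemma tcount_splitX (hsup : R ⊔ B = G) (hd : ∀ u v, R.Adj u v → ¬ B.Adj u v) :
    tcount G y z = tcount R y z + tcount B y z := by
  unfold tcount
  rw [Finset.card_filter, Finset.card_filter, Finset.card_filter, ← Finset.sum_add_distrib]
  refine Finset.sum_congr rfl fun t _ => ?_
  have hiff : G.Adj t.2.1 t.2.2 ↔ R.Adj t.2.1 t.2.2 ∨ B.Adj t.2.1 t.2.2 := by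
    rw [← hsup]; simp
  have hnot := hd t.2.1 t.2.2
  by_cases h1 : R.Adj t.2.1 t.2.2 <;> by_cases h2 : B.Adj t.2.1 t.2.2 <;>
    by_cases h3 : y.Adj t.1 t.2.1 <;> by_cases h4 : z.Adj t.1 t.2.2 <;> simp_all

private lemma tcount_splitY (hsup : R ⊔ B = G) (hd : ∀ u v, R.Adj u v → ¬ B.Adj u v) :
    tcount x G z = tcount x R z + tcount x B z := by
  unfold tcount
  rw [Finset.card_filter, Finset.card_filter, Finset.card_filter, ← Finset.sum_add_distrib]
  refine Finset.sum_congr rfl fun t _ => ?_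
  have hiff : G.Adj t.1 t.2.1 ↔ R.Adj t.1 t.2.1 ∨ B.Adj t.1 t.2.1 := by
    rw [← hsup]; simp
  have hnot := hd t.1 t.2.1
  by_cases h1 : R.Adj t.1 t.2.1 <;> by_cases h2 : B.Adj t.1 t.2.1 <;>
    by_cases h3 : x.Adj t.2.1 t.2.2 <;> by_cases h4 : z.Adj t.1 t.2.2 <;> simp_all

private lemma tcount_splitZ (hsup : R ⊔ B = G) (hd : ∀ u v, R.Adj u v → ¬ B.Adj u v) :
    tcount x y G = tcount x y R + tcount x y B := by
  unfold tcount
  rw [Finset.card_filter, Finset.card_filter, Finset.card_filter, ← Finset.sum_add_distrib]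
  refine Finset.sum_congr rfl fun t _ => ?_
  have hiff : G.Adj t.1 t.2.2 ↔ R.Adj t.1 t.2.2 ∨ B.Adj t.1 t.2.2 := by
    rw [← hsup]; simp
  have hnot := hd t.1 t.2.2
  by_cases h1 : R.Adj t.1 t.2.2 <;> by_cases h2 : B.Adj t.1 t.2.2 <;>
    by_cases h3 : x.Adj t.2.1 t.2.2 <;> by_cases h4 : y.Adj t.1 t.2.1 <;> simp_all

private lemma tcount_eq_sum :
    tcount x y y = ∑ w : V, (Finset.univ.filter fun q : V × V =>
      q.1 ∈ y.neighborFinset w ∧ q.2 ∈ y.neighborFinset w ∧ x.Adj q.1 q.2).card := by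
  unfold tcount
  rw [Finset.card_filter, Fintype.sum_prod_type]
  refine Finset.sum_congr rfl fun w _ => ?_
  rw [Finset.card_filter]
  refine Finset.sum_congr rfl fun q _ => ?_
  simp only [SimpleGraph.mem_neighborFinset]
  exact if_congr (by tauto) rfl rfl

end helpers


section h2
variable {V : Type*} [Fintype V] [DecidableEq V]

private lemma tcount_le_of_small (c' : SimpleGraph V) [DecidableRel c'.Adj] (m : ℕ)
    (h : ∀ u v, c'.Adj u v →
      (Finset.univ.filter fun w => c'.Adj w u ∧ c'.Adj w v).card ≤ m) :
    tcount c' c' c' ≤ m * (Finset.univ.filter fun q : V × V => c'.Adj q.1 q.2).card := by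
  unfold tcount
  rw [Finset.card_filter, Fintype.sum_prod_type, Finset.sum_comm, Finset.card_filter,
    Finset.mul_sum]
  refine Finset.sum_le_sum fun q _ => ?_
  by_cases hq : c'.Adj q.1 q.2
  · have hrw : (∑ w : V, if c'.Adj q.1 q.2 ∧ c'.Adj w q.1 ∧ c'.Adj w q.2 then 1 else 0)
        = (Finset.univ.filter fun w => c'.Adj w q.1 ∧ c'.Adj w q.2).card := by
      rw [Finset.card_filter]
      exact Finset.sum_congr rfl fun w _ => by simp [hq]
    rw [hrw]
    simpa [hq] using h q.1 q.2 hq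
  · simp [hq]

end h2

private lemma final_ineq (c γ p n Nr e1 e2 : ℝ) (hc : 1 < c) (hγ0 : 0 < γ)
    (hp0 : 0 < p) (hp1 : p ≤ 1)
    (hpc : p ^ 2 * (4 * c) = 4 * (1 + γ) ^ 2)
    (hn1 : 1 ≤ n) (hγn : 2 ≤ γ * n)
    (hNl : 4 * c * n - 1 ≤ Nr) (hNu : Nr ≤ 4 * c * n)
    (he10 : 0 ≤ e1) (he20 : 0 ≤ e2)
    (he1 : e1 ≤ p * γ / (24 * c) * Nr) (he2 : e2 ≤ p * γ / (224 * c) * Nr ^ 2) :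
    2 * n * (p * Nr ^ 2 + Nr * e1) < p ^ 3 * Nr ^ 3 / 2 - p ^ 2 * Nr ^ 2 * e1
      - 2 * p * Nr ^ 2 - 14 * Nr * e2 := by
  have hn0 : 0 < n := by linarith
  have hNr3 : (3 : ℝ) ≤ Nr := by nlinarith
  have hNr0 : (0 : ℝ) < Nr := by linarith
  have hc0 : (0 : ℝ) < c := by linarith
  have hS0 : 0 < p * γ * n * Nr ^ 2 := by positivity
  have hkp2N : 4 * (1 + γ) ^ 2 * n - 1 ≤ p ^ 2 * Nr := by
    have h1 : p ^ 2 * (4 * c * n - 1) ≤ p ^ 2 * Nr :=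
      mul_le_mul_of_nonneg_left hNl (by positivity)
    nlinarith [sq_nonneg p]
  have h1 : (7 : ℝ) / 2 * (γ * n) ≤ p ^ 2 * Nr / 2 - 2 * n := by nlinarith
  have hA : (7 : ℝ) / 2 * (p * γ * n * Nr ^ 2) ≤ p ^ 3 * Nr ^ 3 / 2 - 2 * n * (p * Nr ^ 2) := by
    have := mul_le_mul_of_nonneg_left h1 (show (0:ℝ) ≤ p * Nr ^ 2 by positivity)
    nlinarith [this]
  have hcube : Nr ^ 3 ≤ 4 * c * n * Nr ^ 2 := by nlinarith [sq_nonneg Nr]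
  have key : p * γ * Nr ^ 3 ≤ p * γ * (4 * c * n * Nr ^ 2) :=
    mul_le_mul_of_nonneg_left hcube (by positivity)
  have hB1 : p ^ 2 * Nr ^ 2 * e1 ≤ p * γ * n * Nr ^ 2 / 6 := by
    have hp2 : p ^ 2 ≤ 1 := by nlinarith
    have b1a : p ^ 2 * Nr ^ 2 * e1 ≤ Nr ^ 2 * e1 := by
      nlinarith [mul_nonneg (mul_nonneg (by linarith : (0:ℝ) ≤ 1 - p ^ 2) (sq_nonneg Nr)) he10]
    have b1b : Nr ^ 2 * e1 ≤ Nr ^ 2 * (p * γ / (24 * c) * Nr) :=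
      mul_le_mul_of_nonneg_left he1 (sq_nonneg Nr)
    have b1c : Nr ^ 2 * (p * γ / (24 * c) * Nr) ≤ p * γ * n * Nr ^ 2 / 6 := by
      have heq : Nr ^ 2 * (p * γ / (24 * c) * Nr) = p * γ * Nr ^ 3 / (24 * c) := by ring
      rw [heq, div_le_div_iff₀ (by positivity) (by norm_num : (0:ℝ) < 6)]
      nlinarith [key]
    linarith
  have hB2 : 2 * p * Nr ^ 2 ≤ p * γ * n * Nr ^ 2 := by
    nlinarith [mul_pos hp0 (show (0:ℝ) < Nr ^ 2 by positivity)]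
  have hB3 : 14 * Nr * e2 ≤ p * γ * n * Nr ^ 2 / 4 := by
    have b3a : 14 * Nr * e2 ≤ 14 * Nr * (p * γ / (224 * c) * Nr ^ 2) :=
      mul_le_mul_of_nonneg_left he2 (by positivity)
    have b3b : 14 * Nr * (p * γ / (224 * c) * Nr ^ 2) ≤ p * γ * n * Nr ^ 2 / 4 := by
      have heq : 14 * Nr * (p * γ / (224 * c) * Nr ^ 2) = 14 * (p * γ * Nr ^ 3) / (224 * c) := by
        ring
      rw [heq, div_le_div_iff₀ (by positivity) (by norm_num : (0:ℝ) < 4)]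
      nlinarith [key]
    linarith
  have hB4 : 2 * n * Nr * e1 ≤ p * γ * n * Nr ^ 2 / 12 := by
    have b4a : 2 * n * Nr * e1 ≤ 2 * n * Nr * (p * γ / (24 * c) * Nr) :=
      mul_le_mul_of_nonneg_left he1 (by positivity)
    have b4b : 2 * n * Nr * (p * γ / (24 * c) * Nr) ≤ p * γ * n * Nr ^ 2 / 12 := by
      have heq : 2 * n * Nr * (p * γ / (24 * c) * Nr) = 2 * (p * γ * n * Nr ^ 2) / (24 * c) := by
        ring
      rw [heq, div_le_div_iff₀ (by positivity) (by norm_num : (0:ℝ) < 12)]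
      nlinarith [mul_nonneg (by linarith : (0:ℝ) ≤ c - 1) hS0.le]
    linarith
  nlinarith [hA, hB1, hB2, hB3, hB4, hS0]


section core
open Finset
variable {V : Type*} [Fintype V] [DecidableEq V]

private lemma sum_bound (Gn c' : SimpleGraph V) [DecidableRel Gn.Adj] [DecidableRel c'.Adj]
    (p e2 : ℝ) (N : ℕ) (hN : Fintype.card V = N)
    (hkey : ∀ w : V, |((Finset.univ.filter fun q : V × V =>
        q.1 ∈ c'.neighborFinset w ∧ q.2 ∈ c'.neighborFinset w ∧ Gn.Adj q.1 q.2).card : ℝ)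
      - 2 * (p * ((c'.degree w).choose 2 : ℝ))| ≤ 2 * e2) :
    |((tcount Gn c' c' : ℕ) : ℝ) - ∑ w : V, 2 * (p * ((c'.degree w).choose 2 : ℝ))|
      ≤ (N : ℝ) * (2 * e2) := by
  rw [tcount_eq_sum (x := Gn) (y := c')]
  push_cast
  rw [← Finset.sum_sub_distrib]
  refine le_trans (Finset.abs_sum_le_sum_abs _ _) ?_
  refine le_trans (Finset.sum_le_sum fun w _ => hkey w) ?_
  rw [Finset.sum_const, Finset.card_univ, hN]
  exact le_of_eq (nsmul_eq_mul _ _)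

private lemma main_contradiction (Gn R B : SimpleGraph V) [DecidableRel Gn.Adj]
    [DecidableRel R.Adj] [DecidableRel B.Adj]
    (hsup : R ⊔ B = Gn) (hd : ∀ u v, R.Adj u v → ¬ B.Adj u v)
    (p e1 e2 : ℝ) (n N : ℕ) (hN : Fintype.card V = N)
    (hp0 : 0 < p) (he10 : 0 ≤ e1) (he20 : 0 ≤ e2) (herr1p : e1 ≤ p * N)
    (hdeg' : ∀ w : V, |((Gn.degree w : ℕ) : ℝ) - p * N| ≤ e1)
    (hsumR : |((tcount Gn R R : ℕ) : ℝ) - ∑ w : V, 2 * (p * ((R.degree w).choose 2 : ℝ))|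
      ≤ (N : ℝ) * (2 * e2))
    (hsumB : |((tcount Gn B B : ℕ) : ℝ) - ∑ w : V, 2 * (p * ((B.degree w).choose 2 : ℝ))|
      ≤ (N : ℝ) * (2 * e2))
    (hsumG : |((tcount Gn Gn Gn : ℕ) : ℝ) - ∑ w : V, 2 * (p * ((Gn.degree w).choose 2 : ℝ))|
      ≤ (N : ℝ) * (2 * e2))
    (hbookR : ∀ u v : V, R.Adj u v →
      (Finset.univ.filter fun w => R.Adj w u ∧ R.Adj w v).card ≤ n - 1)
    (hbookB : ∀ u v : V, B.Adj u v →
      (Finset.univ.filter fun w => B.Adj w u ∧ B.Adj w v).card ≤ n - 1)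
    (hfin : 2 * n * (p * (N:ℝ) ^ 2 + N * e1) < p ^ 3 * (N:ℝ) ^ 3 / 2 - p ^ 2 * (N:ℝ) ^ 2 * e1
      - 2 * p * (N:ℝ) ^ 2 - 14 * N * e2) : False := by
  classical
  -- the Goodman-type identity
  have t1 : tcount Gn R R = tcount R R R + tcount B R R :=
    tcount_splitX (y := R) (z := R) (R := R) (B := B) (G := Gn) hsup hd
  have t2 : tcount Gn B B = tcount R B B + tcount B B B :=
    tcount_splitX (y := B) (z := B) (R := R) (B := B) (G := Gn) hsup hd
  have t3 : tcount Gn Gn Gn = tcount R Gn Gn + tcount B Gn Gn :=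
    tcount_splitX (y := Gn) (z := Gn) (R := R) (B := B) (G := Gn) hsup hd
  have t4 : tcount R Gn Gn = tcount R R Gn + tcount R B Gn :=
    tcount_splitY (x := R) (z := Gn) (R := R) (B := B) (G := Gn) hsup hd
  have t5 : tcount B Gn Gn = tcount B R Gn + tcount B B Gn :=
    tcount_splitY (x := B) (z := Gn) (R := R) (B := B) (G := Gn) hsup hd
  have t6 : tcount R R Gn = tcount R R R + tcount R R B :=
    tcount_splitZ (x := R) (y := R) (R := R) (B := B) (G := Gn) hsup hd
  have t7 : tcount R B Gn = tcount R B R + tcount R B B :=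
    tcount_splitZ (x := R) (y := B) (R := R) (B := B) (G := Gn) hsup hd
  have t8 : tcount B R Gn = tcount B R R + tcount B R B :=
    tcount_splitZ (x := B) (y := R) (R := R) (B := B) (G := Gn) hsup hd
  have t9 : tcount B B Gn = tcount B B R + tcount B B B :=
    tcount_splitZ (x := B) (y := B) (R := R) (B := B) (G := Gn) hsup hd
  have s1 : tcount R R B = tcount B R R := tcount_swap1 (x := R) (y := R) (z := B)
  have s2 : tcount R B R = tcount R R B := tcount_swap2 (x := R) (y := B) (z := R)
  have s3 : tcount B R B = tcount B B R := tcount_swap2 (x := B) (y := R) (z := B)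
  have s4 : tcount B B R = tcount R B B := tcount_swap1 (x := B) (y := B) (z := R)
  have hId : 2 * (tcount R R R + tcount B B B) + tcount Gn Gn Gn
      = 3 * (tcount Gn R R + tcount Gn B B) := by omega
  -- degree facts
  have hdegsum : ∀ w, Gn.degree w = R.degree w + B.degree w := by
    intro w
    have hnf : Gn.neighborFinset w = R.neighborFinset w ∪ B.neighborFinset w := by
      ext v
      simp only [SimpleGraph.mem_neighborFinset, Finset.mem_union, ← hsup, SimpleGraph.sup_adj]
    have hdis : Disjoint (R.neighborFinset w) (B.neighborFinset w) :=
      Finset.disjoint_left.mpr fun v hv1 hv2 =>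
        hd w v (by simpa using hv1) (by simpa using hv2)
    have h1 : Gn.degree w = (R.neighborFinset w ∪ B.neighborFinset w).card :=
      congrArg Finset.card hnf
    rw [h1, Finset.card_union_of_disjoint hdis]
    rfl
  have hdub : ∀ w, ((Gn.degree w : ℕ) : ℝ) ≤ (N : ℝ) := by
    intro w
    have := Finset.card_le_univ (Gn.neighborFinset w)
    rw [hN] at this
    exact_mod_cast this
  -- per-vertex inequality
  have hperw : ∀ w : V,
      p ^ 3 * (N:ℝ) ^ 2 / 2 - p ^ 2 * N * e1 - 2 * p * N
        ≤ 3 * (2 * (p * ((R.degree w).choose 2 : ℝ))) + 3 * (2 * (p * ((B.degree w).choose 2 : ℝ)))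
          - 2 * (p * ((Gn.degree w).choose 2 : ℝ)) := by
    intro w
    have hdd : ((Gn.degree w : ℕ) : ℝ) = ((R.degree w : ℕ) : ℝ) + ((B.degree w : ℕ) : ℝ) := by
      exact_mod_cast congrArg (Nat.cast (R := ℝ)) (hdegsum w)
    have hdlb : p * N - e1 ≤ ((Gn.degree w : ℕ) : ℝ) := by
      have := (abs_le.mp (hdeg' w)).1
      linarith
    have hsq2 : (p * N - e1) ^ 2 ≤ ((Gn.degree w : ℕ) : ℝ) ^ 2 :=
      pow_le_pow_left₀ (by linarith) hdlb 2
    have hsq2' : (p * N - e1) ^ 2 ≤ (((R.degree w : ℕ) : ℝ) + ((B.degree w : ℕ) : ℝ)) ^ 2 :=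
      hdd ▸ hsq2
    have hdub' : ((R.degree w : ℕ) : ℝ) + ((B.degree w : ℕ) : ℝ) ≤ (N : ℝ) := hdd ▸ hdub w
    rw [Nat.cast_choose_two, Nat.cast_choose_two, Nat.cast_choose_two, hdd]
    have hr0 : (0:ℝ) ≤ ((R.degree w : ℕ) : ℝ) := Nat.cast_nonneg _
    have hb0 : (0:ℝ) ≤ ((B.degree w : ℕ) : ℝ) := Nat.cast_nonneg _
    nlinarith [mul_nonneg hp0.le (sq_nonneg (((R.degree w : ℕ) : ℝ) - ((B.degree w : ℕ) : ℝ))),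
      mul_le_mul_of_nonneg_left hsq2' hp0.le,
      mul_nonneg hp0.le (sq_nonneg e1),
      mul_le_mul_of_nonneg_left hdub' hp0.le]
  -- edge count facts
  have hEdeg : (Finset.univ.filter fun q : V × V => Gn.Adj q.1 q.2).card
      = ∑ w : V, Gn.degree w := by
    rw [Finset.card_filter, Fintype.sum_prod_type]
    refine Finset.sum_congr rfl fun u _ => ?_
    rw [← Finset.card_filter]
    have : Finset.univ.filter (fun v => Gn.Adj u v) = Gn.neighborFinset u := by
      ext v; simp [SimpleGraph.mem_neighborFinset]
    rw [this]
    rfl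
  have hEsplit : (Finset.univ.filter fun q : V × V => Gn.Adj q.1 q.2).card
      = (Finset.univ.filter fun q : V × V => R.Adj q.1 q.2).card
        + (Finset.univ.filter fun q : V × V => B.Adj q.1 q.2).card := by
    rw [Finset.card_filter, Finset.card_filter, Finset.card_filter, ← Finset.sum_add_distrib]
    refine Finset.sum_congr rfl fun q _ => ?_
    have hiff : Gn.Adj q.1 q.2 ↔ R.Adj q.1 q.2 ∨ B.Adj q.1 q.2 := by rw [← hsup]; simp
    have hnot := hd q.1 q.2
    by_cases h1 : R.Adj q.1 q.2 <;> by_cases h2 : B.Adj q.1 q.2 <;> simp_all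
  have hEreal : (((Finset.univ.filter fun q : V × V => Gn.Adj q.1 q.2).card : ℕ) : ℝ)
      ≤ p * (N:ℝ) ^ 2 + N * e1 := by
    rw [hEdeg]
    push_cast
    have h1 : ∀ w ∈ Finset.univ, ((Gn.degree w : ℕ) : ℝ) ≤ p * N + e1 := fun w _ => by
      have := (abs_le.mp (hdeg' w)).2; linarith
    refine le_trans (Finset.sum_le_sum h1) ?_
    rw [Finset.sum_const, Finset.card_univ, hN, nsmul_eq_mul]
    exact le_of_eq (by ring)
  -- pigeonhole upper bound
  have hupN : 2 * (tcount R R R + tcount B B B)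
      ≤ 2 * n * (Finset.univ.filter fun q : V × V => Gn.Adj q.1 q.2).card := by
    have h1 := tcount_le_of_small R (n - 1) hbookR
    have h2 := tcount_le_of_small B (n - 1) hbookB
    have h3 : n - 1 ≤ n := Nat.sub_le n 1
    rw [hEsplit]
    calc 2 * (tcount R R R + tcount B B B)
        ≤ 2 * ((n-1) * (Finset.univ.filter fun q : V × V => R.Adj q.1 q.2).card
            + (n-1) * (Finset.univ.filter fun q : V × V => B.Adj q.1 q.2).card) := by omega
      _ = 2 * ((n-1) * ((Finset.univ.filter fun q : V × V => R.Adj q.1 q.2).card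
            + (Finset.univ.filter fun q : V × V => B.Adj q.1 q.2).card)) := by ring
      _ ≤ 2 * (n * ((Finset.univ.filter fun q : V × V => R.Adj q.1 q.2).card
            + (Finset.univ.filter fun q : V × V => B.Adj q.1 q.2).card)) :=
          Nat.mul_le_mul le_rfl (Nat.mul_le_mul h3 le_rfl)
      _ = 2 * n * ((Finset.univ.filter fun q : V × V => R.Adj q.1 q.2).card
            + (Finset.univ.filter fun q : V × V => B.Adj q.1 q.2).card) := by ring
  -- assemble the lower bound
  have hlowsum : (N:ℝ) * (p ^ 3 * (N:ℝ) ^ 2 / 2 - p ^ 2 * N * e1 - 2 * p * N)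
      ≤ 3 * (∑ w : V, 2 * (p * ((R.degree w).choose 2 : ℝ)))
        + 3 * (∑ w : V, 2 * (p * ((B.degree w).choose 2 : ℝ)))
        - (∑ w : V, 2 * (p * ((Gn.degree w).choose 2 : ℝ))) := by
    have h1 := Finset.sum_le_sum fun w (_ : w ∈ Finset.univ) => hperw w
    rw [Finset.sum_const, Finset.card_univ, hN, nsmul_eq_mul] at h1
    have h2 : (∑ w : V, (3 * (2 * (p * ((R.degree w).choose 2 : ℝ)))
          + 3 * (2 * (p * ((B.degree w).choose 2 : ℝ)))
          - 2 * (p * ((Gn.degree w).choose 2 : ℝ))))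
        = 3 * (∑ w : V, 2 * (p * ((R.degree w).choose 2 : ℝ)))
          + 3 * (∑ w : V, 2 * (p * ((B.degree w).choose 2 : ℝ)))
          - (∑ w : V, 2 * (p * ((Gn.degree w).choose 2 : ℝ))) := by
      simp only [Finset.mul_sum]
      rw [← Finset.sum_add_distrib, ← Finset.sum_sub_distrib]
    rw [← h2]
    exact h1
  -- final contradiction
  have hIdR : ((2 * (tcount R R R + tcount B B B) : ℕ) : ℝ)
      = 3 * ((tcount Gn R R : ℕ) : ℝ) + 3 * ((tcount Gn B B : ℕ) : ℝ)
        - ((tcount Gn Gn Gn : ℕ) : ℝ) := by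
    have := congrArg (Nat.cast (R := ℝ)) hId
    push_cast at this ⊢
    linarith
  have hCHR := abs_le.mp hsumR
  have hCHB := abs_le.mp hsumB
  have hTG := abs_le.mp hsumG
  have hupR : ((2 * (tcount R R R + tcount B B B) : ℕ) : ℝ)
      ≤ 2 * n * (p * (N:ℝ) ^ 2 + N * e1) := by
    have h1 : ((2 * (tcount R R R + tcount B B B) : ℕ) : ℝ)
        ≤ ((2 * n * (Finset.univ.filter fun q : V × V => Gn.Adj q.1 q.2).card : ℕ) : ℝ) := by
      exact_mod_cast hupN
    refine le_trans h1 ?_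
    push_cast
    have hn0 : (0:ℝ) ≤ 2 * (n:ℝ) := by positivity
    nlinarith [mul_le_mul_of_nonneg_left hEreal hn0]
  have hlow : p ^ 3 * (N:ℝ) ^ 3 / 2 - p ^ 2 * (N:ℝ) ^ 2 * e1 - 2 * p * (N:ℝ) ^ 2 - 14 * N * e2
      ≤ ((2 * (tcount R R R + tcount B B B) : ℕ) : ℝ) := by
    rw [hIdR]
    nlinarith [hCHR.1, hCHB.1, hTG.2, hlowsum, (by positivity : (0:ℝ) ≤ (N:ℝ))]
  linarith

end core


/-- Lemma 3.2: let `c > 1`, `γ ∈ (0, √c − 1]`, `p = (1+γ)/√c`, and let `G n` be graphs of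
order `N = ⌊4cn⌋` satisfying the quasirandomness conditions (degrees into sets, codegrees,
internal edge counts and bipartite edge counts, all with `o(N)`/`o(N²)` errors). Then for all
sufficiently large `n`, every red/blue edge-coloring of `G n` contains a monochromatic book
`B_n^{(2)}`. -/
theorem upper_threshold_k_two (c γ : ℝ) (hc : 1 < c) (hγ0 : 0 < γ)
    (hγ1 : γ ≤ Real.sqrt c - 1) (p : ℝ) (hp : p = (1 + γ) / Real.sqrt c)
    (G : ∀ n : ℕ, SimpleGraph (Fin ⌊4 * c * (n : ℝ)⌋₊))
    (err1 err2 : ℕ → ℝ)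
    (herr1 : Tendsto (fun n => err1 n / (⌊4 * c * (n : ℝ)⌋₊ : ℝ)) atTop (nhds 0))
    (herr2 : Tendsto (fun n => err2 n / ((⌊4 * c * (n : ℝ)⌋₊ : ℝ)) ^ 2) atTop (nhds 0))
    (hdeg : ∀ n : ℕ, ∀ v : Fin ⌊4 * c * (n : ℝ)⌋₊, ∀ U : Set (Fin ⌊4 * c * (n : ℝ)⌋₊),
      |(((G n).neighborSet v ∩ U).ncard : ℝ) - p * (U.ncard : ℝ)| ≤ err1 n)
    (hcommon : ∀ n : ℕ, ∀ u v : Fin ⌊4 * c * (n : ℝ)⌋₊, u ≠ v →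
      |(((G n).neighborSet u ∩ (G n).neighborSet v).ncard : ℝ) -
        p ^ 2 * (⌊4 * c * (n : ℝ)⌋₊ : ℝ)| ≤ err1 n)
    (hinternal : ∀ n : ℕ, ∀ U : Set (Fin ⌊4 * c * (n : ℝ)⌋₊),
      |({e ∈ (G n).edgeSet | ∀ x ∈ e, x ∈ U}.ncard : ℝ) -
        p * (U.ncard.choose 2 : ℝ)| ≤ err2 n)
    (hbetween : ∀ n : ℕ, ∀ U W : Set (Fin ⌊4 * c * (n : ℝ)⌋₊), Disjoint U W →
      |({q : Fin ⌊4 * c * (n : ℝ)⌋₊ × Fin ⌊4 * c * (n : ℝ)⌋₊ | q.1 ∈ U ∧ q.2 ∈ W ∧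
          (G n).Adj q.1 q.2}.ncard : ℝ) - p * (U.ncard : ℝ) * (W.ncard : ℝ)| ≤ err2 n) :
    ∀ᶠ n : ℕ in atTop, ∀ R B : SimpleGraph (Fin ⌊4 * c * (n : ℝ)⌋₊),
      R ⊔ B = G n → (∀ u v, R.Adj u v → ¬ B.Adj u v) →
      (∃ (u v : Fin ⌊4 * c * (n : ℝ)⌋₊) (S : Finset (Fin ⌊4 * c * (n : ℝ)⌋₊)),
          R.Adj u v ∧ u ∉ S ∧ v ∉ S ∧ S.card = n ∧ ∀ w ∈ S, R.Adj u w ∧ R.Adj v w) ∨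
      (∃ (u v : Fin ⌊4 * c * (n : ℝ)⌋₊) (S : Finset (Fin ⌊4 * c * (n : ℝ)⌋₊)),
          B.Adj u v ∧ u ∉ S ∧ v ∉ S ∧ S.card = n ∧ ∀ w ∈ S, B.Adj u w ∧ B.Adj v w) := by
  
  classical
  have hc0 : (0:ℝ) < c := by linarith
  have hsc : (0:ℝ) < Real.sqrt c := Real.sqrt_pos.mpr hc0
  have hsq : Real.sqrt c ^ 2 = c := Real.sq_sqrt hc0.le
  have hp0 : 0 < p := by rw [hp]; positivity
  have hp1 : p ≤ 1 := by rw [hp, div_le_one hsc]; linarith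
  have hpc : p ^ 2 * (4 * c) = 4 * (1 + γ) ^ 2 := by
    rw [hp, div_pow, hsq]; field_simp
  have hε1 : (0:ℝ) < p * γ / (24 * c) := by positivity
  have hε2 : (0:ℝ) < p * γ / (224 * c) := by positivity
  have hev1 : ∀ᶠ n : ℕ in atTop, err1 n / (⌊4 * c * (n:ℝ)⌋₊ : ℝ) < p * γ / (24 * c) :=
    herr1.eventually (gt_mem_nhds hε1)
  have hev2 : ∀ᶠ n : ℕ in atTop, err2 n / ((⌊4 * c * (n:ℝ)⌋₊ : ℝ)) ^ 2 < p * γ / (224 * c) :=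
    herr2.eventually (gt_mem_nhds hε2)
  have hevγ : ∀ᶠ n : ℕ in atTop, 2 ≤ γ * n := by
    rw [eventually_atTop]
    refine ⟨⌈2 / γ⌉₊, fun m hm => ?_⟩
    have h2γ : 2 / γ ≤ (m:ℝ) := le_trans (Nat.le_ceil _) (by exact_mod_cast hm)
    have := mul_le_mul_of_nonneg_left h2γ hγ0.le
    rwa [mul_div_cancel₀ 2 (ne_of_gt hγ0)] at this
  filter_upwards [hev1, hev2, hevγ, eventually_ge_atTop 1] with n h1ev h2ev hγn hn1
  intro R B hsup hd
  by_contra hcon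
  have hconR : ¬ ∃ (u v : Fin ⌊4 * c * (n:ℝ)⌋₊) (S : Finset (Fin ⌊4 * c * (n:ℝ)⌋₊)),
      R.Adj u v ∧ u ∉ S ∧ v ∉ S ∧ S.card = n ∧ ∀ w ∈ S, R.Adj u w ∧ R.Adj v w :=
    fun hA => hcon (Or.inl hA)
  have hconB : ¬ ∃ (u v : Fin ⌊4 * c * (n:ℝ)⌋₊) (S : Finset (Fin ⌊4 * c * (n:ℝ)⌋₊)),
      B.Adj u v ∧ u ∉ S ∧ v ∉ S ∧ S.card = n ∧ ∀ w ∈ S, B.Adj u w ∧ B.Adj v w :=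
    fun hA => hcon (Or.inr hA)
  clear hcon
  letI : ∀ (H : SimpleGraph (Fin ⌊4 * c * (n:ℝ)⌋₊)), DecidableRel H.Adj :=
    fun _ => Classical.decRel _
  -- basic real facts
  have hn1R : (1:ℝ) ≤ n := by exact_mod_cast hn1
  have hNu : ((⌊4 * c * (n:ℝ)⌋₊ : ℕ) : ℝ) ≤ 4 * c * n := Nat.floor_le (by positivity)
  have hNl : 4 * c * n - 1 ≤ ((⌊4 * c * (n:ℝ)⌋₊ : ℕ) : ℝ) := by
    have := Nat.lt_floor_add_one (4 * c * (n:ℝ))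
    linarith
  have hNr3 : (3:ℝ) ≤ ((⌊4 * c * (n:ℝ)⌋₊ : ℕ) : ℝ) := by nlinarith
  have hNr0 : (0:ℝ) < ((⌊4 * c * (n:ℝ)⌋₊ : ℕ) : ℝ) := by linarith
  have hNn1 : 0 < ⌊4 * c * (n:ℝ)⌋₊ := by exact_mod_cast hNr0
  -- error bounds
  have he10 : 0 ≤ err1 n := le_trans (abs_nonneg _) (hdeg n ⟨0, hNn1⟩ Set.univ)
  have he20 : 0 ≤ err2 n := le_trans (abs_nonneg _) (hinternal n ∅)
  have he1 : err1 n ≤ p * γ / (24 * c) * ((⌊4 * c * (n:ℝ)⌋₊ : ℕ) : ℝ) := by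
    have := (div_lt_iff₀ hNr0).mp h1ev
    linarith
  have he2 : err2 n ≤ p * γ / (224 * c) * ((⌊4 * c * (n:ℝ)⌋₊ : ℕ) : ℝ) ^ 2 := by
    have hq : (0:ℝ) < ((⌊4 * c * (n:ℝ)⌋₊ : ℕ) : ℝ) ^ 2 := by positivity
    have := (div_lt_iff₀ hq).mp h2ev
    linarith
  -- no-book cardinality bounds
  have hbookR : ∀ u v : Fin ⌊4 * c * (n:ℝ)⌋₊, R.Adj u v →
      (Finset.univ.filter fun w => R.Adj w u ∧ R.Adj w v).card ≤ n - 1 := by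
    intro u v huv
    by_contra hge
    push_neg at hge
    have hge' : n ≤ (Finset.univ.filter fun w => R.Adj w u ∧ R.Adj w v).card := by omega
    obtain ⟨S, hSsub, hScard⟩ := Finset.exists_subset_card_eq hge'
    have hmem : ∀ w ∈ S, R.Adj u w ∧ R.Adj v w := by
      intro w hw
      have := Finset.mem_filter.mp (hSsub hw)
      exact ⟨this.2.1.symm, this.2.2.symm⟩
    refine hconR ⟨u, v, S, huv, ?_, ?_, hScard, hmem⟩
    · intro hu; exact R.irrefl (hmem u hu).1
    · intro hv; exact R.irrefl (hmem v hv).2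
  have hbookB : ∀ u v : Fin ⌊4 * c * (n:ℝ)⌋₊, B.Adj u v →
      (Finset.univ.filter fun w => B.Adj w u ∧ B.Adj w v).card ≤ n - 1 := by
    intro u v huv
    by_contra hge
    push_neg at hge
    have hge' : n ≤ (Finset.univ.filter fun w => B.Adj w u ∧ B.Adj w v).card := by omega
    obtain ⟨S, hSsub, hScard⟩ := Finset.exists_subset_card_eq hge'
    have hmem : ∀ w ∈ S, B.Adj u w ∧ B.Adj v w := by
      intro w hw
      have := Finset.mem_filter.mp (hSsub hw)
      exact ⟨this.2.1.symm, this.2.2.symm⟩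
    refine hconB ⟨u, v, S, huv, ?_, ?_, hScard, hmem⟩
    · intro hu; exact B.irrefl (hmem u hu).1
    · intro hv; exact B.irrefl (hmem v hv).2
  -- degree bound
  have hdeg' : ∀ w : Fin ⌊4 * c * (n:ℝ)⌋₊,
      |(((G n).degree w : ℕ) : ℝ) - p * ((⌊4 * c * (n:ℝ)⌋₊ : ℕ) : ℝ)| ≤ err1 n := by
    intro w
    have h := hdeg n w Set.univ
    rw [Set.inter_univ, Set.ncard_univ, Nat.card_eq_fintype_card, Fintype.card_fin] at h
    have hns : ((G n).neighborSet w).ncard = (G n).degree w := by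
      rw [Set.ncard_eq_toFinset_card', Set.toFinset_card]
      exact SimpleGraph.card_neighborSet_eq_degree _ _
    rwa [hns] at h
  -- quasirandomness of pair counts in neighborhoods
  have hkey : ∀ (c' : SimpleGraph (Fin ⌊4 * c * (n:ℝ)⌋₊)) (w : Fin ⌊4 * c * (n:ℝ)⌋₊),
      |((Finset.univ.filter fun q : Fin ⌊4 * c * (n:ℝ)⌋₊ × Fin ⌊4 * c * (n:ℝ)⌋₊ =>
          q.1 ∈ c'.neighborFinset w ∧ q.2 ∈ c'.neighborFinset w ∧ (G n).Adj q.1 q.2).card : ℝ)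
        - 2 * (p * ((c'.degree w).choose 2 : ℝ))| ≤ 2 * err2 n := by
    intro c' w
    have h := hinternal n ↑(c'.neighborFinset w)
    rw [Set.ncard_coe_finset] at h
    rw [pair_count_eq_two_mul (G n) (c'.neighborFinset w)]
    have hcd : (c'.neighborFinset w).card = c'.degree w := rfl
    rw [hcd] at h
    simp only [Nat.cast_mul, Nat.cast_ofNat]
    have heq : (2:ℝ) * (({e ∈ (G n).edgeSet |
          ∀ x ∈ e, x ∈ (↑(c'.neighborFinset w) : Set _)}.ncard : ℕ) : ℝ)
        - 2 * (p * ((c'.degree w).choose 2 : ℝ))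
        = 2 * ((({e ∈ (G n).edgeSet |
            ∀ x ∈ e, x ∈ (↑(c'.neighborFinset w) : Set _)}.ncard : ℕ) : ℝ)
          - p * ((c'.degree w).choose 2 : ℝ)) := by ring
    rw [heq, abs_mul, abs_two]
    linarith
  have hsumR := sum_bound (G n) R p (err2 n) ⌊4 * c * (n:ℝ)⌋₊ (Fintype.card_fin _) (hkey R)
  have hsumB := sum_bound (G n) B p (err2 n) ⌊4 * c * (n:ℝ)⌋₊ (Fintype.card_fin _) (hkey B)
  have hsumG := sum_bound (G n) (G n) p (err2 n) ⌊4 * c * (n:ℝ)⌋₊ (Fintype.card_fin _)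
    (hkey (G n))
  -- err1 ≤ p * N
  have hsc1 : (1:ℝ) ≤ Real.sqrt c := by
    rw [show (1:ℝ) = Real.sqrt 1 by simp]
    exact Real.sqrt_le_sqrt hc.le
  have hsqrtc : Real.sqrt c ≤ c := by nlinarith [hsq]
  have hγc : γ ≤ c := by nlinarith
  have herr1p : err1 n ≤ p * ((⌊4 * c * (n:ℝ)⌋₊ : ℕ) : ℝ) := by
    refine le_trans he1 ?_
    rw [div_mul_eq_mul_div, div_le_iff₀ (by linarith : (0:ℝ) < 24 * c)]
    nlinarith [mul_nonneg (mul_nonneg (by linarith : (0:ℝ) ≤ 24 * c - γ) hp0.le) hNr0.le]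
  -- final arithmetic inequality
  have hfin := final_ineq c γ p n (((⌊4 * c * (n:ℝ)⌋₊ : ℕ) : ℝ)) (err1 n) (err2 n)
    hc hγ0 hp0 hp1 hpc hn1R hγn hNl hNu he10 he20 he1 he2
  exact main_contradiction (G n) R B hsup hd p (err1 n) (err2 n) n ⌊4 * c * (n:ℝ)⌋₊
    (Fintype.card_fin _) hp0 he10 he20 herr1p hdeg' hsumR hsumB hsumG hbookR hbookB hfin
end
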